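/- arXiv:1408.1029 — 9 statements merged into one kernel-verified Lean document; each statement's English description precedes it below -/
import Mathlib

section
/- There exists a closed set B ⊆ ℝ² with dimH B = 1 such that for every (x,y) ∈ ℝ² there exists r > 0 with the boundary of the axes-parallel square with center (x,y) and radius r contained in B. -/
/-!
With `q = scale`, so that `q n = 2 ^ (-(n + 1)!)`, the set `B` is `C × ℝ ∪ ℝ × C`, where `C` is
the union over `i < 4` of the closed sets `E i` of reals lying within `q (n + 1)` of `q n • ℤ` for
every `n ≡ i [MOD 4]`.

For `n ≡ i`, the part of `E i × ℝ` in a fixed ball is covered by `O(1 / (q n * q (n + 1)))`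
squares of side `2 q (n + 1)`; since `q (n + 1) = q n ^ (n + 2)`, the sums
`q (n + 1) ^ d / (q n * q (n + 1))` tend to `0` for every `d > 1`, so `dimH B ≤ 1`.

Given `(x, y)`, a radius `r` with `r + x ∈ E 0`, `r - x ∈ E 1`, `r + y ∈ E 2`, `r - y ∈ E 3` is
found by successive rounding: at step `n` move by at most `q n / 2` to put `r + a n` into `q n • ℤ`
(`a n` being `±x` or `±y` according to `n mod 4`). The later corrections add up to at most
`q (n + 1)`, so the limit works for every `n`. As each `E i` is symmetric, the four sides of the
square of radius `r` around `(x, y)` lie in `B`.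
-/

/-- The boundary of the axes-parallel square with center `c` and radius `r`. -/
def sqBdry (c : ℝ × ℝ) (r : ℝ) : Set (ℝ × ℝ) :=
  {p : ℝ × ℝ | max |p.1 - c.1| |p.2 - c.2| = r}

open Set Filter Topology MeasureTheory Metric
open scoped ENNReal NNReal Nat

lemma abs_sub_round_div_mul_le {a : ℝ} (ha : 0 < a) (x : ℝ) :
    |x - round (x / a) * a| ≤ a / 2 := by
  have h : x - round (x / a) * a = (x / a - round (x / a)) * a := by field_simp
  rw [h, abs_mul, abs_of_pos ha]
  nlinarith [abs_sub_round (x / a)]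

lemma prod_subset_biUnion_closedBall {α β : Type*} [PseudoMetricSpace α] [PseudoMetricSpace β]
    {s : Set α} {t : Set β} {S : Finset α} {T : Finset β} {r : ℝ}
    (hs : s ⊆ ⋃ c ∈ S, closedBall c r) (ht : t ⊆ ⋃ c ∈ T, closedBall c r) :
    s ×ˢ t ⊆ ⋃ c ∈ S ×ˢ T, closedBall c r := by
  rintro ⟨x, y⟩ ⟨hx, hy⟩
  obtain ⟨a, ha, hxa⟩ := mem_iUnion₂.1 (hs hx)
  obtain ⟨b, hb, hyb⟩ := mem_iUnion₂.1 (ht hy)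
  refine mem_iUnion₂.2 ⟨(a, b), Finset.mem_product.2 ⟨ha, hb⟩, ?_⟩
  rw [← closedBall_prod_same]
  exact ⟨hxa, hyb⟩

theorem hausdorffMeasure_eq_zero_of_closedBall_covers {X : Type*} [MetricSpace X]
    [MeasurableSpace X] [BorelSpace X] {s : Set X} {d : ℝ} (hd : 0 ≤ d) {ε : ℕ → ℝ}
    (hε₀ : ∀ k, 0 ≤ ε k) (hε : Tendsto ε atTop (𝓝 0)) (T : ℕ → Finset X)
    (hs : ∀ k, s ⊆ ⋃ c ∈ T k, closedBall c (ε k))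
    (hT : Tendsto (fun k => ((T k).card : ℝ) * ε k ^ d) atTop (𝓝 0)) : μH[d] s = 0 := by
  have hdiam (k : ℕ) (c : X) : ediam (closedBall c (ε k)) ≤ ENNReal.ofReal (2 * ε k) :=
    ediam_le_of_forall_dist_le fun x hx y hy => by
      linarith [dist_triangle_right x y c, mem_closedBall.1 hx, mem_closedBall.1 hy]
  have hsum (k : ℕ) : ∑ c : T k, ediam (closedBall (c : X) (ε k)) ^ d
      ≤ ENNReal.ofReal (2 ^ d * (((T k).card : ℝ) * ε k ^ d)) := by
    calc ∑ c : T k, ediam (closedBall (c : X) (ε k)) ^ d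
        ≤ ∑ _c : T k, ENNReal.ofReal (2 * ε k) ^ d :=
          Finset.sum_le_sum fun c _ => ENNReal.rpow_le_rpow (hdiam k c) hd
      _ = ENNReal.ofReal (2 ^ d * (((T k).card : ℝ) * ε k ^ d)) := by
          rw [Finset.sum_const, Finset.card_univ, Fintype.card_coe, nsmul_eq_mul,
            ENNReal.ofReal_rpow_of_nonneg (by linarith [hε₀ k]) hd, ← ENNReal.ofReal_natCast,
            ← ENNReal.ofReal_mul (Nat.cast_nonneg _), Real.mul_rpow zero_le_two (hε₀ k)]
          ring_nf
  have hlim : Tendsto (fun k => ENNReal.ofReal (2 ^ d * (((T k).card : ℝ) * ε k ^ d))) atTop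
      (𝓝 0) := by
    simpa using ENNReal.tendsto_ofReal (hT.const_mul (2 ^ d))
  refine nonpos_iff_eq_zero.1 ?_
  calc μH[d] s ≤ liminf (fun k => ∑ c : T k, ediam (closedBall (c : X) (ε k)) ^ d) atTop :=
        Measure.hausdorffMeasure_le_liminf_sum (ι := fun k => T k) d s
          (fun k => ENNReal.ofReal (2 * ε k))
          (by simpa using ENNReal.tendsto_ofReal (hε.const_mul 2))
          (fun k c => closedBall c (ε k))
          (Eventually.of_forall fun k c => hdiam k c)
          (Eventually.of_forall fun k => by simpa [iUnion_subtype] using hs k)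
    _ ≤ liminf (fun k => ENNReal.ofReal (2 ^ d * (((T k).card : ℝ) * ε k ^ d))) atTop :=
        liminf_le_liminf (Eventually.of_forall hsum)
    _ = 0 := hlim.liminf_eq

lemma dimH_prod_univ_union_univ_prod {X : Type*} [EMetricSpace X] (s : Set X) :
    dimH (s ×ˢ univ ∪ univ ×ˢ s) = dimH (s ×ˢ (univ : Set X)) := by
  rw [dimH_union, max_eq_left]
  calc dimH (univ ×ˢ s) = dimH (Prod.swap '' (s ×ˢ univ)) := by rw [image_swap_prod]
    _ ≤ _ := (LipschitzWith.prod_snd.prodMk LipschitzWith.prod_fst).dimH_image_le _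

namespace SquareBoundary

def latticeNbhd (a ε : ℝ) : Set ℝ := {x | ∃ m : ℤ, |x - m * a| ≤ ε}

lemma zero_mem_latticeNbhd {a ε : ℝ} (hε : 0 ≤ ε) : 0 ∈ latticeNbhd a ε :=
  ⟨0, by simpa using hε⟩

lemma neg_mem_latticeNbhd {a ε x : ℝ} (hx : x ∈ latticeNbhd a ε) : -x ∈ latticeNbhd a ε := by
  obtain ⟨m, hm⟩ := hx
  exact ⟨-m, by rw [← abs_neg]; push_cast; convert hm using 2; ring⟩

lemma mem_latticeNbhd_iff_norm_le {a ε x : ℝ} :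
    x ∈ latticeNbhd a ε ↔ ‖(x : AddCircle a)‖ ≤ ε := by
  refine ⟨fun ⟨m, hm⟩ => le_trans ?_ hm, fun h => ⟨_, AddCircle.norm_eq (p := a) ▸ h⟩⟩
  have hma : ((m * a : ℝ) : AddCircle a) = 0 :=
    (AddCircle.coe_eq_zero_iff a).2 ⟨m, zsmul_eq_mul _ _⟩
  calc ‖(x : AddCircle a)‖ = ‖((x - m * a : ℝ) : AddCircle a)‖ := by
        rw [AddCircle.coe_sub, hma, sub_zero]
    _ ≤ |x - m * a| := QuotientAddGroup.norm_mk_le_norm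

lemma isClosed_latticeNbhd (a ε : ℝ) : IsClosed (latticeNbhd a ε) := by
  have h : latticeNbhd a ε = (fun x : ℝ => ‖(x : AddCircle a)‖) ⁻¹' Iic ε :=
    Set.ext fun _ => mem_latticeNbhd_iff_norm_le
  rw [h]
  exact isClosed_Iic.preimage (continuous_norm.comp (AddCircle.continuous_mk' a))

theorem exists_add_mem_latticeNbhd {q : ℕ → ℝ} (hq : ∀ n, 0 < q n)
    (hq_succ : ∀ n, q (n + 1) ≤ q n / 2) (a : ℕ → ℝ) (r₀ : ℝ) :
    ∃ r, |r - r₀| ≤ q 0 ∧ ∀ n, r + a n ∈ latticeNbhd (q n) (q (n + 1)) := by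
  let R : ℕ → ℝ := fun n => Nat.rec r₀ (fun n Rn => round ((Rn + a n) / q n) * q n - a n) n
  have hR_succ (n : ℕ) : R (n + 1) + a n = round ((R n + a n) / q n) * q n := sub_add_cancel _ _
  have hq_geom (N m : ℕ) : q (N + m) ≤ q N * (1 / 2) ^ m := by
    induction m with
    | zero => simp
    | succ m ih => rw [← add_assoc, pow_succ]; linarith [hq_succ (N + m)]
  have hstep (N m : ℕ) : dist (R (N + m)) (R (N + m + 1)) ≤ q N / 2 * (1 / 2) ^ m := by
    rw [Real.dist_eq, show R (N + m) - R (N + m + 1)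
      = R (N + m) + a (N + m) - (R (N + m + 1) + a (N + m)) by ring, hR_succ]
    linarith [abs_sub_round_div_mul_le (hq (N + m)) (R (N + m) + a (N + m)), hq_geom N m]
  obtain ⟨r, hr⟩ := cauchySeq_tendsto_of_complete
    (cauchySeq_of_le_geometric (1 / 2) (q 0 / 2) (by norm_num) (by simpa using hstep 0))
  have hdist (N : ℕ) : dist (R N) r ≤ q N := by
    have := dist_le_of_le_geometric_of_tendsto₀ (1 / 2) (q N / 2) (by norm_num) (hstep N)
      (by simpa only [add_comm N] using (tendsto_add_atTop_iff_nat N).2 hr)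
    rwa [show q N / 2 / (1 - 1 / 2) = q N by ring] at this
  refine ⟨r, ?_, fun n => ⟨round ((R n + a n) / q n), ?_⟩⟩
  · simpa [R, abs_sub_comm, Real.dist_eq] using hdist 0
  · rw [← hR_succ, show r + a n - (R (n + 1) + a n) = r - R (n + 1) by ring, ← Real.dist_eq,
      dist_comm]
    exact hdist (n + 1)

noncomputable def latticePoints (a : ℝ) (K : ℕ) : Finset ℝ :=
  (Finset.Icc (-K : ℤ) K).image fun m : ℤ => (m : ℝ) * a

lemma card_latticePoints_le (a : ℝ) (K : ℕ) : (latticePoints a K).card ≤ 2 * K + 1 :=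
  Finset.card_image_le.trans (by rw [Int.card_Icc]; omega)

lemma latticeNbhd_inter_closedBall_subset {a ε R : ℝ} (ha : 0 < a) :
    latticeNbhd a ε ∩ closedBall 0 R
      ⊆ ⋃ c ∈ latticePoints a ⌈(R + ε) / a⌉₊, closedBall c ε := by
  rintro x ⟨⟨m, hm⟩, hx⟩
  rw [mem_closedBall_zero_iff, Real.norm_eq_abs] at hx
  have hma : |(m : ℝ)| ≤ (R + ε) / a := by
    rw [le_div_iff₀ ha, ← abs_of_pos ha, ← abs_mul]
    linarith [abs_sub_abs_le_abs_sub (m * a) x, abs_sub_comm (m * a) x]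
  have hmK : |m| ≤ (⌈(R + ε) / a⌉₊ : ℤ) := by
    exact_mod_cast hma.trans (Nat.le_ceil _)
  refine mem_iUnion₂.2 ⟨m * a, Finset.mem_image.2 ⟨m, Finset.mem_Icc.2 (abs_le.1 hmK), rfl⟩, ?_⟩
  rwa [mem_closedBall, Real.dist_eq]

lemma latticeNbhd_self {a : ℝ} (ha : 0 < a) : latticeNbhd a a = univ :=
  eq_univ_of_forall fun x => ⟨_, (abs_sub_round_div_mul_le ha x).trans (by linarith)⟩

lemma two_mul_ceil_add_one_le {a ε R : ℝ} (ha₀ : 0 < a) (ha₁ : a ≤ 1) (hε₀ : 0 ≤ ε)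
    (hε₁ : ε ≤ 1) (hR : 0 ≤ R) : (2 * ⌈(R + ε) / a⌉₊ + 1 : ℝ) ≤ 5 * ((R + 1) / a) := by
  have h₁ := Nat.ceil_lt_add_one (div_nonneg (add_nonneg hR hε₀) ha₀.le)
  have h₂ : (R + ε) / a ≤ (R + 1) / a := div_le_div_of_nonneg_right (by linarith) ha₀.le
  have h₃ : 1 ≤ (R + 1) / a := by rw [le_div_iff₀ ha₀]; linarith
  linarith

lemma card_latticePoints_prod_mul_rpow_le {a ε R d : ℝ} (ha₀ : 0 < a) (ha₁ : a ≤ 1)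
    (hε₀ : 0 < ε) (hε₁ : ε ≤ 1) (hR : 0 ≤ R) :
    ((latticePoints a ⌈(R + ε) / a⌉₊ ×ˢ latticePoints ε ⌈(R + ε) / ε⌉₊).card : ℝ) * ε ^ d
      ≤ 25 * (R + 1) ^ 2 * (ε ^ (d - 1) / a) := by
  have hcard : ((latticePoints a ⌈(R + ε) / a⌉₊ ×ˢ latticePoints ε ⌈(R + ε) / ε⌉₊).card : ℝ)
      ≤ (2 * ⌈(R + ε) / a⌉₊ + 1) * (2 * ⌈(R + ε) / ε⌉₊ + 1) := by
    rw [Finset.card_product]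
    exact_mod_cast Nat.mul_le_mul (card_latticePoints_le _ _) (card_latticePoints_le _ _)
  calc _ ≤ (5 * ((R + 1) / a)) * (5 * ((R + 1) / ε)) * ε ^ d := by
        refine mul_le_mul_of_nonneg_right (hcard.trans (mul_le_mul ?_ ?_ (by positivity)
          (mul_nonneg (by norm_num) (div_nonneg (by linarith) ha₀.le))))
          (Real.rpow_nonneg hε₀.le _)
        · exact two_mul_ceil_add_one_le ha₀ ha₁ hε₀.le hε₁ hR
        · exact two_mul_ceil_add_one_le hε₀ hε₁ hε₀.le hε₁ hR
    _ = 25 * (R + 1) ^ 2 * (ε ^ (d - 1) / a) := by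
        rw [Real.rpow_sub_one hε₀.ne']
        field_simp
        ring

noncomputable def scale (n : ℕ) : ℝ := (1 / 2) ^ (n + 1)!

lemma scale_pos (n : ℕ) : 0 < scale n := by unfold scale; positivity

lemma scale_le_half (n : ℕ) : scale n ≤ 1 / 2 :=
  pow_le_of_le_one (by norm_num) (by norm_num) (Nat.factorial_pos _).ne'

lemma scale_succ (n : ℕ) : scale (n + 1) = scale n ^ (n + 2) := by
  rw [scale, scale, ← pow_mul, Nat.factorial_succ (n + 1), mul_comm]

lemma scale_succ_le_half_mul (n : ℕ) : scale (n + 1) ≤ scale n / 2 := by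
  have h : scale n ^ (n + 1) ≤ scale n :=
    pow_le_of_le_one (scale_pos n).le (by linarith [scale_le_half n]) n.succ_ne_zero
  rw [scale_succ, pow_succ]
  nlinarith [scale_le_half n, scale_pos n]

lemma tendsto_scale_atTop : Tendsto scale atTop (𝓝 0) :=
  (tendsto_pow_atTop_nhds_zero_of_lt_one (by norm_num) (by norm_num)).comp <|
    tendsto_atTop_mono (fun n => n.le_succ.trans (Nat.self_le_factorial _)) tendsto_id

lemma tendsto_scale_succ_rpow_div_scale {d : ℝ} (hd : 1 < d) :
    Tendsto (fun n => scale (n + 1) ^ (d - 1) / scale n) atTop (𝓝 0) := by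
  have hexp : Tendsto (fun n : ℕ => ((n : ℝ) + 2) * (d - 1) - 1) atTop atTop :=
    tendsto_atTop_add_const_right _ _ <| Tendsto.atTop_mul_const (by linarith) <|
      tendsto_atTop_add_const_right _ _ tendsto_natCast_atTop_atTop
  have hrw (n : ℕ) :
      scale (n + 1) ^ (d - 1) / scale n = scale n ^ (((n : ℝ) + 2) * (d - 1) - 1) := by
    rw [Real.rpow_sub_one (scale_pos n).ne', Real.rpow_mul (scale_pos n).le, scale_succ]
    norm_cast
  refine squeeze_zero' (Eventually.of_forall fun n =>
    div_nonneg (Real.rpow_nonneg (scale_pos _).le _) (scale_pos n).le) ?_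
    ((tendsto_rpow_atTop_of_base_lt_one (1 / 2) (by norm_num) (by norm_num)).comp hexp)
  filter_upwards [hexp.eventually_ge_atTop 0] with n hn
  rw [hrw]
  exact Real.rpow_le_rpow (scale_pos n).le (scale_le_half n) hn

def thinSet (ν : ℕ → ℕ) : Set ℝ := ⋂ k, latticeNbhd (scale (ν k)) (scale (ν k + 1))

theorem hausdorffMeasure_thinSet_inter_prod_eq_zero {ν : ℕ → ℕ} (hν : Tendsto ν atTop atTop)
    {d : ℝ} (hd : 1 < d) {R : ℝ} (hR : 0 ≤ R) :
    μH[d] ((thinSet ν ∩ closedBall 0 R) ×ˢ closedBall (0 : ℝ) R) = 0 := by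
  have hscale_le_one (n : ℕ) : scale n ≤ 1 := (scale_le_half n).trans (by norm_num)
  refine hausdorffMeasure_eq_zero_of_closedBall_covers (by linarith)
    (fun k => (scale_pos (ν k + 1)).le)
    (tendsto_scale_atTop.comp ((tendsto_add_atTop_nat 1).comp hν))
    (fun k => latticePoints (scale (ν k)) ⌈(R + scale (ν k + 1)) / scale (ν k)⌉₊ ×ˢ
      latticePoints (scale (ν k + 1)) ⌈(R + scale (ν k + 1)) / scale (ν k + 1)⌉₊)
    (fun k => prod_subset_biUnion_closedBall ?_ ?_) ?_
  · exact (inter_subset_inter_left _ (iInter_subset _ k)).trans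
      (latticeNbhd_inter_closedBall_subset (scale_pos _))
  · rw [← univ_inter (closedBall _ _), ← latticeNbhd_self (scale_pos (ν k + 1))]
    exact latticeNbhd_inter_closedBall_subset (scale_pos _)
  · refine squeeze_zero (fun k => mul_nonneg (Nat.cast_nonneg _)
      (Real.rpow_nonneg (scale_pos _).le _)) (fun k => card_latticePoints_prod_mul_rpow_le
        (scale_pos _) (hscale_le_one _) (scale_pos _) (hscale_le_one _) hR) ?_
    simpa using ((tendsto_scale_succ_rpow_div_scale hd).comp hν).const_mul (25 * (R + 1) ^ 2)

lemma zero_mem_thinSet (ν : ℕ → ℕ) : 0 ∈ thinSet ν :=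
  mem_iInter.2 fun _ => zero_mem_latticeNbhd (scale_pos _).le

lemma neg_mem_thinSet {ν : ℕ → ℕ} {x : ℝ} (hx : x ∈ thinSet ν) : -x ∈ thinSet ν :=
  mem_iInter.2 fun k => neg_mem_latticeNbhd (mem_iInter.1 hx k)

lemma isClosed_thinSet (ν : ℕ → ℕ) : IsClosed (thinSet ν) :=
  isClosed_iInter fun _ => isClosed_latticeNbhd _ _

theorem dimH_thinSet_prod_univ_le {ν : ℕ → ℕ} (hν : Tendsto ν atTop atTop) :
    dimH (thinSet ν ×ˢ (univ : Set ℝ)) ≤ 1 := by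
  rw [← iUnion_inter_closedBall_nat (thinSet ν ×ˢ univ) 0, dimH_iUnion]
  refine iSup_le fun n => dimH_le fun d hd => ?_
  by_contra! hd₁
  rw [Prod.zero_eq_mk, ← closedBall_prod_same, prod_inter_prod, univ_inter,
    hausdorffMeasure_thinSet_inter_prod_eq_zero hν (by exact_mod_cast hd₁) n.cast_nonneg] at hd
  exact ENNReal.zero_ne_top hd

def thinUnion : Set ℝ := ⋃ i : Fin 4, thinSet fun k => 4 * k + i

lemma isClosed_thinUnion : IsClosed thinUnion :=
  isClosed_iUnion_of_finite fun _ => isClosed_thinSet _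

lemma zero_mem_thinUnion : (0 : ℝ) ∈ thinUnion := mem_iUnion.2 ⟨0, zero_mem_thinSet _⟩

theorem dimH_thinUnion_prod_univ : dimH (thinUnion ×ˢ (univ : Set ℝ)) = 1 := by
  refine le_antisymm ?_ ?_
  · rw [thinUnion, iUnion_prod_const, dimH_iUnion]
    exact iSup_le fun i => dimH_thinSet_prod_univ_le <|
      tendsto_atTop_mono (fun k => by dsimp only [id]; omega) tendsto_id
  · calc (1 : ℝ≥0∞) = dimH (Prod.snd '' (thinUnion ×ˢ (univ : Set ℝ))) := by
          rw [snd_image_prod ⟨0, zero_mem_thinUnion⟩, Real.dimH_univ]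
      _ ≤ _ := LipschitzWith.prod_snd.dimH_image_le _

theorem exists_pos_add_mem_and_sub_mem_thinUnion (x y : ℝ) : ∃ r > 0,
    x + r ∈ thinUnion ∧ x - r ∈ thinUnion ∧ y + r ∈ thinUnion ∧ y - r ∈ thinUnion := by
  obtain ⟨r, hr, hmem⟩ := exists_add_mem_latticeNbhd scale_pos scale_succ_le_half_mul
    (fun n => ![x, -x, y, -y] (Fin.ofNat 4 n)) 1
  have hmem' (i : Fin 4) : r + ![x, -x, y, -y] i ∈ thinSet fun k => 4 * k + i :=
    mem_iInter.2 fun k => by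
      have h := hmem (4 * k + i)
      rwa [show Fin.ofNat 4 (4 * k + i) = i from Fin.ext (by simp)] at h
  have hr₀ : 0 < r := by
    have := abs_le.1 hr
    norm_num [scale] at this
    linarith
  refine ⟨r, hr₀, mem_iUnion.2 ⟨0, ?_⟩, mem_iUnion.2 ⟨1, ?_⟩, mem_iUnion.2 ⟨2, ?_⟩,
    mem_iUnion.2 ⟨3, ?_⟩⟩
  · simpa [add_comm] using hmem' 0
  · simpa [sub_eq_add_neg] using neg_mem_thinSet (hmem' 1)
  · simpa [add_comm] using hmem' 2
  · simpa [sub_eq_add_neg] using neg_mem_thinSet (hmem' 3)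

end SquareBoundary

open SquareBoundary

lemma sqBdry_subset_prod_univ_union_univ_prod {s : Set ℝ} {x y r : ℝ} (hx₁ : x + r ∈ s)
    (hx₂ : x - r ∈ s) (hy₁ : y + r ∈ s) (hy₂ : y - r ∈ s) :
    sqBdry (x, y) r ⊆ s ×ˢ univ ∪ univ ×ˢ s := by
  intro p (hp : max |p.1 - x| |p.2 - y| = r)
  rcases max_choice |p.1 - x| |p.2 - y| with h | h <;> rw [h] at hp
  · refine Or.inl ⟨?_, trivial⟩
    rcases eq_or_eq_neg_of_abs_eq hp with h' | h'
    · convert hx₁ using 1; linarith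
    · convert hx₂ using 1; linarith
  · refine Or.inr ⟨trivial, ?_⟩
    rcases eq_or_eq_neg_of_abs_eq hp with h' | h'
    · convert hy₁ using 1; linarith
    · convert hy₂ using 1; linarith

theorem stmt0 : ∃ B : Set (ℝ × ℝ), IsClosed B ∧ dimH B = 1 ∧
    ∀ x y : ℝ, ∃ r > (0 : ℝ), sqBdry (x, y) r ⊆ B := by
  refine ⟨thinUnion ×ˢ univ ∪ univ ×ˢ thinUnion,
    (isClosed_thinUnion.prod isClosed_univ).union (isClosed_univ.prod isClosed_thinUnion),
    by rw [dimH_prod_univ_union_univ_prod, dimH_thinUnion_prod_univ], fun x y => ?_⟩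
  obtain ⟨r, hr, hx₁, hx₂, hy₁, hy₂⟩ := exists_pos_add_mem_and_sub_mem_thinUnion x y
  exact ⟨r, hr, sqBdry_subset_prod_univ_union_univ_prod hx₁ hx₂ hy₁ hy₂⟩
end

section
/- Let S, B ⊆ ℝ² be sets such that for every (x,y) ∈ S there exist r > 0 and signs ε₁, ε₂ ∈ {−1, 1} with (x + ε₁·r, y + ε₂·r) ∈ B (i.e., B contains at least one vertex of an axes-parallel square with center (x,y)). Then dimH B ≥ dimH S − 1. -/
/-!
If `B` contains a vertex `q` of a square centred at `p`, then `p` lies on a diagonal through `q`: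
`p = q + t • v` with `v = (1, 1)` or `v = (1, -1)`. So `S` is covered by the images of `B × ℝ`
under the two linear maps `(q, t) ↦ q + t • v`, and `dimH S ≤ dimH (B × ℝ) ≤ dimH B + 1`.
For the last inequality, if `μH[d] B = 0`, cover `B` by sets `uₙ` of diameter at most `δₙ ≤ 1`
with `∑ δₙ ^ d` small; slicing `[a, a + 1]` into about `1 / δₙ` intervals of length `δₙ` covers
`B × [a, a + 1]` by boxes whose `(d + 1)`-sum is at most `2 ∑ δₙ ^ d`.
-/

open Set Filter MeasureTheory Metric ENNReal
open scoped Topology NNReal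

theorem Metric.ediam_prod_le {X Y : Type*} [PseudoEMetricSpace X] [PseudoEMetricSpace Y]
    (s : Set X) (t : Set Y) : ediam (s ×ˢ t) ≤ max (ediam s) (ediam t) :=
  ediam_le fun _ hp _ hq =>
    max_le_max (edist_le_ediam_of_mem hp.1 hq.1) (edist_le_ediam_of_mem hp.2 hq.2)

theorem ENNReal.exists_pos_nnreal_ge_rpow_le_add {d : ℝ} (hd : 0 < d) {x : ℝ≥0∞} {c η : ℝ≥0}
    (hxc : x ≤ c) (hc : 0 < c) (hη : 0 < η) :
    ∃ δ : ℝ≥0, 0 < δ ∧ δ ≤ c ∧ x ≤ δ ∧ (δ : ℝ≥0∞) ^ d ≤ x ^ d + η := by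
  set m : ℝ≥0 := min (η ^ d⁻¹) c
  have hm : 0 < m := lt_min (NNReal.rpow_pos hη) hc
  have hx : x ≠ ∞ := ne_top_of_le_ne_top coe_ne_top hxc
  refine ⟨max x.toNNReal m, hm.trans_le (le_max_right _ _), max_le ?_ (min_le_right _ _), ?_, ?_⟩
  · exact (toNNReal_le_toNNReal hx coe_ne_top).2 hxc
  · rw [coe_max, coe_toNNReal hx]
    exact le_max_left _ _
  · rw [coe_max, coe_toNNReal hx]
    rcases max_choice x m with hmax | hmax <;> rw [hmax]
    · exact le_self_add
    · refine le_add_left ?_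
      rw [← coe_rpow_of_nonneg _ hd.le, coe_le_coe]
      calc m ^ d ≤ (η ^ d⁻¹) ^ d := NNReal.rpow_le_rpow (min_le_left _ _) hd.le
        _ = η := NNReal.rpow_inv_rpow hd.ne' η

def unitIntervalPiece (a : ℝ) (δ : ℝ≥0) (k : ℕ) : Set ℝ :=
  Icc (a + k * δ) (a + (k + 1) * δ) ∩ Icc a (a + 1)

theorem Icc_subset_iUnion_unitIntervalPiece (a : ℝ) {δ : ℝ≥0} (hδ : 0 < δ) :
    Icc a (a + 1) ⊆ ⋃ k, unitIntervalPiece a δ k := by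
  intro p hp
  have hδ' : (0 : ℝ) < δ := hδ
  set k := ⌊(p - a) / δ⌋₊
  have hk : (k : ℝ) ≤ (p - a) / δ := Nat.floor_le (div_nonneg (by linarith [hp.1]) hδ'.le)
  have hk' : (p - a) / δ < k + 1 := Nat.lt_floor_add_one _
  rw [le_div_iff₀ hδ'] at hk
  rw [div_lt_iff₀ hδ'] at hk'
  exact mem_iUnion.2 ⟨k, ⟨by linarith, by linarith⟩, hp⟩

theorem ediam_unitIntervalPiece_le (a : ℝ) (δ : ℝ≥0) (k : ℕ) :
    ediam (unitIntervalPiece a δ k) ≤ δ := by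
  refine (ediam_mono inter_subset_left).trans_eq ?_
  rw [Real.ediam_Icc, show a + (k + 1) * δ - (a + k * δ) = δ by ring, ofReal_coe_nnreal]

theorem unitIntervalPiece_eq_empty {a : ℝ} {δ : ℝ≥0} {k : ℕ} (hk : 1 < k * δ) :
    unitIntervalPiece a δ k = ∅ := by
  refine eq_empty_of_forall_notMem fun p ⟨⟨hp, _⟩, _, hp'⟩ => ?_
  have : (1 : ℝ) < k * δ := by exact_mod_cast hk
  linarith

theorem tsum_ediam_prod_unitIntervalPiece_rpow_le {X : Type*} [PseudoEMetricSpace X] {u : Set X}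
    {d : ℝ} (hd : 0 ≤ d) (a : ℝ) {δ : ℝ≥0} (hδ0 : 0 < δ) (hδ1 : δ ≤ 1) (hu : ediam u ≤ δ) :
    ∑' k, ediam (u ×ˢ unitIntervalPiece a δ k) ^ (d + 1) ≤ 2 * (δ : ℝ≥0∞) ^ d := by
  set N := ⌊δ⁻¹⌋₊
  have hterm : ∀ k, ediam (u ×ˢ unitIntervalPiece a δ k) ^ (d + 1) ≤
      if k ≤ N then (δ : ℝ≥0∞) ^ (d + 1) else 0 := by
    intro k
    split_ifs with hk
    · exact rpow_le_rpow ((ediam_prod_le _ _).trans (max_le hu (ediam_unitIntervalPiece_le ..)))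
        (by positivity)
    · have : 1 < k * δ := by
        calc 1 = δ⁻¹ * δ := (inv_mul_cancel₀ hδ0.ne').symm
          _ < k * δ := by
            gcongr
            exact (Nat.lt_floor_add_one _).trans_le (by exact_mod_cast not_le.1 hk)
      rw [unitIntervalPiece_eq_empty this, prod_empty, ediam_empty,
        zero_rpow_of_pos (by positivity)]
  have hcount : ((N : ℝ≥0∞) + 1) * δ ≤ 2 := by
    have hN : (N : ℝ≥0) * δ ≤ 1 :=
      (mul_le_mul_of_nonneg_right (Nat.floor_le zero_le) zero_le).trans
        (inv_mul_cancel₀ hδ0.ne').le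
    have : ((N : ℝ≥0) + 1) * δ ≤ 2 := by
      rw [add_mul, one_mul, ← one_add_one_eq_two]
      exact add_le_add hN hδ1
    exact_mod_cast this
  calc ∑' k, ediam (u ×ˢ unitIntervalPiece a δ k) ^ (d + 1)
      ≤ ∑' k, if k ≤ N then (δ : ℝ≥0∞) ^ (d + 1) else 0 := ENNReal.tsum_le_tsum hterm
    _ = ((N : ℝ≥0∞) + 1) * δ * (δ : ℝ≥0∞) ^ d := by
      rw [tsum_eq_sum (s := Finset.range (N + 1))
          fun k hk => if_neg (by simpa [Nat.lt_succ_iff] using hk),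
        Finset.sum_ite_of_true fun k hk => Nat.lt_succ_iff.1 (Finset.mem_range.1 hk),
        Finset.sum_const, Finset.card_range, nsmul_eq_mul,
        rpow_add _ _ (coe_ne_zero.2 hδ0.ne') coe_ne_top, rpow_one]
      push_cast
      ring
    _ ≤ 2 * (δ : ℝ≥0∞) ^ d := by gcongr

section Hausdorff

variable {X : Type*} [EMetricSpace X] [MeasurableSpace X] [BorelSpace X]

theorem exists_cover_tsum_ediam_rpow_le_of_hausdorffMeasure_eq_zero {d : ℝ} (hd : 0 < d)
    {s : Set X} (hs : μH[d] s = 0) {ε : ℝ≥0∞} (hε : 0 < ε) :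
    ∃ t : ℕ → Set X, s ⊆ ⋃ n, t n ∧ (∀ n, ediam (t n) ≤ ε) ∧ ∑' n, ediam (t n) ^ d ≤ ε := by
  simp only [Measure.hausdorffMeasure_apply, ENNReal.iSup_eq_zero] at hs
  have hlt := (hs ε hε).trans_lt hε
  simp only [iInf_lt_iff] at hlt
  obtain ⟨t, hst, htε, hsum⟩ := hlt
  refine ⟨t, hst, htε, le_of_eq_of_le (tsum_congr fun n => ?_) hsum.le⟩
  rcases (t n).eq_empty_or_nonempty with hempty | hne
  · simp [hempty, ENNReal.zero_rpow_of_pos hd]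
  · simp [hne]

theorem hausdorffMeasure_eq_zero_of_forall_exists_cover {ι : Type*} [Countable ι] {d : ℝ}
    {s : Set X}
    (h : ∀ ε > 0, ∃ t : ι → Set X, s ⊆ ⋃ i, t i ∧ (∀ i, ediam (t i) ≤ ε) ∧
      ∑' i, ediam (t i) ^ d ≤ ε) :
    μH[d] s = 0 := by
  choose! t hst htε hsum using h
  refine nonpos_iff_eq_zero.1 <| (Measure.hausdorffMeasure_le_liminf_tsum d s (l := 𝓝[>] 0) id
    (tendsto_nhdsWithin_of_tendsto_nhds tendsto_id) t
    (eventually_nhdsWithin_of_forall htε) (eventually_nhdsWithin_of_forall hst)).trans ?_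
  calc liminf (fun ε => ∑' i, ediam (t ε i) ^ d) (𝓝[>] 0)
      ≤ liminf id (𝓝[>] (0 : ℝ≥0∞)) :=
        liminf_le_liminf (eventually_nhdsWithin_of_forall hsum)
    _ = 0 := (tendsto_nhdsWithin_of_tendsto_nhds tendsto_id).liminf_eq

theorem hausdorffMeasure_prod_Icc_add_one_eq_zero {d : ℝ} (hd : 0 < d) {s : Set X}
    (hs : μH[d] s = 0) (a : ℝ) : μH[d + 1] (s ×ˢ Icc a (a + 1)) = 0 := by
  refine hausdorffMeasure_eq_zero_of_forall_exists_cover (ι := ℕ × ℕ) fun ε hε => ?_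
  obtain ⟨c₀, hc₀, hc₀ε⟩ := exists_nnreal_pos_mul_lt (ofNat_ne_top (n := 4)) hε.ne'
  set c := min c₀ 1
  have hc : 0 < c := lt_min hc₀ one_pos
  have hcε : 4 * (c : ℝ≥0∞) ≤ ε :=
    (mul_comm _ _).trans_le <| (mul_le_mul_left (coe_le_coe.2 (min_le_left _ _)) _).trans hc₀ε.le
  obtain ⟨u, hsu, huc, hsum⟩ :=
    exists_cover_tsum_ediam_rpow_le_of_hausdorffMeasure_eq_zero hd hs (coe_pos.2 hc)
  obtain ⟨η, hη, hηc⟩ := exists_pos_sum_of_countable (coe_pos.2 hc).ne' ℕ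
  -- the slices need positive width, so each diameter is enlarged to some `δ n > 0` at cost `η n`
  choose δ hδ0 hδc huδ hδd using fun n =>
    exists_pos_nnreal_ge_rpow_le_add hd (huc n) hc (hη n)
  refine ⟨fun i => u i.1 ×ˢ unitIntervalPiece a (δ i.1) i.2, ?_, fun i => ?_, ?_⟩
  · rintro ⟨x, y⟩ ⟨hx, hy⟩
    obtain ⟨n, hxn⟩ := mem_iUnion.1 (hsu hx)
    obtain ⟨k, hyk⟩ := mem_iUnion.1 (Icc_subset_iUnion_unitIntervalPiece a (hδ0 n) hy)
    exact mem_iUnion.2 ⟨(n, k), hxn, hyk⟩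
  · have hcε' : (c : ℝ≥0∞) ≤ ε := (le_mul_of_one_le_left' (by norm_num)).trans hcε
    exact ((ediam_prod_le _ _).trans (max_le (huδ i.1) (ediam_unitIntervalPiece_le ..))).trans
      ((coe_le_coe.2 (hδc i.1)).trans hcε')
  · calc ∑' i : ℕ × ℕ, ediam (u i.1 ×ˢ unitIntervalPiece a (δ i.1) i.2) ^ (d + 1)
        = ∑' n, ∑' k, ediam (u n ×ˢ unitIntervalPiece a (δ n) k) ^ (d + 1) := ENNReal.tsum_prod'
      _ ≤ ∑' n, 2 * ((δ n : ℝ≥0∞) ^ d) := ENNReal.tsum_le_tsum fun n =>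
          tsum_ediam_prod_unitIntervalPiece_rpow_le hd.le a (hδ0 n)
            ((hδc n).trans (min_le_right _ _)) (huδ n)
      _ ≤ ∑' n, 2 * (ediam (u n) ^ d + η n) :=
          ENNReal.tsum_le_tsum fun n => by gcongr; exact hδd n
      _ = 2 * (∑' n, ediam (u n) ^ d + ∑' n, (η n : ℝ≥0∞)) := by
          rw [ENNReal.tsum_mul_left, ENNReal.tsum_add]
      _ ≤ 2 * (c + c) := by gcongr
      _ = 4 * c := by ring
      _ ≤ ε := hcε

end Hausdorff

theorem dimH_prod_univ_le {X : Type*} [EMetricSpace X] (s : Set X) :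
    dimH (s ×ˢ (univ : Set ℝ)) ≤ dimH s + 1 := by
  borelize X
  refine dimH_le fun d hd => ?_
  by_contra! hlt
  have hd1 : 1 ≤ d := by exact_mod_cast le_add_self.trans hlt.le
  have hlt' : dimH s < (d - 1 : ℝ≥0) := by
    rw [coe_sub, coe_one]
    exact lt_tsub_iff_right.2 hlt
  have hpos : (0 : ℝ) < (d - 1 : ℝ≥0) := by
    exact_mod_cast zero_le.trans_lt hlt'
  have hnull : μH[d] (s ×ˢ (univ : Set ℝ)) = 0 := by
    rw [← iUnion_Icc_intCast ℝ, prod_iUnion, show (d : ℝ) = (d - 1 : ℝ≥0) + 1 by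
      push_cast [NNReal.coe_sub hd1]; ring]
    exact measure_iUnion_null fun n =>
      hausdorffMeasure_prod_Icc_add_one_eq_zero hpos (hausdorffMeasure_of_dimH_lt hlt') n
  simp [hnull] at hd

theorem stmt7 (S B : Set (ℝ × ℝ))
    (h : ∀ p ∈ S, ∃ r > (0:ℝ), ∃ ε₁ ∈ ({-1, 1} : Set ℝ), ∃ ε₂ ∈ ({-1, 1} : Set ℝ),
      (p.1 + ε₁ * r, p.2 + ε₂ * r) ∈ B) :
    dimH S - 1 ≤ dimH B := by
  let line (v : ℝ × ℝ) : (ℝ × ℝ) × ℝ →L[ℝ] ℝ × ℝ :=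
    .fst ℝ _ _ + (ContinuousLinearMap.snd ℝ (ℝ × ℝ) ℝ).smulRight v
  have hline (v : ℝ × ℝ) : dimH (line v '' (B ×ˢ univ)) ≤ dimH B + 1 :=
    ((line v).lipschitz.dimH_image_le _).trans (dimH_prod_univ_le B)
  have hS : S ⊆ line (1, 1) '' (B ×ˢ univ) ∪ line (1, -1) '' (B ×ˢ univ) := by
    rintro ⟨x, y⟩ hp
    obtain ⟨r, -, ε₁, hε₁, ε₂, hε₂, hq⟩ := h _ hp
    rcases hε₁ with rfl | rfl <;> rcases hε₂ with rfl | rfl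
    · exact Or.inl ⟨(_, r), ⟨hq, trivial⟩, by simp [line]⟩
    · exact Or.inr ⟨(_, r), ⟨hq, trivial⟩, by simp [line]⟩
    · exact Or.inr ⟨(_, -r), ⟨hq, trivial⟩, by simp [line]⟩
    · exact Or.inl ⟨(_, -r), ⟨hq, trivial⟩, by simp [line]⟩
  rw [tsub_le_iff_right]
  calc dimH S ≤ max (dimH (line (1, 1) '' (B ×ˢ univ))) (dimH (line (1, -1) '' (B ×ˢ univ))) :=
      (dimH_mono hS).trans_eq (dimH_union _ _)
    _ ≤ dimH B + 1 := max_le (hline _) (hline _)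
end

section
/- There exists a closed set B ⊆ ℝ² with dimH B = 0 such that for every p ∈ ℝ² there exists a nonzero vector v ∈ ℝ² with p + v, p − v, p + v⊥, and p − v⊥ all belonging to B, where v⊥ := (−v₂, v₁) denotes the rotation of v by 90 degrees; in other words, B contains the four vertices of a (possibly rotated) square centered at every point of ℝ². -/
/-!
Write `s k = 2 ^ (-(k + 1)!)` and `Λ k = s k • ℤ²`, and use the sup metric on `ℝ × ℝ`, in which
the rotation `ρ v = v⊥` is an isometry. `B` is the union over `j < 4` of the sets of points lying
within `s (k + 1)` of `Λ k` for every `k ≡ j (mod 4)`. Near each scale `k = 4n + j`, a bounded part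
of such a set is covered by about `s k ^ (-2)` balls of radius `2 s (k + 1)`, and
`s (k + 1) = s k ^ (k + 2)` is eventually smaller than any power of `s k`: so `dimH B = 0`.

Given `p`, build `v` by successive corrections from `(1, 0)`: at step `k`, move `v` by at most
`s k / 2` so that `p + ρ ^ k v` lands on `Λ k`. The corrections decay geometrically, so the limit
`v` is nonzero and `p + ρ ^ k v` stays within `s (k + 1)` of `Λ k` for every `k`. As `ρ ^ k`
cycles through `v, v⊥, -v, -v⊥`, the four vertices lie in `B`.
-/

open Set Filter Metric Topology MeasureTheory
open scoped ENNReal NNReal Nat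

theorem dimH_eq_zero_of_covers {X ι : Type*} [EMetricSpace X] {s : Set X}
    (T : ℕ → Finset ι) (t : ℕ → ι → Set X) (r : ℕ → ℝ≥0∞) (hr : Tendsto r atTop (𝓝 0))
    (ht : ∀ n, ∀ i ∈ T n, ediam (t n i) ≤ r n) (hst : ∀ n, s ⊆ ⋃ i ∈ T n, t n i)
    (hsum : ∀ d : ℝ≥0, 0 < d → Tendsto (fun n ↦ (T n).card * r n ^ (d : ℝ)) atTop (𝓝 0)) :
    dimH s = 0 := by
  borelize X
  refine le_antisymm (ENNReal.le_of_forall_pos_le_add fun d hd _ ↦ ?_) zero_le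
  rw [zero_add]
  refine dimH_le_of_hausdorffMeasure_ne_top (ne_top_of_le_ne_top ENNReal.zero_ne_top ?_)
  calc μH[d] s ≤ liminf (fun n ↦ ∑ i : T n, ediam (t n i) ^ (d : ℝ)) atTop :=
        Measure.hausdorffMeasure_le_liminf_sum _ s r hr (fun n (i : T n) ↦ t n i)
          (.of_forall fun n i ↦ ht n i i.2)
          (.of_forall fun n ↦ by rw [iUnion_subtype]; exact hst n)
    _ ≤ liminf (fun n ↦ (T n).card * r n ^ (d : ℝ)) atTop := by
        refine liminf_le_liminf (.of_forall fun n ↦ ?_)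
        rw [Finset.sum_coe_sort (T n) (fun i ↦ ediam (t n i) ^ (d : ℝ))]
        refine (Finset.sum_le_card_nsmul _ _ _ fun i hi ↦ ?_).trans_eq (nsmul_eq_mul _ _)
        exact ENNReal.rpow_le_rpow (ht n i hi) d.2
    _ = 0 := (hsum d hd).liminf_eq

theorem exists_dist_le_forall_mem_cthickening {X Y : Type*} [MetricSpace X] [CompleteSpace X]
    [PseudoMetricSpace Y] (ψ : ℕ → X ≃ᵢ Y) (L : ℕ → Set Y) (δ : ℕ → ℝ)
    (hδ : ∀ k, δ (k + 1) ≤ δ k / 2) (hL : ∀ k y, ∃ z ∈ L k, dist y z ≤ δ k) (x₀ : X) :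
    ∃ x, dist x₀ x ≤ 2 * δ 0 ∧ ∀ k, ψ k x ∈ cthickening (2 * δ (k + 1)) (L k) := by
  choose z hzL hz using hL
  let w : ℕ → X := fun k ↦ Nat.rec x₀ (fun k w ↦ (ψ k).symm (z k (ψ k w))) k
  have hψw : ∀ k, ψ k (w (k + 1)) = z k (ψ k (w k)) := fun k ↦ (ψ k).apply_symm_apply _
  have hstep : ∀ k, dist (w k) (w (k + 1)) ≤ δ k := fun k ↦ by
    rw [← (ψ k).dist_eq, hψw]
    exact hz k _
  have hgeom : ∀ n m, δ (n + m) ≤ δ n / 2 ^ m := fun n m ↦ by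
    induction m with
    | zero => simp
    | succ m ih =>
      calc δ (n + m + 1) ≤ δ (n + m) / 2 := hδ _
        _ ≤ δ n / 2 ^ m / 2 := by gcongr
        _ = δ n / 2 ^ (m + 1) := by rw [pow_succ, div_div]
  have hshift : ∀ n m, dist (w (n + m)) (w (n + m + 1)) ≤ 2 * δ n / 2 / 2 ^ m := fun n m ↦ by
    rw [mul_div_cancel_left₀ _ two_ne_zero]
    exact (hstep _).trans (hgeom n m)
  obtain ⟨x, hx⟩ := cauchySeq_tendsto_of_complete
    (cauchySeq_of_le_geometric_two (C := 2 * δ 0) fun m ↦ by simpa using hshift 0 m)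
  have htail : ∀ n, dist (w n) x ≤ 2 * δ n := fun n ↦
    dist_le_of_le_geometric_two_of_tendsto₀ (f := fun m ↦ w (n + m)) (hshift n)
      (hx.comp (by simpa only [add_comm] using tendsto_add_atTop_nat n))
  refine ⟨x, htail 0, fun k ↦ mem_cthickening_of_dist_le _ (z k (ψ k (w k))) _ _ (hzL k _) ?_⟩
  rw [← hψw, (ψ k).dist_eq, dist_comm]
  exact htail (k + 1)

namespace SquareVertices

def latticePoint (c : ℝ) (z : ℤ × ℤ) : ℝ × ℝ := ((z.1 : ℝ) * c, (z.2 : ℝ) * c)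

def lattice (c : ℝ) : Set (ℝ × ℝ) := range (latticePoint c)

noncomputable def latticeBox (c R : ℝ) : Finset (ℤ × ℤ) :=
  Finset.Icc (-⌈R / c⌉₊ : ℤ) ⌈R / c⌉₊ ×ˢ Finset.Icc (-⌈R / c⌉₊ : ℤ) ⌈R / c⌉₊

theorem exists_int_abs_sub_mul_le {c : ℝ} (hc : 0 < c) (x : ℝ) : ∃ m : ℤ, |x - m * c| ≤ c / 2 :=
  ⟨round (x / c), calc
    |x - round (x / c) * c| = |x / c - round (x / c)| * c := by
      rw [← abs_of_pos hc, ← abs_mul, abs_of_pos hc, sub_mul, div_mul_cancel₀ _ hc.ne']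
    _ ≤ 1 / 2 * c := by gcongr; exact abs_sub_round _
    _ = c / 2 := by ring⟩

theorem exists_mem_lattice_dist_le {c : ℝ} (hc : 0 < c) (y : ℝ × ℝ) :
    ∃ z ∈ lattice c, dist y z ≤ c / 2 := by
  obtain ⟨m₁, h₁⟩ := exists_int_abs_sub_mul_le hc y.1
  obtain ⟨m₂, h₂⟩ := exists_int_abs_sub_mul_le hc y.2
  exact ⟨latticePoint c (m₁, m₂), mem_range_self _, max_le h₁ h₂⟩

theorem mem_latticeBox {c R : ℝ} (hc : 0 < c) {z : ℤ × ℤ}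
    (hz : latticePoint c z ∈ closedBall 0 R) : z ∈ latticeBox c R := by
  have hcoord : ∀ m : ℤ, |(m : ℝ) * c| ≤ R → m ∈ Finset.Icc (-⌈R / c⌉₊ : ℤ) ⌈R / c⌉₊ := by
    intro m hm
    rw [abs_mul, abs_of_pos hc, ← le_div_iff₀ hc] at hm
    have hM : |(m : ℝ)| ≤ ⌈R / c⌉₊ := hm.trans (Nat.le_ceil _)
    rw [abs_le] at hM
    exact Finset.mem_Icc.2 ⟨by exact_mod_cast hM.1, by exact_mod_cast hM.2⟩
  rw [mem_closedBall, dist_zero_right, Prod.norm_def, max_le_iff] at hz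
  exact Finset.mem_product.2 ⟨hcoord _ hz.1, hcoord _ hz.2⟩

theorem card_latticeBox_le {c R : ℝ} (hc : 0 < c) (hR : 0 ≤ R) :
    ((latticeBox c R).card : ℝ) ≤ (2 * R / c + 3) ^ 2 := by
  have hcard : ((Finset.Icc (-⌈R / c⌉₊ : ℤ) ⌈R / c⌉₊).card : ℝ) = 2 * ⌈R / c⌉₊ + 1 := by
    rw [Int.card_Icc, show (⌈R / c⌉₊ + 1 - -⌈R / c⌉₊ : ℤ) = ((2 * ⌈R / c⌉₊ + 1 : ℕ) : ℤ) by
      push_cast; ring, Int.toNat_natCast]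
    push_cast; ring
  have hceil := Nat.ceil_lt_add_one (div_nonneg hR hc.le)
  rw [latticeBox, Finset.card_product, Nat.cast_mul, hcard, ← sq, mul_div_assoc]
  gcongr ?_ ^ 2
  linarith

theorem cthickening_lattice_inter_closedBall_subset {c ε R : ℝ} (hc : 0 < c) (hε : 0 < ε) :
    cthickening ε (lattice c) ∩ closedBall 0 R ⊆
      ⋃ z ∈ latticeBox c (R + 2 * ε), closedBall (latticePoint c z) (2 * ε) := by
  rintro x ⟨hx, hxR⟩
  obtain ⟨y, ⟨z, rfl⟩, hxy⟩ := mem_iUnion₂.1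
    (cthickening_subset_iUnion_closedBall_of_lt (δ' := 2 * ε) _ (by positivity) (by linarith) hx)
  refine mem_iUnion₂.2 ⟨z, mem_latticeBox hc ?_, hxy⟩
  rw [mem_closedBall] at hxy hxR ⊢
  linarith [dist_triangle (latticePoint c z) x 0, dist_comm x (latticePoint c z)]

theorem card_latticeBox_mul_rpow_le {c ε R d : ℝ} (hc : 0 < c) (hc₁ : c ≤ 1) (hε : 0 < ε)
    (hε₁ : ε ≤ 1) (hR : 0 ≤ R) :
    (latticeBox c (R + 2 * ε)).card * (4 * ε) ^ d ≤ (2 * R + 7) ^ 2 * 4 ^ d * (ε ^ d / c ^ 2) := by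
  have hbox : 2 * (R + 2 * ε) / c + 3 ≤ (2 * R + 7) / c := by
    rw [div_add' _ _ _ hc.ne', div_le_div_iff_of_pos_right hc]
    nlinarith
  calc (latticeBox c (R + 2 * ε)).card * (4 * ε) ^ d
      ≤ (2 * (R + 2 * ε) / c + 3) ^ 2 * (4 ^ d * ε ^ d) := by
        rw [Real.mul_rpow (by norm_num) hε.le]
        gcongr
        exact card_latticeBox_le hc (by positivity)
    _ ≤ ((2 * R + 7) / c) ^ 2 * (4 ^ d * ε ^ d) := by gcongr
    _ = (2 * R + 7) ^ 2 * 4 ^ d * (ε ^ d / c ^ 2) := by ring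

theorem dimH_iInter_cthickening_lattice {c ε : ℕ → ℝ} (hc : ∀ n, 0 < c n) (hc₁ : ∀ n, c n ≤ 1)
    (hε : ∀ n, 0 < ε n) (h : ∀ d : ℝ, 0 < d → Tendsto (fun n ↦ ε n ^ d / c n ^ 2) atTop (𝓝 0)) :
    dimH (⋂ n, cthickening (ε n) (lattice (c n))) = 0 := by
  have hε₀ : Tendsto ε atTop (𝓝 0) := by
    refine squeeze_zero (fun n ↦ (hε n).le) (fun n ↦ ?_) (h 1 one_pos)
    rw [Real.rpow_one]
    exact le_div_self (hε n).le (pow_pos (hc n) 2) (pow_le_one₀ (hc n).le (hc₁ n))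
  rw [← inter_univ (⋂ n, _), ← iUnion_closedBall_nat (0 : ℝ × ℝ), inter_iUnion, dimH_iUnion,
    ENNReal.iSup_eq_zero]
  intro N
  refine dimH_eq_zero_of_covers (fun n ↦ latticeBox (c n) (N + 2 * ε n))
    (fun n z ↦ closedBall (latticePoint (c n) z) (2 * ε n)) (fun n ↦ ENNReal.ofReal (4 * ε n))
    (by simpa using ENNReal.tendsto_ofReal (hε₀.const_mul 4)) (fun n z _ ↦ ?_) (fun n ↦ ?_)
    (fun d hd ↦ ?_)
  · refine ediam_le_of_forall_dist_le fun x hx y hy ↦ ?_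
    rw [mem_closedBall] at hx hy
    linarith [dist_triangle_right x y (latticePoint (c n) z)]
  · exact (inter_subset_inter_left _ (iInter_subset _ n)).trans
      (cthickening_lattice_inter_closedBall_subset (hc n) (hε n))
  · have hlim : Tendsto (fun n ↦ ENNReal.ofReal ((2 * N + 7) ^ 2 * 4 ^ (d : ℝ) *
        (ε n ^ (d : ℝ) / c n ^ 2))) atTop (𝓝 0) := by
      simpa using ENNReal.tendsto_ofReal ((h d hd).const_mul ((2 * N + 7 : ℝ) ^ 2 * 4 ^ (d : ℝ)))
    refine tendsto_of_tendsto_of_tendsto_of_le_of_le' tendsto_const_nhds hlim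
      (.of_forall fun n ↦ zero_le) ((hε₀.eventually (ge_mem_nhds one_pos)).mono fun n hn ↦ ?_)
    rw [← ENNReal.ofReal_natCast, ENNReal.ofReal_rpow_of_nonneg (by linarith [hε n]) d.coe_nonneg,
      ← ENNReal.ofReal_mul (Nat.cast_nonneg _)]
    exact ENNReal.ofReal_le_ofReal
      (card_latticeBox_mul_rpow_le (hc n) (hc₁ n) (hε n) hn N.cast_nonneg)

noncomputable def scale (k : ℕ) : ℝ := 2 ^ (-((k + 1)! : ℝ))

theorem scale_pos (k : ℕ) : 0 < scale k := Real.rpow_pos_of_pos two_pos _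

theorem scale_le_one (k : ℕ) : scale k ≤ 1 :=
  Real.rpow_le_one_of_one_le_of_nonpos one_le_two (neg_nonpos.2 (Nat.cast_nonneg _))

theorem scale_zero : scale 0 = 1 / 2 := by simp [scale, Real.rpow_neg_one]

theorem scale_succ_le (k : ℕ) : scale (k + 1) ≤ scale k / 2 := by
  rw [scale, scale, ← Real.rpow_sub_one two_ne_zero]
  refine Real.rpow_le_rpow_of_exponent_le one_le_two ?_
  have h : (k + 1)! + 1 ≤ (k + 1 + 1)! := by
    rw [Nat.factorial_succ (k + 1)]
    nlinarith [Nat.factorial_pos (k + 1)]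
  have h' : ((k + 1)! : ℝ) + 1 ≤ (k + 1 + 1)! := by exact_mod_cast h
  linarith

theorem tendsto_scale_succ_rpow_div_sq {d : ℝ} (hd : 0 < d) :
    Tendsto (fun k ↦ scale (k + 1) ^ d / scale k ^ 2) atTop (𝓝 0) := by
  have hexp : ∀ k : ℕ,
      scale (k + 1) ^ d / scale k ^ 2 = 2 ^ (((k + 1)! : ℝ) * (2 - (k + 2) * d)) := fun k ↦ by
    rw [scale, scale, ← Real.rpow_mul two_pos.le, ← Real.rpow_mul_natCast two_pos.le,
      ← Real.rpow_sub two_pos, Nat.factorial_succ (k + 1)]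
    push_cast
    ring_nf
  have hfact : Tendsto (fun k : ℕ ↦ ((k + 1)! : ℝ)) atTop atTop :=
    tendsto_natCast_atTop_atTop.comp
      (tendsto_atTop_mono (fun k ↦ Nat.self_le_factorial (k + 1)) (tendsto_add_atTop_nat 1))
  have hlin : Tendsto (fun k : ℕ ↦ 2 - ((k : ℝ) + 2) * d) atTop atBot := by
    have : Tendsto (fun k : ℕ ↦ ((k : ℝ) + 2) * d) atTop atTop :=
      (tendsto_atTop_add_const_right _ 2 tendsto_natCast_atTop_atTop).atTop_mul_const hd
    simpa [sub_eq_add_neg] using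
      tendsto_atBot_add_const_left _ 2 (tendsto_neg_atTop_atBot.comp this)
  simp_rw [hexp]
  exact (tendsto_rpow_atBot_of_base_gt_one 2 one_lt_two).comp (hfact.atTop_mul_atBot₀ hlin)

theorem dimH_iInter_cthickening_lattice_scale {k : ℕ → ℕ} (hk : Tendsto k atTop atTop) :
    dimH (⋂ n, cthickening (scale (k n + 1)) (lattice (scale (k n)))) = 0 :=
  dimH_iInter_cthickening_lattice (fun _ ↦ scale_pos _) (fun _ ↦ scale_le_one _)
    (fun _ ↦ scale_pos _) fun _ hd ↦ (tendsto_scale_succ_rpow_div_sq hd).comp hk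

def rot : (ℝ × ℝ) ≃ᵢ (ℝ × ℝ) where
  toFun v := (-v.2, v.1)
  invFun v := (v.2, -v.1)
  left_inv v := by simp
  right_inv v := by simp
  isometry_toFun := Isometry.of_dist_eq fun x y ↦ by
    simp only [Prod.dist_eq, Real.dist_eq, neg_sub_neg, abs_sub_comm x.2, max_comm]

@[simp]
theorem rot_apply (v : ℝ × ℝ) : rot v = (-v.2, v.1) := rfl

theorem rot_pow_two_apply (v : ℝ × ℝ) : (rot ^ 2) v = -v := by
  ext <;> simp [sq, IsometryEquiv.mul_apply]

theorem rot_pow_three_apply (v : ℝ × ℝ) : (rot ^ 3) v = -rot v := by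
  ext <;> simp [pow_succ, IsometryEquiv.mul_apply]

theorem rot_pow_four : rot ^ 4 = 1 := by
  ext v <;> simp [pow_succ, IsometryEquiv.mul_apply]

theorem exists_ne_zero_forall_rot_pow_mem (p : ℝ × ℝ) :
    ∃ v ≠ 0, ∀ k, p + (rot ^ k) v ∈ cthickening (scale (k + 1)) (lattice (scale k)) := by
  obtain ⟨v, hv₀, hv⟩ := exists_dist_le_forall_mem_cthickening
    (fun k ↦ (rot ^ k).trans (IsometryEquiv.addLeft p)) (fun k ↦ lattice (scale k))
    (fun k ↦ scale k / 2) (fun k ↦ by linarith [scale_succ_le k])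
    (fun k ↦ exists_mem_lattice_dist_le (scale_pos k)) ((1, 0) : ℝ × ℝ)
  refine ⟨v, ?_, fun k ↦ by simpa [mul_div_cancel₀] using hv k⟩
  rintro rfl
  norm_num [scale_zero, Prod.dist_eq] at hv₀

def squareVertexSet : Set (ℝ × ℝ) :=
  ⋃ j : Fin 4, ⋂ n : ℕ, cthickening (scale (4 * n + j + 1)) (lattice (scale (4 * n + j)))

theorem isClosed_squareVertexSet : IsClosed squareVertexSet :=
  isClosed_iUnion_of_finite fun _ ↦ isClosed_iInter fun _ ↦ isClosed_cthickening

theorem dimH_squareVertexSet : dimH squareVertexSet = 0 := by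
  rw [squareVertexSet, dimH_iUnion, ENNReal.iSup_eq_zero]
  exact fun j ↦ dimH_iInter_cthickening_lattice_scale
    (tendsto_atTop_atTop.2 fun b ↦ ⟨b, fun n hn ↦ by omega⟩)

theorem exists_ne_zero_forall_add_rot_pow_mem_squareVertexSet (p : ℝ × ℝ) :
    ∃ v ≠ 0, ∀ j : Fin 4, p + (rot ^ (j : ℕ)) v ∈ squareVertexSet := by
  obtain ⟨v, hv₀, hv⟩ := exists_ne_zero_forall_rot_pow_mem p
  refine ⟨v, hv₀, fun j ↦ mem_iUnion.2 ⟨j, mem_iInter.2 fun n ↦ ?_⟩⟩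
  have hperiod : rot ^ (4 * n + j : ℕ) = rot ^ (j : ℕ) := by
    rw [pow_add, pow_mul, rot_pow_four, one_pow, one_mul]
  exact hperiod ▸ hv (4 * n + j)

end SquareVertices

open SquareVertices in
theorem stmt11 : ∃ B : Set (ℝ × ℝ), IsClosed B ∧ dimH B = 0 ∧
    ∀ p : ℝ × ℝ, ∃ v : ℝ × ℝ, v ≠ 0 ∧
      p + v ∈ B ∧ p - v ∈ B ∧ p + (-v.2, v.1) ∈ B ∧ p - (-v.2, v.1) ∈ B := by
  refine ⟨squareVertexSet, isClosed_squareVertexSet, dimH_squareVertexSet, fun p ↦ ?_⟩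
  obtain ⟨v, hv₀, hv⟩ := exists_ne_zero_forall_add_rot_pow_mem_squareVertexSet p
  refine ⟨v, hv₀, by simpa using hv 0, ?_, by simpa using hv 1, ?_⟩
  · simpa [rot_pow_two_apply, sub_eq_add_neg] using hv 2
  · simpa [rot_pow_three_apply, sub_eq_add_neg] using hv 3
end

section
/- Let B ⊂ ℝ² be a finite set and let S = {(x,y) ∈ ℝ² : there exists r > 0 such that (x−r, y−r), (x+r, y−r), (x−r, y+r), (x+r, y+r) ∈ B}. Then S is finite and |S| ≤ (2·|B|)^{4/3}. -/
/-- The four vertices of the axes-parallel square with center `c` and radius `r`. -/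
def sqVertices (c : ℝ × ℝ) (r : ℝ) : Set (ℝ × ℝ) :=
  {(c.1 - r, c.2 - r), (c.1 + r, c.2 - r), (c.1 - r, c.2 + r), (c.1 + r, c.2 + r)}

/-- Sum of fiber sizes over any set of labels is at most the total size. -/
private lemma fiber_sum_le (I : Finset ℝ) (Bf : Finset (ℝ × ℝ)) (f : ℝ × ℝ → ℝ) :
    ∑ c ∈ I, (Bf.filter fun x => f x = c).card ≤ Bf.card := by
  classical
  have hdis : ∀ c ∈ I, ∀ c' ∈ I, c ≠ c' →
      Disjoint (Bf.filter fun x => f x = c) (Bf.filter fun x => f x = c') := by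
    intro c _ c' _ h
    refine Finset.disjoint_left.mpr fun x hx hx' => h ?_
    rw [← (Finset.mem_filter.mp hx).2, (Finset.mem_filter.mp hx').2]
  calc ∑ c ∈ I, (Bf.filter fun x => f x = c).card
      = (I.biUnion fun c => Bf.filter fun x => f x = c).card :=
        (Finset.card_biUnion hdis).symm
    _ ≤ Bf.card := Finset.card_le_card
        (Finset.biUnion_subset.mpr fun c _ => Finset.filter_subset _ _)

/-- Centers whose `f`-line is thin (≤ θ points of `Bf`) number at most `θ * |Bf| / 2`,
    given a pairing `p ↦ (a p, b p)` into the same `f`-line with strictly increasing `g`,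
    determining `p`. -/
private lemma thin_bound (Bf T : Finset (ℝ × ℝ)) (f g : ℝ × ℝ → ℝ)
    (a b : ℝ × ℝ → ℝ × ℝ) (θ : ℝ) (hθ : 0 ≤ θ)
    (ha : ∀ p ∈ T, a p ∈ Bf) (hb : ∀ p ∈ T, b p ∈ Bf)
    (hfa : ∀ p ∈ T, f (a p) = f p) (hfb : ∀ p ∈ T, f (b p) = f p)
    (hlt : ∀ p ∈ T, g (a p) < g (b p))
    (hmid : ∀ p ∈ T, ∀ q ∈ T, a p = a q → b p = b q → p = q)
    (hthin : ∀ p ∈ T, ((Bf.filter fun x => f x = f p).card : ℝ) ≤ θ) :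
    (T.card : ℝ) ≤ θ * Bf.card / 2 := by
  classical
  have hcard : T.card = ∑ c ∈ T.image f, (T.filter fun p => f p = c).card :=
    Finset.card_eq_sum_card_fiberwise (fun x hx => Finset.mem_image_of_mem f hx)
  have key : ∀ c, 2 * (T.filter fun p => f p = c).card ≤
      (Bf.filter fun x => f x = c).card * (Bf.filter fun x => f x = c).card := by
    intro c
    have hmemT : ∀ p ∈ T.filter fun p => f p = c, p ∈ T :=
      fun p hp => (Finset.mem_filter.mp hp).1
    have hfc : ∀ p ∈ T.filter fun p => f p = c, f p = c :=
      fun p hp => (Finset.mem_filter.mp hp).2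
    have haBc : ∀ p ∈ T.filter fun p => f p = c, a p ∈ Bf.filter fun x => f x = c := by
      intro p hp
      exact Finset.mem_filter.mpr ⟨ha p (hmemT p hp), by rw [hfa p (hmemT p hp), hfc p hp]⟩
    have hbBc : ∀ p ∈ T.filter fun p => f p = c, b p ∈ Bf.filter fun x => f x = c := by
      intro p hp
      exact Finset.mem_filter.mpr ⟨hb p (hmemT p hp), by rw [hfb p (hmemT p hp), hfc p hp]⟩
    have h1 : ((T.filter fun p => f p = c).image fun p => (a p, b p)).card
        = (T.filter fun p => f p = c).card := by
      apply Finset.card_image_of_injOn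
      intro p hp q hq hpq
      exact hmid p (hmemT p hp) q (hmemT q hq)
        (congrArg Prod.fst hpq) (congrArg Prod.snd hpq)
    have h2 : ((T.filter fun p => f p = c).image fun p => (b p, a p)).card
        = (T.filter fun p => f p = c).card := by
      apply Finset.card_image_of_injOn
      intro p hp q hq hpq
      exact hmid p (hmemT p hp) q (hmemT q hq)
        (congrArg Prod.snd hpq) (congrArg Prod.fst hpq)
    have hdisj : Disjoint ((T.filter fun p => f p = c).image fun p => (a p, b p))
        ((T.filter fun p => f p = c).image fun p => (b p, a p)) := by
      rw [Finset.disjoint_left]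
      rintro z hz1 hz2
      obtain ⟨p, hp, rfl⟩ := Finset.mem_image.mp hz1
      obtain ⟨q, hq, heq⟩ := Finset.mem_image.mp hz2
      have e1 : b q = a p := congrArg Prod.fst heq
      have e2 : a q = b p := congrArg Prod.snd heq
      have l1 := hlt p (hmemT p hp)
      have l2 := hlt q (hmemT q hq)
      rw [e1, e2] at l2
      linarith
    have hsub : (((T.filter fun p => f p = c).image fun p => (a p, b p)) ∪
        ((T.filter fun p => f p = c).image fun p => (b p, a p))) ⊆
        (Bf.filter fun x => f x = c) ×ˢ (Bf.filter fun x => f x = c) := by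
      intro z hz
      rcases Finset.mem_union.mp hz with hz | hz
      · obtain ⟨p, hp, rfl⟩ := Finset.mem_image.mp hz
        exact Finset.mem_product.mpr ⟨haBc p hp, hbBc p hp⟩
      · obtain ⟨p, hp, rfl⟩ := Finset.mem_image.mp hz
        exact Finset.mem_product.mpr ⟨hbBc p hp, haBc p hp⟩
    have := Finset.card_le_card hsub
    rw [Finset.card_union_of_disjoint hdisj, h1, h2, Finset.card_product] at this
    omega
  have h4 : ∀ c ∈ T.image f, ((T.filter fun p => f p = c).card : ℝ) ≤
      θ * ((Bf.filter fun x => f x = c).card : ℝ) / 2 := by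
    intro c hc
    obtain ⟨p, hpT, hpc⟩ := Finset.mem_image.mp hc
    have hk : ((Bf.filter fun x => f x = c).card : ℝ) ≤ θ := by
      rw [← hpc]; exact hthin p hpT
    have h2 : 2 * ((T.filter fun p => f p = c).card : ℝ) ≤
        ((Bf.filter fun x => f x = c).card : ℝ) * ((Bf.filter fun x => f x = c).card : ℝ) := by
      exact_mod_cast key c
    have hk0 : (0:ℝ) ≤ ((Bf.filter fun x => f x = c).card : ℝ) := Nat.cast_nonneg _
    nlinarith
  have hsumB : (∑ c ∈ T.image f, ((Bf.filter fun x => f x = c).card : ℝ)) ≤ (Bf.card : ℝ) := by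
    exact_mod_cast fiber_sum_le (T.image f) Bf f
  calc (T.card : ℝ) = ∑ c ∈ T.image f, ((T.filter fun p => f p = c).card : ℝ) := by
        rw [hcard]; push_cast; ring
    _ ≤ ∑ c ∈ T.image f, θ * ((Bf.filter fun x => f x = c).card : ℝ) / 2 :=
        Finset.sum_le_sum h4
    _ = (θ/2) * ∑ c ∈ T.image f, ((Bf.filter fun x => f x = c).card : ℝ) := by
        rw [Finset.mul_sum]; apply Finset.sum_congr rfl; intro c _; ring
    _ ≤ (θ/2) * (Bf.card : ℝ) := by
        apply mul_le_mul_of_nonneg_left hsumB; linarith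
    _ = θ * Bf.card / 2 := by ring

/-- There are at most `|Bf| / θ` fat lines. -/
private lemma fat_count (Bf : Finset (ℝ × ℝ)) (f : ℝ × ℝ → ℝ) {θ : ℝ} (hθ : 0 < θ) :
    ((((Bf.image f).filter fun c => θ < ((Bf.filter fun x => f x = c).card : ℝ)).card : ℝ)) * θ
      ≤ (Bf.card : ℝ) := by
  classical
  have h1 : ∀ c ∈ (Bf.image f).filter fun c => θ < ((Bf.filter fun x => f x = c).card : ℝ),
      θ ≤ ((Bf.filter fun x => f x = c).card : ℝ) :=
    fun c hc => le_of_lt (Finset.mem_filter.mp hc).2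
  have h2 : ((((Bf.image f).filter fun c => θ < ((Bf.filter fun x => f x = c).card : ℝ)).card : ℝ)) * θ
      = ∑ _c ∈ (Bf.image f).filter fun c => θ < ((Bf.filter fun x => f x = c).card : ℝ), θ := by
    rw [Finset.sum_const, nsmul_eq_mul]
  rw [h2]
  calc ∑ c ∈ (Bf.image f).filter fun c => θ < ((Bf.filter fun x => f x = c).card : ℝ), θ
      ≤ ∑ c ∈ (Bf.image f).filter fun c => θ < ((Bf.filter fun x => f x = c).card : ℝ),
        ((Bf.filter fun x => f x = c).card : ℝ) := Finset.sum_le_sum h1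
    _ ≤ (Bf.card : ℝ) := by
        exact_mod_cast fiber_sum_le _ Bf f

set_option maxHeartbeats 4000000 in
theorem stmt12 (B : Set (ℝ × ℝ)) (hB : B.Finite) (S : Set (ℝ × ℝ))
    (hS : S = {p : ℝ × ℝ | ∃ r > (0:ℝ), sqVertices p r ⊆ B}) :
    S.Finite ∧ (S.ncard : ℝ) ≤ (2 * (B.ncard : ℝ)) ^ ((4:ℝ) / 3) := by
  classical
  have hSsub : S ⊆ (fun q : (ℝ × ℝ) × (ℝ × ℝ) =>
      ((q.1.1 + q.2.1)/2, (q.1.2 + q.2.2)/2)) '' (B ×ˢ B) := by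
    rw [hS]
    rintro p ⟨r, hr, hsq⟩
    refine ⟨((p.1 - r, p.2 - r), (p.1 + r, p.2 + r)),
      ⟨hsq (by simp [sqVertices]), hsq (by simp [sqVertices])⟩, ?_⟩
    dsimp only
    rw [Prod.ext_iff]
    constructor <;> simp <;> ring
  have hSfin : S.Finite := ((hB.prod hB).image _).subset hSsub
  refine ⟨hSfin, ?_⟩
  by_cases hBe : B = ∅
  · have hSe : S = ∅ := by
      rw [Set.eq_empty_iff_forall_notMem]
      intro p hp
      rw [hS] at hp
      obtain ⟨r, hr, hsq⟩ := hp
      have := hsq (show (p.1 - r, p.2 - r) ∈ sqVertices p r by simp [sqVertices])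
      rw [hBe] at this
      exact this
    rw [hSe, hBe]
    simp only [Set.ncard_empty, Nat.cast_zero, mul_zero]
    rw [Real.zero_rpow (by norm_num)]
  -- main case
  set Bf := hB.toFinset with hBf
  set Sf := hSfin.toFinset with hSf
  have hcardS : (S.ncard : ℝ) = (Sf.card : ℝ) := by
    rw [Set.ncard_eq_toFinset_card S hSfin]
  have hcardB : (B.ncard : ℝ) = (Bf.card : ℝ) := by
    rw [Set.ncard_eq_toFinset_card B hB]
  set N : ℝ := (Bf.card : ℝ) with hN
  have hN1 : 1 ≤ N := by
    have hne : Bf.Nonempty := by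
      rw [hBf, Set.Finite.toFinset_nonempty]
      exact Set.nonempty_iff_ne_empty.mpr hBe
    have := Finset.card_pos.mpr hne
    rw [hN]; exact_mod_cast this
  have hx : (0:ℝ) < 2 * N := by linarith
  set θ : ℝ := (2 * N) ^ ((1:ℝ)/3) with hθdef
  have hθpos : 0 < θ := Real.rpow_pos_of_pos hx _
  -- choose radii
  have hex : ∀ p ∈ Sf, ∃ rr, 0 < rr ∧ sqVertices p rr ⊆ B := by
    intro p hp
    rw [hSf, Set.Finite.mem_toFinset, hS] at hp
    obtain ⟨rr, h1, h2⟩ := hp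
    exact ⟨rr, h1, h2⟩
  choose! rad hrad hsqB using hex
  have hmemB : ∀ p ∈ Sf, ∀ q ∈ sqVertices p (rad p), q ∈ Bf := by
    intro p hp q hq
    rw [hBf, Set.Finite.mem_toFinset]
    exact hsqB p hp hq
  set dg : ℝ × ℝ → ℝ := fun p => p.1 - p.2 with hdg
  set sg : ℝ × ℝ → ℝ := fun p => p.1 + p.2 with hsg
  -- the three parts
  set T1 := Sf.filter (fun p => ((Bf.filter fun x => dg x = dg p).card : ℝ) ≤ θ) with hT1
  set T2 := Sf.filter (fun p => ¬(((Bf.filter fun x => dg x = dg p).card : ℝ) ≤ θ) ∧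
      ((Bf.filter fun x => sg x = sg p).card : ℝ) ≤ θ) with hT2
  set T3 := Sf.filter (fun p => ¬(((Bf.filter fun x => dg x = dg p).card : ℝ) ≤ θ) ∧
      ¬(((Bf.filter fun x => sg x = sg p).card : ℝ) ≤ θ)) with hT3
  have hcover : Sf ⊆ T1 ∪ T2 ∪ T3 := by
    intro p hp
    by_cases h1 : ((Bf.filter fun x => dg x = dg p).card : ℝ) ≤ θ
    · exact Finset.mem_union_left _ (Finset.mem_union_left _
        (by rw [hT1]; exact Finset.mem_filter.mpr ⟨hp, h1⟩))
    · by_cases h2 : ((Bf.filter fun x => sg x = sg p).card : ℝ) ≤ θ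
      · exact Finset.mem_union_left _ (Finset.mem_union_right _
          (by rw [hT2]; exact Finset.mem_filter.mpr ⟨hp, h1, h2⟩))
      · exact Finset.mem_union_right _
          (by rw [hT3]; exact Finset.mem_filter.mpr ⟨hp, h1, h2⟩)
  have hT1b : (T1.card : ℝ) ≤ θ * N / 2 := by
    apply thin_bound Bf T1 dg sg
      (fun p => (p.1 - rad p, p.2 - rad p)) (fun p => (p.1 + rad p, p.2 + rad p))
      θ (le_of_lt hθpos)
    · intro p hp
      rw [hT1] at hp
      exact hmemB p (Finset.mem_filter.mp hp).1 _ (by simp [sqVertices])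
    · intro p hp
      rw [hT1] at hp
      exact hmemB p (Finset.mem_filter.mp hp).1 _ (by simp [sqVertices])
    · intro p hp; simp only [hdg]; ring
    · intro p hp; simp only [hdg]; ring
    · intro p hp
      rw [hT1] at hp
      have := hrad p (Finset.mem_filter.mp hp).1
      simp only [hsg]
      linarith
    · intro p hp q hq h1 h2
      simp only [Prod.mk.injEq] at h1 h2
      rw [Prod.ext_iff]
      constructor <;> linarith [h1.1, h1.2, h2.1, h2.2]
    · intro p hp
      rw [hT1] at hp
      exact (Finset.mem_filter.mp hp).2
  have hT2b : (T2.card : ℝ) ≤ θ * N / 2 := by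
    apply thin_bound Bf T2 sg dg
      (fun p => (p.1 - rad p, p.2 + rad p)) (fun p => (p.1 + rad p, p.2 - rad p))
      θ (le_of_lt hθpos)
    · intro p hp
      rw [hT2] at hp
      exact hmemB p (Finset.mem_filter.mp hp).1 _ (by simp [sqVertices])
    · intro p hp
      rw [hT2] at hp
      exact hmemB p (Finset.mem_filter.mp hp).1 _ (by simp [sqVertices])
    · intro p hp; simp only [hsg]; ring
    · intro p hp; simp only [hsg]; ring
    · intro p hp
      rw [hT2] at hp
      have := hrad p (Finset.mem_filter.mp hp).1
      simp only [hdg]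
      linarith
    · intro p hp q hq h1 h2
      simp only [Prod.mk.injEq] at h1 h2
      rw [Prod.ext_iff]
      constructor <;> linarith [h1.1, h1.2, h2.1, h2.2]
    · intro p hp
      rw [hT2] at hp
      exact (Finset.mem_filter.mp hp).2.2
  -- fat-fat part
  set Fd := (Bf.image dg).filter (fun c => θ < ((Bf.filter fun x => dg x = c).card : ℝ)) with hFd
  set Fs := (Bf.image sg).filter (fun c => θ < ((Bf.filter fun x => sg x = c).card : ℝ)) with hFs
  have hT3b : (T3.card : ℝ) ≤ (Fd.card : ℝ) * (Fs.card : ℝ) := by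
    have hinj : (T3.image (fun p => (dg p, sg p))).card = T3.card := by
      apply Finset.card_image_of_injOn
      intro p hp q hq hpq
      simp only [Prod.mk.injEq, hdg, hsg] at hpq
      rw [Prod.ext_iff]
      constructor <;> linarith [hpq.1, hpq.2]
    have hsub : T3.image (fun p => (dg p, sg p)) ⊆ Fd ×ˢ Fs := by
      intro z hz
      obtain ⟨p, hp, rfl⟩ := Finset.mem_image.mp hz
      rw [hT3] at hp
      have hpS := (Finset.mem_filter.mp hp).1
      have hprop := (Finset.mem_filter.mp hp).2
      rw [Finset.mem_product]
      constructor
      · rw [hFd, Finset.mem_filter]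
        refine ⟨Finset.mem_image.mpr ⟨(p.1 - rad p, p.2 - rad p),
          hmemB p hpS _ (by simp [sqVertices]), by simp only [hdg]; ring⟩, ?_⟩
        exact lt_of_not_ge hprop.1
      · rw [hFs, Finset.mem_filter]
        refine ⟨Finset.mem_image.mpr ⟨(p.1 - rad p, p.2 + rad p),
          hmemB p hpS _ (by simp [sqVertices]), by simp only [hsg]; ring⟩, ?_⟩
        exact lt_of_not_ge hprop.2
    calc (T3.card : ℝ) = ((T3.image (fun p => (dg p, sg p))).card : ℝ) := by rw [hinj]
      _ ≤ ((Fd ×ˢ Fs).card : ℝ) := by exact_mod_cast Finset.card_le_card hsub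
      _ = (Fd.card : ℝ) * (Fs.card : ℝ) := by rw [Finset.card_product]; push_cast; ring
  have hFdb : (Fd.card : ℝ) ≤ N / θ := by
    rw [le_div_iff₀ hθpos]
    exact fat_count Bf dg hθpos
  have hFsb : (Fs.card : ℝ) ≤ N / θ := by
    rw [le_div_iff₀ hθpos]
    exact fat_count Bf sg hθpos
  have hT3b' : (T3.card : ℝ) ≤ (N/θ) * (N/θ) := by
    have h1 : (0:ℝ) ≤ (Fs.card : ℝ) := Nat.cast_nonneg _
    have h2 : (0:ℝ) ≤ (Fd.card : ℝ) := Nat.cast_nonneg _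
    have h3 : (0:ℝ) ≤ N/θ := by positivity
    nlinarith [hT3b]
  -- total count
  have h0 : Sf.card ≤ T1.card + T2.card + T3.card := by
    calc Sf.card ≤ (T1 ∪ T2 ∪ T3).card := Finset.card_le_card hcover
      _ ≤ (T1 ∪ T2).card + T3.card := Finset.card_union_le _ _
      _ ≤ T1.card + T2.card + T3.card := by
          have := Finset.card_union_le T1 T2; omega
  have htot : (Sf.card : ℝ) ≤ θ * N / 2 + θ * N / 2 + (N/θ) * (N/θ) := by
    have h0' : (Sf.card : ℝ) ≤ (T1.card : ℝ) + (T2.card : ℝ) + (T3.card : ℝ) := by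
      exact_mod_cast h0
    linarith
  -- rpow arithmetic
  set X := (2*N) ^ ((4:ℝ)/3) with hXdef
  have hXpos : 0 < X := Real.rpow_pos_of_pos hx _
  have hX : θ * (2*N) = X := by
    rw [hθdef, hXdef]
    nth_rewrite 2 [show (2*N) = (2*N) ^ ((1:ℝ)) by rw [Real.rpow_one]]
    rw [← Real.rpow_add hx]
    norm_num
  have hθsq : θ * θ = (2*N) ^ ((2:ℝ)/3) := by
    rw [hθdef, ← Real.rpow_add hx]
    norm_num
  have hθ3 : θ * θ * θ = 2*N := by
    rw [hθdef, ← Real.rpow_add hx, ← Real.rpow_add hx]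
    norm_num
  have e1 : θ * N = X / 2 := by
    have h2' : 2*(θ*N) = X := by rw [← hX]; ring
    linarith
  have e2 : (N/θ) * (N/θ) = X / 4 := by
    rw [div_mul_div_comm, div_eq_div_iff (by positivity) (by norm_num : (4:ℝ) ≠ 0)]
    calc (N*N)*4 = (2*N)*(2*N) := by ring
      _ = (θ*θ*θ)*(2*N) := by rw [hθ3]
      _ = X*(θ*θ) := by rw [← hX]; ring
  rw [hcardS, hcardB, ← hXdef]
  calc (Sf.card : ℝ) ≤ θ * N / 2 + θ * N / 2 + (N/θ) * (N/θ) := htot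
    _ = θ * N + (N/θ) * (N/θ) := by ring
    _ = X/2 + X/4 := by rw [e1, e2]
    _ ≤ X := by linarith
end

section
/- There exists a constant c > 0 such that for every n ∈ ℕ there exist finite sets B, S ⊂ ℝ² with |S| ≥ n, such that for every (x,y) ∈ S there exists r > 0 with (x−r, y−r), (x+r, y−r), (x−r, y+r), (x+r, y+r) ∈ B, and such that |S| ≥ c·|B|^{4/3}. -/
open Finset

lemma Finset.card_image_product_le {α β γ δ ε : Type*} [DecidableEq γ] [DecidableEq δ]
    [DecidableEq ε] (s : Finset α) (t : Finset β) (f : α → γ) (h : β → δ) (g : γ → δ → ε) :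
    #((s ×ˢ t).image fun p => g (f p.1) (h p.2)) ≤ #(s.image f) * #(t.image h) := by
  calc #((s ×ˢ t).image fun p => g (f p.1) (h p.2))
      ≤ #((s.image f ×ˢ t.image h).image fun p => g p.1 p.2) := by
        refine card_le_card (image_subset_iff.mpr fun p hp => ?_)
        rw [mem_product] at hp
        exact mem_image.mpr ⟨(f p.1, h p.2),
          mem_product.mpr ⟨mem_image_of_mem f hp.1, mem_image_of_mem h hp.2⟩, rfl⟩
    _ ≤ #(s.image f) * #(t.image h) := card_image_le.trans (card_product _ _).le

section RotatedGrid

variable {ι : Type*} (I : Finset ι) (x ρ : ι → ℝ)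

noncomputable def rotatedGrid : Finset (ℝ × ℝ) :=
  (I ×ˢ I).image fun p => (x p.1 + x p.2, x p.1 - x p.2)

noncomputable def crossCorners (d e : ι → ℝ) : Finset (ℝ × ℝ) :=
  (I ×ˢ I).image (fun p => (d p.1 + d p.2, d p.1 - e p.2)) ∪
  (I ×ˢ I).image (fun p => (e p.1 + e p.2, d p.1 - e p.2)) ∪
  (I ×ˢ I).image (fun p => (d p.1 + d p.2, e p.1 - d p.2)) ∪
  (I ×ˢ I).image (fun p => (e p.1 + e p.2, e p.1 - d p.2))

variable {I x}

lemma card_rotatedGrid (hx : Set.InjOn x I) : #(rotatedGrid I x) = #I ^ 2 := by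
  rw [rotatedGrid, card_image_of_injOn, card_product, sq]
  rintro ⟨i, j⟩ hij ⟨i', j'⟩ hij' h
  simp only [coe_product, Set.mem_prod, mem_coe, Prod.mk.injEq] at hij hij' h ⊢
  exact ⟨hx hij.1 hij'.1 (by linarith), hx hij.2 hij'.2 (by linarith)⟩

lemma card_crossCorners_le (d e : ι → ℝ) :
    #(crossCorners I d e) ≤ 2 * #I * (#(I.image d) + #(I.image e)) := by
  classical
  have h₁ := card_image_product_le I I d id fun a j => (a + d j, a - e j)
  have h₂ := card_image_product_le I I id e fun i b => (e i + b, d i - b)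
  have h₃ := card_image_product_le I I id d fun i b => (d i + b, e i - b)
  have h₄ := card_image_product_le I I e id fun a j => (a + e j, a - d j)
  rw [image_id] at h₁ h₂ h₃ h₄
  calc #(crossCorners I d e)
      ≤ #(I.image d) * #I + #I * #(I.image e) + #I * #(I.image d) + #(I.image e) * #I := by
        refine (card_union_le _ _).trans (add_le_add ((card_union_le _ _).trans
          (add_le_add ((card_union_le _ _).trans (add_le_add h₁ h₂)) h₃)) h₄)
    _ = 2 * #I * (#(I.image d) + #(I.image e)) := by ring

variable (x)

lemma sqVertices_subset_crossCorners {i j : ι} (hi : i ∈ I) (hj : j ∈ I) :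
    sqVertices (x i + x j, x i - x j) (ρ i + ρ j) ⊆ crossCorners I (x - ρ) (x + ρ) := by
  have hij : (i, j) ∈ I ×ˢ I := mem_product.mpr ⟨hi, hj⟩
  simp only [sqVertices, crossCorners, Set.insert_subset_iff, Set.singleton_subset_iff, coe_union,
    Set.mem_union, mem_coe, Pi.sub_apply, Pi.add_apply]
  refine ⟨.inl (.inl (.inl ?_)), .inl (.inl (.inr ?_)), .inl (.inr ?_), .inr ?_⟩ <;>
    exact mem_image.mpr ⟨(i, j), hij, by ext <;> dsimp only <;> ring⟩

lemma exists_sqVertices_subset_crossCorners (hρ : ∀ i ∈ I, 0 < ρ i) :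
    ∀ p ∈ rotatedGrid I x, ∃ r > 0, sqVertices p r ⊆ crossCorners I (x - ρ) (x + ρ) := by
  simp only [rotatedGrid, mem_image, mem_product]
  rintro _ ⟨⟨i, j⟩, ⟨hi, hj⟩, rfl⟩
  exact ⟨ρ i + ρ j, add_pos (hρ i hi) (hρ j hj), sqVertices_subset_crossCorners x ρ hi hj⟩

end RotatedGrid

section Digits

variable (q : ℕ)

noncomputable def digitValue (p : ℕ × ℕ) : ℝ := q * p.1 + p.2

noncomputable def digitRadius (p : ℕ × ℕ) : ℝ := q * p.1 - p.2 + q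

lemma injOn_digitValue : Set.InjOn (digitValue q) ↑(range q ×ˢ range q) := by
  rintro ⟨k, l⟩ hkl ⟨k', l'⟩ hkl' h
  simp only [coe_product, Set.mem_prod, coe_range, Set.mem_Iio] at hkl hkl'
  simp only [digitValue] at h
  have h' : q * k + l = q * k' + l' := by exact_mod_cast h
  have hq : 0 < q := by omega
  have hk : k = k' :=
    calc k = (q * k + l) / q := by rw [Nat.mul_add_div hq, Nat.div_eq_of_lt hkl.2, add_zero]
      _ = (q * k' + l') / q := by rw [h']
      _ = k' := by rw [Nat.mul_add_div hq, Nat.div_eq_of_lt hkl'.2, add_zero]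
  subst hk
  exact Prod.ext rfl (by omega)

lemma digitRadius_pos : ∀ p ∈ range q ×ˢ range q, 0 < digitRadius q p := by
  rintro ⟨k, l⟩ hkl
  rw [mem_product, mem_range, mem_range] at hkl
  have hl : (l : ℝ) < q := by exact_mod_cast hkl.2
  have hk : (0 : ℝ) ≤ q * k := by positivity
  simp only [digitRadius]
  linarith

lemma card_image_digitValue_sub_digitRadius_le :
    #((range q ×ˢ range q).image (digitValue q - digitRadius q)) ≤ q := by
  have h : digitValue q - digitRadius q = fun p => 2 * (p.2 : ℝ) - q := by
    funext p; simp only [digitValue, digitRadius, Pi.sub_apply]; ring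
  rw [h]
  refine (card_le_card (image_subset_iff.mpr fun p hp => ?_)).trans
    ((card_image_le (s := range q) (f := fun l : ℕ => 2 * (l : ℝ) - q)).trans (card_range q).le)
  exact mem_image_of_mem (fun l : ℕ => 2 * (l : ℝ) - q) (mem_product.mp hp).2

lemma card_image_digitValue_add_digitRadius_le :
    #((range q ×ˢ range q).image (digitValue q + digitRadius q)) ≤ q := by
  have h : digitValue q + digitRadius q = fun p => 2 * q * (p.1 : ℝ) + q := by
    funext p; simp only [digitValue, digitRadius, Pi.add_apply]; ring
  rw [h]
  refine (card_le_card (image_subset_iff.mpr fun p hp => ?_)).trans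
    ((card_image_le (s := range q) (f := fun k : ℕ => 2 * q * (k : ℝ) + q)).trans (card_range q).le)
  exact mem_image_of_mem (fun k : ℕ => 2 * q * (k : ℝ) + q) (mem_product.mp hp).1

end Digits

lemma rpow_four_div_three_le {b t : ℝ} (hb : 0 ≤ b) (ht : 0 ≤ t) (h : b ≤ t ^ 3) :
    b ^ ((4 : ℝ) / 3) ≤ t ^ 4 := by
  calc b ^ ((4 : ℝ) / 3) ≤ (t ^ 3) ^ ((4 : ℝ) / 3) := Real.rpow_le_rpow hb h (by norm_num)
    _ = t ^ 4 := by
      rw [← Real.rpow_natCast t 3, ← Real.rpow_mul ht]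
      norm_num

theorem stmt13 : ∃ c : ℝ, 0 < c ∧ ∀ n : ℕ, ∃ B S : Finset (ℝ × ℝ),
    n ≤ S.card ∧
    (∀ p ∈ S, ∃ r > (0:ℝ), sqVertices p r ⊆ (B : Set (ℝ × ℝ))) ∧
    c * (B.card : ℝ) ^ ((4:ℝ) / 3) ≤ (S.card : ℝ) := by
  refine ⟨1 / 16, by norm_num, fun n => ?_⟩
  set q := n + 1
  set I := range q ×ˢ range q
  set B := crossCorners I (digitValue q - digitRadius q) (digitValue q + digitRadius q)
  have hS : #(rotatedGrid I (digitValue q)) = q ^ 4 := by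
    rw [card_rotatedGrid (injOn_digitValue q), card_product, card_range]; ring
  have hB : (#B : ℝ) ≤ (2 * q : ℝ) ^ 3 := by
    have := (card_crossCorners_le (I := I) _ _).trans <| Nat.mul_le_mul_left (2 * #I) <| add_le_add
      (card_image_digitValue_sub_digitRadius_le q) (card_image_digitValue_add_digitRadius_le q)
    rw [card_product, card_range] at this
    exact_mod_cast this.trans (by ring_nf; exact Nat.mul_le_mul_left _ (by norm_num))
  refine ⟨B, _, ?_, exists_sqVertices_subset_crossCorners (digitValue q) _ (digitRadius_pos q), ?_⟩
  · rw [hS]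
    exact (Nat.le_succ n).trans (Nat.le_self_pow (by norm_num) q)
  · have := rpow_four_div_three_le (Nat.cast_nonneg _) (by positivity) hB
    rw [hS]
    push_cast
    linarith
end

section
/- There exists a constant c > 0 such that the following holds: for every finite set B ⊂ ℤ², if S = {s ∈ ℤ² : there exists an integer r ≥ 1 such that the discrete square boundary with center s and radius r is contained in B} and |S| ≥ 2, then |B| ≥ c·(|S| / log |S|)^{7/8}. -/
/-- The discrete square boundary with center `s` and radius `r`. -/
def discSqBdry (s : ℤ × ℤ) (r : ℤ) : Set (ℤ × ℤ) :=
  {p : ℤ × ℤ | max |p.1 - s.1| |p.2 - s.2| = r}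

open Pointwise

set_option maxHeartbeats 1000000

/-- richness: number of rich fibers times threshold is at most the total. -/
lemma rich_mul_le (A : Finset (ℤ × ℤ)) (g : ℤ × ℤ → ℤ) (k : ℕ) :
    (((A.image g).filter (fun y => k ≤ (A.filter (fun p => g p = y)).card)).card) * k ≤ A.card := by
  classical
  have h : A.card = ∑ y ∈ A.image g, (A.filter (fun p => g p = y)).card :=
    Finset.card_eq_sum_card_fiberwise (fun x hx => Finset.mem_image_of_mem g hx)
  set T := (A.image g).filter (fun y => k ≤ (A.filter (fun p => g p = y)).card) with hT
  have h2 : ∑ _y ∈ T, k ≤ ∑ y ∈ T, (A.filter (fun p => g p = y)).card :=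
    Finset.sum_le_sum (fun y hy => (Finset.mem_filter.mp hy).2)
  have h3 : ∑ y ∈ T, (A.filter (fun p => g p = y)).card
      ≤ ∑ y ∈ A.image g, (A.filter (fun p => g p = y)).card :=
    Finset.sum_le_sum_of_subset (Finset.filter_subset _ _)
  have h4 : ∑ _y ∈ T, k = T.card * k := by
    rw [Finset.sum_const, smul_eq_mul]
  omega

lemma sum_sq_le {ι : Type*} (s : Finset ι) (f : ι → ℕ) :
    ∑ i ∈ s, (f i)^2 ≤ (∑ i ∈ s, f i)^2 := by
  classical
  have : ∑ i ∈ s, (f i)^2 ≤ ∑ i ∈ s, f i * (∑ j ∈ s, f j) := by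
    refine Finset.sum_le_sum (fun i hi => ?_)
    have : f i ≤ ∑ j ∈ s, f j := Finset.single_le_sum (fun j _ => Nat.zero_le _) hi
    calc (f i)^2 = f i * f i := sq (f i) ▸ rfl
    _ ≤ f i * ∑ j ∈ s, f j := Nat.mul_le_mul_left _ this
  rwa [← Finset.sum_mul, ← sq] at this


lemma class_bound (Bf Sf : Finset (ℤ × ℤ)) (rad : ℤ × ℤ → ℤ) (Rn : ℕ) (hRn : 1 ≤ Rn)
    (hcls : ∀ s ∈ Sf, (Rn : ℤ) ≤ rad s ∧ rad s < 2 * (Rn : ℤ))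
    (hbd : ∀ s ∈ Sf, ∀ p : ℤ × ℤ, max |p.1 - s.1| |p.2 - s.2| = rad s → p ∈ Bf) :
    Sf.card ^ 14 ≤ 5159780352 ^ 3 * 78732 * Bf.card ^ 16 := by
  classical
  set m := Bf.card with hm
  set W : ℤ := 8 * (Rn : ℤ) with hW
  have hWpos : 0 < W := by
    have : (1 : ℤ) ≤ (Rn : ℤ) := by exact_mod_cast hRn
    omega
  set tile : ℤ × ℤ → ℤ × ℤ := fun s => (s.1 / W, s.2 / W) with htile
  have hbox : ∀ s : ℤ × ℤ, W * (tile s).1 ≤ s.1 ∧ s.1 < W * (tile s).1 + W ∧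
      W * (tile s).2 ≤ s.2 ∧ s.2 < W * (tile s).2 + W := by
    intro s
    have e1 : W * (s.1 / W) + s.1 % W = s.1 := Int.mul_ediv_add_emod s.1 W
    have e2 : W * (s.2 / W) + s.2 % W = s.2 := Int.mul_ediv_add_emod s.2 W
    have p1 : 0 ≤ s.1 % W := Int.emod_nonneg s.1 (by omega)
    have p2 : 0 ≤ s.2 % W := Int.emod_nonneg s.2 (by omega)
    have q1 : s.1 % W < W := Int.emod_lt_of_pos s.1 hWpos
    have q2 : s.2 % W < W := Int.emod_lt_of_pos s.2 hWpos
    simp only [htile]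
    omega
  set nb : ℤ × ℤ → Finset (ℤ × ℤ) := fun i => Bf.filter (fun p =>
      W * (i.1 - 1) ≤ p.1 ∧ p.1 < W * (i.1 + 2) ∧ W * (i.2 - 1) ≤ p.2 ∧ p.2 < W * (i.2 + 2)) with hnb
  set Fb : ℤ × ℤ → Finset (ℤ × ℤ) := fun i => Sf.filter (fun s => tile s = i) with hFb
  set I := Sf.image tile with hI
  set Tr : ℤ × ℤ → Finset ℤ := fun i => (((nb i).image Prod.snd).filter
      (fun y => 2 * Rn + 1 ≤ ((nb i).filter (fun p => p.2 = y)).card)) with hTr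
  set Cc : ℤ × ℤ → Finset ℤ := fun i => (((nb i).image Prod.fst).filter
      (fun x => 2 * Rn + 1 ≤ ((nb i).filter (fun p => p.1 = x)).card)) with hCc

  have hrowmem : ∀ i, ∀ s ∈ Fb i, ∀ y : ℤ, |y - s.2| = rad s → y ∈ Tr i := by
    intro i s hs y hy
    have hsSf : s ∈ Sf := (Finset.mem_filter.mp hs).1
    have hti : tile s = i := (Finset.mem_filter.mp hs).2
    obtain ⟨hr1, hr2⟩ := hcls s hsSf
    have hyle : y - s.2 ≤ rad s := hy ▸ le_abs_self _
    have hyge : -(y - s.2) ≤ rad s := hy ▸ neg_le_abs _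
    have hb := hbox s
    rw [hti] at hb
    have hedge : ∀ x : ℤ, s.1 - rad s ≤ x → x ≤ s.1 + rad s →
        (x, y) ∈ (nb i).filter (fun p => p.2 = y) := by
      intro x h1 h2
      have habs : |x - s.1| ≤ rad s := abs_le.mpr ⟨by omega, by omega⟩
      have hmax : max |x - s.1| |y - s.2| = rad s := by rw [hy]; exact max_eq_right habs
      have hxB : (x, y) ∈ Bf := hbd s hsSf (x, y) hmax
      refine Finset.mem_filter.mpr ⟨Finset.mem_filter.mpr ⟨hxB, ?_⟩, rfl⟩
      have e1 : W * (i.1 - 1) = W * i.1 - W := by ring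
      have e2 : W * (i.1 + 2) = W * i.1 + 2 * W := by ring
      have e3 : W * (i.2 - 1) = W * i.2 - W := by ring
      have e4 : W * (i.2 + 2) = W * i.2 + 2 * W := by ring
      refine ⟨?_, ?_, ?_, ?_⟩ <;> · show _; omega
    have hcard : 2 * Rn + 1 ≤ ((nb i).filter (fun p => p.2 = y)).card := by
      have hinj : ((Finset.Icc (s.1 - rad s) (s.1 + rad s)).image (fun x => ((x, y) : ℤ × ℤ))).card
          = (Finset.Icc (s.1 - rad s) (s.1 + rad s)).card :=
        Finset.card_image_of_injective _ (fun a b hab => by simpa using congrArg Prod.fst hab)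
      have hsub : (Finset.Icc (s.1 - rad s) (s.1 + rad s)).image (fun x => ((x, y) : ℤ × ℤ))
          ⊆ (nb i).filter (fun p => p.2 = y) := by
        intro p hp
        obtain ⟨x, hx, rfl⟩ := Finset.mem_image.mp hp
        obtain ⟨h1, h2⟩ := Finset.mem_Icc.mp hx
        exact hedge x h1 h2
      have hc := Finset.card_le_card hsub
      rw [hinj, Int.card_Icc] at hc
      omega
    have hymem : y ∈ (nb i).image Prod.snd := by
      refine Finset.mem_image.mpr ⟨(s.1, y), ?_, rfl⟩
      exact (Finset.mem_filter.mp (hedge s.1 (by omega) (by omega))).1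
    exact Finset.mem_filter.mpr ⟨hymem, hcard⟩

  have hcolmem : ∀ i, ∀ s ∈ Fb i, ∀ x : ℤ, |x - s.1| = rad s → x ∈ Cc i := by
    intro i s hs x hx
    have hsSf : s ∈ Sf := (Finset.mem_filter.mp hs).1
    have hti : tile s = i := (Finset.mem_filter.mp hs).2
    obtain ⟨hr1, hr2⟩ := hcls s hsSf
    have hxle : x - s.1 ≤ rad s := hx ▸ le_abs_self _
    have hxge : -(x - s.1) ≤ rad s := hx ▸ neg_le_abs _
    have hb := hbox s
    rw [hti] at hb
    have hedge : ∀ y : ℤ, s.2 - rad s ≤ y → y ≤ s.2 + rad s →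
        (x, y) ∈ (nb i).filter (fun p => p.1 = x) := by
      intro y h1 h2
      have habs : |y - s.2| ≤ rad s := abs_le.mpr ⟨by omega, by omega⟩
      have hmax : max |x - s.1| |y - s.2| = rad s := by rw [hx]; exact max_eq_left habs
      have hxB : (x, y) ∈ Bf := hbd s hsSf (x, y) hmax
      refine Finset.mem_filter.mpr ⟨Finset.mem_filter.mpr ⟨hxB, ?_⟩, rfl⟩
      have e1 : W * (i.1 - 1) = W * i.1 - W := by ring
      have e2 : W * (i.1 + 2) = W * i.1 + 2 * W := by ring
      have e3 : W * (i.2 - 1) = W * i.2 - W := by ring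
      have e4 : W * (i.2 + 2) = W * i.2 + 2 * W := by ring
      refine ⟨?_, ?_, ?_, ?_⟩ <;> · show _; omega
    have hcard : 2 * Rn + 1 ≤ ((nb i).filter (fun p => p.1 = x)).card := by
      have hinj : ((Finset.Icc (s.2 - rad s) (s.2 + rad s)).image (fun y => ((x, y) : ℤ × ℤ))).card
          = (Finset.Icc (s.2 - rad s) (s.2 + rad s)).card :=
        Finset.card_image_of_injective _ (fun a b hab => by simpa using congrArg Prod.snd hab)
      have hsub : (Finset.Icc (s.2 - rad s) (s.2 + rad s)).image (fun y => ((x, y) : ℤ × ℤ))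
          ⊆ (nb i).filter (fun p => p.1 = x) := by
        intro p hp
        obtain ⟨y, hy2, rfl⟩ := Finset.mem_image.mp hp
        obtain ⟨h1, h2⟩ := Finset.mem_Icc.mp hy2
        exact hedge y h1 h2
      have hc := Finset.card_le_card hsub
      rw [hinj, Int.card_Icc] at hc
      omega
    have hxmem : x ∈ (nb i).image Prod.fst := by
      refine Finset.mem_image.mpr ⟨(x, s.2), ?_, rfl⟩
      exact (Finset.mem_filter.mp (hedge s.2 (by omega) (by omega))).1
    exact Finset.mem_filter.mpr ⟨hxmem, hcard⟩

  set w := Nat.sqrt (48 * Rn) with hw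
  -- per-box key bound via diagonal fibers and sumsets
  have hkey : ∀ i, (Fb i).card ≤ (w + 1) * ((Cc i).card * (Tr i).card) := by
    intro i
    set D := (Fb i).image (fun s => s.1 - s.2) with hD
    have hfib : (Fb i).card = ∑ d ∈ D, ((Fb i).filter (fun s => s.1 - s.2 = d)).card :=
      Finset.card_eq_sum_card_fiberwise (fun s hs => Finset.mem_image_of_mem _ hs)
    have hper : ∀ d ∈ D, ((Fb i).filter (fun s => s.1 - s.2 = d)).card
        ≤ (w + 1) * ((Cc i).filter (fun x => x - d ∈ Tr i)).card := by
      intro d _hd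
      set Cd := (Cc i).filter (fun x => x - d ∈ Tr i) with hCd
      have hGP : ((Fb i).filter (fun s => s.1 - s.2 = d)).card ≤ (Cd + Cd).card := by
        refine Finset.card_le_card_of_injOn (fun s => s.1 + s.1) ?_ ?_
        · intro s hs
          have hsF : s ∈ Fb i := (Finset.mem_filter.mp hs).1
          have hdd : s.1 - s.2 = d := (Finset.mem_filter.mp hs).2
          have hsSf : s ∈ Sf := (Finset.mem_filter.mp hsF).1
          obtain ⟨hr1, hr2⟩ := hcls s hsSf
          have hx1 : s.1 - rad s ∈ Cc i := by
            refine hcolmem i s hsF _ ?_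
            rw [show s.1 - rad s - s.1 = -(rad s) by ring, abs_neg, abs_of_nonneg (by omega)]
          have hx2 : s.1 + rad s ∈ Cc i := by
            refine hcolmem i s hsF _ ?_
            rw [show s.1 + rad s - s.1 = rad s by ring, abs_of_nonneg (by omega)]
          have hy1 : s.2 - rad s ∈ Tr i := by
            refine hrowmem i s hsF _ ?_
            rw [show s.2 - rad s - s.2 = -(rad s) by ring, abs_neg, abs_of_nonneg (by omega)]
          have hy2 : s.2 + rad s ∈ Tr i := by
            refine hrowmem i s hsF _ ?_
            rw [show s.2 + rad s - s.2 = rad s by ring, abs_of_nonneg (by omega)]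
          refine Finset.mem_coe.mpr (Finset.mem_add.mpr
            ⟨s.1 - rad s, ?_, s.1 + rad s, ?_, by ring⟩)
          · refine Finset.mem_filter.mpr ⟨hx1, ?_⟩
            rw [show s.1 - rad s - d = s.2 - rad s by omega]; exact hy1
          · refine Finset.mem_filter.mpr ⟨hx2, ?_⟩
            rw [show s.1 + rad s - d = s.2 + rad s by omega]; exact hy2
        · intro s hs t ht hst
          simp only [Finset.coe_filter, Set.mem_setOf_eq] at hs ht
          obtain ⟨-, hs2⟩ := hs
          obtain ⟨-, ht2⟩ := ht
          have hst' : s.1 + s.1 = t.1 + t.1 := hst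
          have h1 : s.1 = t.1 := by omega
          have h2 : s.2 = t.2 := by omega
          exact Prod.ext h1 h2
      have hP1 : (Cd + Cd).card ≤ Cd.card * Cd.card := Finset.card_add_le
      have hP2 : (Cd + Cd).card ≤ 48 * Rn := by
        have hbnd : ∀ u ∈ Cd, W * (i.1 - 1) ≤ u ∧ u ≤ W * (i.1 + 2) - 1 := by
          intro u hu
          have hu1 : u ∈ Cc i := (Finset.mem_filter.mp hu).1
          have hu2 : u ∈ (nb i).image Prod.fst := (Finset.mem_filter.mp hu1).1
          obtain ⟨p, hp, rfl⟩ := Finset.mem_image.mp hu2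
          have hnbp := (Finset.mem_filter.mp hp).2
          exact ⟨hnbp.1, by omega⟩
        have hsub : Cd + Cd ⊆ Finset.Icc (2 * (W * (i.1 - 1))) (2 * (W * (i.1 + 2)) - 2) := by
          intro z hz
          obtain ⟨a, ha, b, hb, rfl⟩ := Finset.mem_add.mp hz
          obtain ⟨ha1, ha2⟩ := hbnd a ha
          obtain ⟨hb1, hb2⟩ := hbnd b hb
          exact Finset.mem_Icc.mpr ⟨by omega, by omega⟩
        have hcle := Finset.card_le_card hsub
        rw [Int.card_Icc] at hcle
        have e1 : W * (i.1 - 1) = W * i.1 - W := by ring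
        have e2 : W * (i.1 + 2) = W * i.1 + 2 * W := by ring
        omega
      rcases le_or_gt Cd.card (w + 1) with hc | hc
      · exact le_trans hGP (le_trans hP1 (Nat.mul_le_mul_right _ hc))
      · have h48 : 48 * Rn < (w + 1) * (w + 1) := Nat.lt_succ_sqrt (48 * Rn)
        have h49 : (w + 1) * (w + 1) ≤ (w + 1) * Cd.card :=
          Nat.mul_le_mul_left _ (le_of_lt hc)
        omega
    have hCdsum : ∑ d ∈ D, ((Cc i).filter (fun x => x - d ∈ Tr i)).card
        ≤ (Cc i).card * (Tr i).card := by
      set U := D.biUnion (fun d => ((Cc i).filter (fun x => x - d ∈ Tr i)).image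
        (fun x => ((x, x - d) : ℤ × ℤ))) with hU
      have hdisj : ∀ d ∈ D, ∀ d' ∈ D, d ≠ d' →
          Disjoint (((Cc i).filter (fun x => x - d ∈ Tr i)).image (fun x => ((x, x - d) : ℤ × ℤ)))
            (((Cc i).filter (fun x => x - d' ∈ Tr i)).image (fun x => ((x, x - d') : ℤ × ℤ))) := by
        intro d _ d' _ hdd'
        rw [Finset.disjoint_left]
        intro q hq hq'
        obtain ⟨x, _, rfl⟩ := Finset.mem_image.mp hq
        obtain ⟨x', _, he⟩ := Finset.mem_image.mp hq'
        apply hdd'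
        have h1 : x' = x := by
          have := congrArg Prod.fst he; simpa using this
        have h2 := congrArg Prod.snd he
        simp only [h1] at h2
        omega
      have hcardU : U.card = ∑ d ∈ D, ((Cc i).filter (fun x => x - d ∈ Tr i)).card := by
        rw [hU, Finset.card_biUnion hdisj]
        refine Finset.sum_congr rfl (fun d _ => ?_)
        exact Finset.card_image_of_injective _ (fun a b hab => by simpa using congrArg Prod.fst hab)
      have hsub : U ⊆ (Cc i) ×ˢ (Tr i) := by
        intro q hq
        obtain ⟨d, _, hq2⟩ := Finset.mem_biUnion.mp hq
        obtain ⟨x, hx, rfl⟩ := Finset.mem_image.mp hq2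
        obtain ⟨hx1, hx2⟩ := Finset.mem_filter.mp hx
        exact Finset.mem_product.mpr ⟨hx1, hx2⟩
      have hle := Finset.card_le_card hsub
      rw [Finset.card_product] at hle
      omega
    calc (Fb i).card = ∑ d ∈ D, ((Fb i).filter (fun s => s.1 - s.2 = d)).card := hfib
      _ ≤ ∑ d ∈ D, (w + 1) * ((Cc i).filter (fun x => x - d ∈ Tr i)).card :=
          Finset.sum_le_sum hper
      _ = (w + 1) * ∑ d ∈ D, ((Cc i).filter (fun x => x - d ∈ Tr i)).card := by
          rw [Finset.mul_sum]
      _ ≤ (w + 1) * ((Cc i).card * (Tr i).card) := Nat.mul_le_mul_left _ hCdsum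

  -- area bound
  have harea : ∀ i, (Fb i).card ≤ 8 * Rn * (8 * Rn) := by
    intro i
    have hsub : Fb i ⊆ (Finset.Ico (W * i.1) (W * i.1 + W)) ×ˢ (Finset.Ico (W * i.2) (W * i.2 + W)) := by
      intro s hs
      have hti : tile s = i := (Finset.mem_filter.mp hs).2
      have hb := hbox s
      rw [hti] at hb
      exact Finset.mem_product.mpr ⟨Finset.mem_Ico.mpr ⟨hb.1, hb.2.1⟩,
        Finset.mem_Ico.mpr ⟨hb.2.2.1, hb.2.2.2⟩⟩
    have hle := Finset.card_le_card hsub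
    rw [Finset.card_product, Int.card_Ico, Int.card_Ico] at hle
    have h1 : (W * i.1 + W - W * i.1).toNat = 8 * Rn := by omega
    have h2 : (W * i.2 + W - W * i.2).toNat = 8 * Rn := by omega
    rw [h1, h2] at hle
    exact hle
  have hTrc : ∀ i, (Tr i).card * (2 * Rn + 1) ≤ (nb i).card :=
    fun i => rich_mul_le (nb i) Prod.snd (2 * Rn + 1)
  have hCcc : ∀ i, (Cc i).card * (2 * Rn + 1) ≤ (nb i).card :=
    fun i => rich_mul_le (nb i) Prod.fst (2 * Rn + 1)
  have hwsq : (w + 1) * (w + 1) ≤ 192 * Rn := by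
    have hw1 : 1 ≤ w := by
      rw [hw, Nat.le_sqrt]
      omega
    have hw2 : w * w ≤ 48 * Rn := Nat.sqrt_le (48 * Rn)
    nlinarith
  -- per-box fourth power bound
  have hbox4 : ∀ i, (Fb i).card ^ 4 ≤ 49152 * Rn * (nb i).card ^ 4 := by
    intro i
    set a := (Fb i).card
    set M := (nb i).card
    have k1 : a * ((2 * Rn + 1) * (2 * Rn + 1)) ≤ (w + 1) * (M * M) := by
      calc a * ((2 * Rn + 1) * (2 * Rn + 1))
          ≤ ((w + 1) * ((Cc i).card * (Tr i).card)) * ((2 * Rn + 1) * (2 * Rn + 1)) :=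
            Nat.mul_le_mul_right _ (hkey i)
        _ = (w + 1) * (((Cc i).card * (2 * Rn + 1)) * ((Tr i).card * (2 * Rn + 1))) := by ring
        _ ≤ (w + 1) * (M * M) :=
            Nat.mul_le_mul_left _ (Nat.mul_le_mul (hCcc i) (hTrc i))
    have k2 : a ^ 4 * ((2 * Rn + 1) * (2 * Rn + 1)) ^ 2
        ≤ (8 * Rn * (8 * Rn)) ^ 2 * ((w + 1) * (M * M)) ^ 2 := by
      calc a ^ 4 * ((2 * Rn + 1) * (2 * Rn + 1)) ^ 2
          = (a * a) * (a * ((2 * Rn + 1) * (2 * Rn + 1))) ^ 2 := by ring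
        _ ≤ ((8 * Rn * (8 * Rn)) * (8 * Rn * (8 * Rn))) * ((w + 1) * (M * M)) ^ 2 :=
            Nat.mul_le_mul (Nat.mul_le_mul (harea i) (harea i)) (Nat.pow_le_pow_left k1 2)
        _ = (8 * Rn * (8 * Rn)) ^ 2 * ((w + 1) * (M * M)) ^ 2 := by ring
    have k3 : (8 * Rn * (8 * Rn)) ^ 2 * ((w + 1) * (M * M)) ^ 2
        ≤ 4096 * Rn ^ 4 * (192 * Rn * M ^ 4) := by
      calc (8 * Rn * (8 * Rn)) ^ 2 * ((w + 1) * (M * M)) ^ 2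
          = (4096 * Rn ^ 4) * (((w + 1) * (w + 1)) * M ^ 4) := by ring
        _ ≤ (4096 * Rn ^ 4) * ((192 * Rn) * M ^ 4) :=
            Nat.mul_le_mul_left _ (Nat.mul_le_mul_right _ hwsq)
        _ = 4096 * Rn ^ 4 * (192 * Rn * M ^ 4) := by ring
    have k4 : 16 * Rn ^ 4 * a ^ 4 ≤ a ^ 4 * ((2 * Rn + 1) * (2 * Rn + 1)) ^ 2 := by
      have : 16 * Rn ^ 4 ≤ ((2 * Rn + 1) * (2 * Rn + 1)) ^ 2 := by nlinarith
      calc 16 * Rn ^ 4 * a ^ 4 = a ^ 4 * (16 * Rn ^ 4) := by ring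
        _ ≤ a ^ 4 * ((2 * Rn + 1) * (2 * Rn + 1)) ^ 2 := Nat.mul_le_mul_left _ this
    have k5 : 16 * Rn ^ 4 * a ^ 4 ≤ 16 * Rn ^ 4 * (49152 * Rn * M ^ 4) := by
      calc 16 * Rn ^ 4 * a ^ 4 ≤ 4096 * Rn ^ 4 * (192 * Rn * M ^ 4) :=
            le_trans k4 (le_trans k2 k3)
        _ = 16 * Rn ^ 4 * (49152 * Rn * M ^ 4) := by ring
    exact Nat.le_of_mul_le_mul_left k5 (by positivity)
  set X := 49152 * Rn with hX
  set ρ := Nat.sqrt (Nat.sqrt X) + 1 with hρ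
  have hXρ : X < ρ ^ 4 := by
    have h1 : Nat.sqrt X < ρ * ρ := Nat.lt_succ_sqrt (Nat.sqrt X)
    have h2 : X < (Nat.sqrt X + 1) * (Nat.sqrt X + 1) := Nat.lt_succ_sqrt X
    have h3 : (Nat.sqrt X + 1) * (Nat.sqrt X + 1) ≤ (ρ * ρ) * (ρ * ρ) :=
      Nat.mul_le_mul h1 h1
    calc X < (Nat.sqrt X + 1) * (Nat.sqrt X + 1) := h2
      _ ≤ (ρ * ρ) * (ρ * ρ) := h3
      _ = ρ ^ 4 := by ring
  have hρ4 : ρ ^ 4 ≤ 786432 * Rn := by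
    set y := Nat.sqrt (Nat.sqrt X) with hy
    have hy1 : 1 ≤ y := by
      rw [hy, Nat.le_sqrt]
      rw [Nat.le_sqrt]
      omega
    have hy4 : y ^ 4 ≤ X := by
      have a1 : y * y ≤ Nat.sqrt X := Nat.sqrt_le (Nat.sqrt X)
      have a2 : Nat.sqrt X * Nat.sqrt X ≤ X := Nat.sqrt_le X
      calc y ^ 4 = (y * y) * (y * y) := by ring
        _ ≤ Nat.sqrt X * Nat.sqrt X := Nat.mul_le_mul a1 a1
        _ ≤ X := a2
    have : ρ ^ 4 ≤ 16 * y ^ 4 := by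
      have : ρ ≤ 2 * y := by omega
      calc ρ ^ 4 ≤ (2 * y) ^ 4 := Nat.pow_le_pow_left this 4
        _ = 16 * y ^ 4 := by ring
    omega
  have hlin : ∀ i, (Fb i).card ≤ ρ * (nb i).card := by
    intro i
    rcases Nat.eq_zero_or_pos (nb i).card with hM | hM
    · have h0 := hbox4 i
      rw [hM] at h0
      have h1 : (Fb i).card ^ 4 ≤ 0 := by simpa using h0
      have h2 : (Fb i).card = 0 := pow_eq_zero_iff (by norm_num) |>.mp (Nat.le_zero.mp h1)
      omega
    · have h1 : (Fb i).card ^ 4 < (ρ * (nb i).card) ^ 4 := by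
        calc (Fb i).card ^ 4 ≤ X * (nb i).card ^ 4 := hbox4 i
          _ < ρ ^ 4 * (nb i).card ^ 4 := mul_lt_mul_of_pos_right hXρ (pow_pos hM 4)
          _ = (ρ * (nb i).card) ^ 4 := (mul_pow ρ _ 4).symm
      exact le_of_lt (lt_of_pow_lt_pow_left₀ 4 (Nat.zero_le _) h1)
  -- sum over boxes
  have hsum_fib : Sf.card = ∑ i ∈ I, (Fb i).card :=
    Finset.card_eq_sum_card_fiberwise (fun s hs => Finset.mem_image_of_mem tile hs)
  have hsum9 : ∑ i ∈ I, (nb i).card ≤ 9 * m := by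
    have h1 : ∀ i : ℤ × ℤ, (nb i).card = ∑ p ∈ Bf,
        if (W * (i.1 - 1) ≤ p.1 ∧ p.1 < W * (i.1 + 2) ∧ W * (i.2 - 1) ≤ p.2 ∧ p.2 < W * (i.2 + 2))
        then 1 else 0 := by
      intro i
      rw [hnb]
      exact Finset.card_filter _ _
    calc ∑ i ∈ I, (nb i).card
        = ∑ i ∈ I, ∑ p ∈ Bf, (if (W * (i.1 - 1) ≤ p.1 ∧ p.1 < W * (i.1 + 2) ∧
            W * (i.2 - 1) ≤ p.2 ∧ p.2 < W * (i.2 + 2)) then 1 else 0) :=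
          Finset.sum_congr rfl (fun i _ => h1 i)
      _ = ∑ p ∈ Bf, ∑ i ∈ I, (if (W * (i.1 - 1) ≤ p.1 ∧ p.1 < W * (i.1 + 2) ∧
            W * (i.2 - 1) ≤ p.2 ∧ p.2 < W * (i.2 + 2)) then 1 else 0) := Finset.sum_comm
      _ ≤ ∑ p ∈ Bf, 9 := by
          refine Finset.sum_le_sum (fun p _ => ?_)
          have h2 : ∑ i ∈ I, (if (W * (i.1 - 1) ≤ p.1 ∧ p.1 < W * (i.1 + 2) ∧
              W * (i.2 - 1) ≤ p.2 ∧ p.2 < W * (i.2 + 2)) then 1 else 0)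
              = (I.filter (fun i => W * (i.1 - 1) ≤ p.1 ∧ p.1 < W * (i.1 + 2) ∧
              W * (i.2 - 1) ≤ p.2 ∧ p.2 < W * (i.2 + 2))).card := (Finset.card_filter _ _).symm
          rw [h2]
          have hsub : (I.filter (fun i => W * (i.1 - 1) ≤ p.1 ∧ p.1 < W * (i.1 + 2) ∧
              W * (i.2 - 1) ≤ p.2 ∧ p.2 < W * (i.2 + 2)))
              ⊆ (Finset.Icc ((tile p).1 - 1) ((tile p).1 + 1)) ×ˢ
                (Finset.Icc ((tile p).2 - 1) ((tile p).2 + 1)) := by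
            intro i hi
            obtain ⟨c1, c2, c3, c4⟩ := (Finset.mem_filter.mp hi).2
            have hbp := hbox p
            have e1 : W * (i.1 - 1) = W * i.1 - W := by ring
            have e2 : W * (i.1 + 2) = W * i.1 + 2 * W := by ring
            have e3 : W * (i.2 - 1) = W * i.2 - W := by ring
            have e4 : W * (i.2 + 2) = W * i.2 + 2 * W := by ring
            have d1 : W * (i.1 - 1) < W * ((tile p).1 + 1) := by
              have : W * ((tile p).1 + 1) = W * (tile p).1 + W := by ring
              omega
            have d2 : W * (tile p).1 < W * (i.1 + 2) := by omega
            have d3 : W * (i.2 - 1) < W * ((tile p).2 + 1) := by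
              have : W * ((tile p).2 + 1) = W * (tile p).2 + W := by ring
              omega
            have d4 : W * (tile p).2 < W * (i.2 + 2) := by omega
            have f1 : i.1 - 1 < (tile p).1 + 1 := (mul_lt_mul_iff_right₀ hWpos).mp d1
            have f2 : (tile p).1 < i.1 + 2 := (mul_lt_mul_iff_right₀ hWpos).mp d2
            have f3 : i.2 - 1 < (tile p).2 + 1 := (mul_lt_mul_iff_right₀ hWpos).mp d3
            have f4 : (tile p).2 < i.2 + 2 := (mul_lt_mul_iff_right₀ hWpos).mp d4
            exact Finset.mem_product.mpr ⟨Finset.mem_Icc.mpr ⟨by omega, by omega⟩,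
              Finset.mem_Icc.mpr ⟨by omega, by omega⟩⟩
          have hle := Finset.card_le_card hsub
          rw [Finset.card_product, Int.card_Icc, Int.card_Icc] at hle
          have g1 : ((tile p).1 + 1 + 1 - ((tile p).1 - 1)).toNat = 3 := by omega
          have g2 : ((tile p).2 + 1 + 1 - ((tile p).2 - 1)).toNat = 3 := by omega
          rw [g1, g2] at hle
          omega
      _ = 9 * m := by rw [Finset.sum_const, smul_eq_mul, hm]; ring
  -- bound A
  have hA : Sf.card ^ 4 ≤ 5159780352 * Rn * m ^ 4 := by
    have h1 : Sf.card ≤ ρ * (9 * m) := by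
      rw [hsum_fib]
      calc ∑ i ∈ I, (Fb i).card ≤ ∑ i ∈ I, ρ * (nb i).card :=
            Finset.sum_le_sum (fun i _ => hlin i)
        _ = ρ * ∑ i ∈ I, (nb i).card := by rw [Finset.mul_sum]
        _ ≤ ρ * (9 * m) := Nat.mul_le_mul_left _ hsum9
    calc Sf.card ^ 4 ≤ (ρ * (9 * m)) ^ 4 := Nat.pow_le_pow_left h1 4
      _ = ρ ^ 4 * (6561 * m ^ 4) := by ring
      _ ≤ (786432 * Rn) * (6561 * m ^ 4) := Nat.mul_le_mul_right _ hρ4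
      _ = 5159780352 * Rn * m ^ 4 := by ring
  -- bound B
  have hB : Sf.card ^ 2 * Rn ^ 3 ≤ 78732 * m ^ 4 := by
    have h2 : Sf.card * ((2 * Rn + 1) * (2 * Rn + 1)) ≤ (w + 1) * (81 * (m * m)) := by
      calc Sf.card * ((2 * Rn + 1) * (2 * Rn + 1))
          = ∑ i ∈ I, (Fb i).card * ((2 * Rn + 1) * (2 * Rn + 1)) := by
            rw [hsum_fib, Finset.sum_mul]
        _ ≤ ∑ i ∈ I, (w + 1) * ((nb i).card * (nb i).card) := by
            refine Finset.sum_le_sum (fun i _ => ?_)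
            calc (Fb i).card * ((2 * Rn + 1) * (2 * Rn + 1))
                ≤ ((w + 1) * ((Cc i).card * (Tr i).card)) * ((2 * Rn + 1) * (2 * Rn + 1)) :=
                  Nat.mul_le_mul_right _ (hkey i)
              _ = (w + 1) * (((Cc i).card * (2 * Rn + 1)) * ((Tr i).card * (2 * Rn + 1))) := by
                  ring
              _ ≤ (w + 1) * ((nb i).card * (nb i).card) :=
                  Nat.mul_le_mul_left _ (Nat.mul_le_mul (hCcc i) (hTrc i))
        _ = (w + 1) * ∑ i ∈ I, ((nb i).card * (nb i).card) := by rw [Finset.mul_sum]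
        _ ≤ (w + 1) * (81 * (m * m)) := by
            refine Nat.mul_le_mul_left _ ?_
            have hs1 : ∑ i ∈ I, ((nb i).card * (nb i).card)
                = ∑ i ∈ I, ((nb i).card) ^ 2 := by
              refine Finset.sum_congr rfl (fun i _ => ?_); ring
            rw [hs1]
            calc ∑ i ∈ I, ((nb i).card) ^ 2 ≤ (∑ i ∈ I, (nb i).card) ^ 2 := sum_sq_le I _
              _ ≤ (9 * m) ^ 2 := Nat.pow_le_pow_left hsum9 2
              _ = 81 * (m * m) := by ring
    have h3 : (Sf.card * ((2 * Rn + 1) * (2 * Rn + 1))) ^ 2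
        ≤ ((w + 1) * (81 * (m * m))) ^ 2 := Nat.pow_le_pow_left h2 2
    have h4 : ((w + 1) * (81 * (m * m))) ^ 2 ≤ 192 * Rn * (6561 * m ^ 4) := by
      calc ((w + 1) * (81 * (m * m))) ^ 2
          = ((w + 1) * (w + 1)) * (6561 * m ^ 4) := by ring
        _ ≤ (192 * Rn) * (6561 * m ^ 4) := Nat.mul_le_mul_right _ hwsq
        _ = 192 * Rn * (6561 * m ^ 4) := by ring
    have h5 : (16 * Rn) * (Sf.card ^ 2 * Rn ^ 3) ≤ (16 * Rn) * (78732 * m ^ 4) := by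
      have h6 : (16 * Rn) * (Sf.card ^ 2 * Rn ^ 3) ≤ (Sf.card * ((2 * Rn + 1) * (2 * Rn + 1))) ^ 2 := by
        have : 16 * Rn ^ 4 ≤ ((2 * Rn + 1) * (2 * Rn + 1)) ^ 2 := by nlinarith
        calc (16 * Rn) * (Sf.card ^ 2 * Rn ^ 3) = Sf.card ^ 2 * (16 * Rn ^ 4) := by ring
          _ ≤ Sf.card ^ 2 * ((2 * Rn + 1) * (2 * Rn + 1)) ^ 2 := Nat.mul_le_mul_left _ this
          _ = (Sf.card * ((2 * Rn + 1) * (2 * Rn + 1))) ^ 2 := by ring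
      calc (16 * Rn) * (Sf.card ^ 2 * Rn ^ 3)
          ≤ (Sf.card * ((2 * Rn + 1) * (2 * Rn + 1))) ^ 2 := h6
        _ ≤ 192 * Rn * (6561 * m ^ 4) := le_trans h3 h4
        _ = (16 * Rn) * (78732 * m ^ 4) := by ring
    exact Nat.le_of_mul_le_mul_left h5 (by positivity)
  -- combine
  have hfin : Sf.card ^ 14 * Rn ^ 3 ≤ (5159780352 ^ 3 * 78732 * m ^ 16) * Rn ^ 3 := by
    calc Sf.card ^ 14 * Rn ^ 3 = (Sf.card ^ 4) ^ 3 * (Sf.card ^ 2 * Rn ^ 3) := by ring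
      _ ≤ (5159780352 * Rn * m ^ 4) ^ 3 * (78732 * m ^ 4) :=
          Nat.mul_le_mul (Nat.pow_le_pow_left hA 3) hB
      _ = (5159780352 ^ 3 * 78732 * m ^ 16) * Rn ^ 3 := by ring
  exact Nat.le_of_mul_le_mul_right hfin (by positivity)


lemma total_bound (Bf Sf : Finset (ℤ × ℤ)) (rad : ℤ × ℤ → ℤ)
    (h1 : ∀ s ∈ Sf, 1 ≤ rad s)
    (hbd : ∀ s ∈ Sf, ∀ p : ℤ × ℤ, max |p.1 - s.1| |p.2 - s.2| = rad s → p ∈ Bf) :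
    ∃ N : ℕ, Sf.card ≤ (Nat.log 2 Bf.card + 1) * N ∧
      N ^ 14 ≤ 5159780352 ^ 3 * 78732 * Bf.card ^ 16 := by
  classical
  set m := Bf.card with hm
  have hrm : ∀ s ∈ Sf, (rad s).toNat ≤ m := by
    intro s hs
    have hr := h1 s hs
    have hsub : (Finset.Icc (s.2 - rad s) (s.2 + rad s)).image
        (fun y => ((s.1 + rad s, y) : ℤ × ℤ)) ⊆ Bf := by
      intro p hp
      obtain ⟨y, hy, rfl⟩ := Finset.mem_image.mp hp
      obtain ⟨hy1, hy2⟩ := Finset.mem_Icc.mp hy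
      refine hbd s hs _ ?_
      show max |s.1 + rad s - s.1| |y - s.2| = rad s
      rw [show s.1 + rad s - s.1 = rad s by ring, abs_of_nonneg (by omega)]
      exact max_eq_left (abs_le.mpr ⟨by omega, by omega⟩)
    have hcard := Finset.card_le_card hsub
    rw [Finset.card_image_of_injective _
      (fun a b hab => by simpa using congrArg Prod.snd hab), Int.card_Icc] at hcard
    omega
  set J := Nat.log 2 m with hJ
  set jm : ℤ × ℤ → ℕ := fun s => Nat.log 2 (rad s).toNat with hjm
  have hmem : ∀ s ∈ Sf, jm s ∈ Finset.range (J + 1) := by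
    intro s hs
    refine Finset.mem_range.mpr ?_
    have : jm s ≤ J := Nat.log_mono_right (hrm s hs)
    omega
  have hdec : Sf.card = ∑ j ∈ Finset.range (J + 1), (Sf.filter (fun s => jm s = j)).card :=
    Finset.card_eq_sum_card_fiberwise hmem
  set N := (Finset.range (J + 1)).sup (fun j => (Sf.filter (fun s => jm s = j)).card) with hN
  refine ⟨N, ?_, ?_⟩
  · calc Sf.card = ∑ j ∈ Finset.range (J + 1), (Sf.filter (fun s => jm s = j)).card := hdec
      _ ≤ (Finset.range (J + 1)).card • N :=
          Finset.sum_le_card_nsmul _ _ _ (fun j hj =>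
            Finset.le_sup (f := fun j => (Sf.filter (fun s => jm s = j)).card) hj)
      _ = (J + 1) * N := by rw [Finset.card_range, smul_eq_mul]
  · obtain ⟨j0, _hj0, hNj⟩ := Finset.exists_mem_eq_sup (Finset.range (J + 1))
      ⟨0, Finset.mem_range.mpr (by omega)⟩ (fun j => (Sf.filter (fun s => jm s = j)).card)
    rw [hN, hNj]
    refine class_bound Bf _ rad (2 ^ j0) Nat.one_le_two_pow ?_ ?_
    · intro s hs
      obtain ⟨hsS, hsj⟩ := Finset.mem_filter.mp hs
      have hr := h1 s hsS
      have hlow : 2 ^ j0 ≤ (rad s).toNat := by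
        rw [← hsj]
        exact Nat.pow_log_le_self 2 (by omega)
      have hhigh : (rad s).toNat < 2 ^ (j0 + 1) := by
        rw [← hsj]
        exact Nat.lt_pow_succ_log_self (by norm_num) _
      have hp : (2 : ℕ) ^ (j0 + 1) = 2 * 2 ^ j0 := by ring
      constructor
      · omega
      · omega
    · exact fun s hs => hbd s (Finset.mem_filter.mp hs).1

lemma real_final (n m L N : ℕ) (hn : 2 ≤ n) (hLN : n ≤ L * N) (hL : L ≤ Nat.log 2 m + 1)
    (hN14 : N ^ 14 ≤ 5159780352 ^ 3 * 78732 * m ^ 16) :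
    min (1/2 : ℝ) ((3 ^ 14 * (5159780352 ^ 3 * 78732 : ℝ)) ^ (-(1:ℝ)/16)) *
      ((n : ℝ) / Real.log (n : ℝ)) ^ ((7:ℝ) / 8) ≤ (m : ℝ) := by
  set K : ℝ := (5159780352 ^ 3 * 78732 : ℝ) with hK
  set c : ℝ := min (1/2 : ℝ) ((3 ^ 14 * K) ^ (-(1:ℝ)/16)) with hc
  set x : ℝ := (n : ℝ) / Real.log (n : ℝ) with hx
  have hKpos : (0:ℝ) < 3 ^ 14 * K := by rw [hK]; norm_num
  have hlog2pos : (0:ℝ) < Real.log 2 := Real.log_pos (by norm_num)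
  have hn2 : (2:ℝ) ≤ (n:ℝ) := by exact_mod_cast hn
  have hlogn : Real.log 2 ≤ Real.log n := Real.log_le_log (by norm_num) hn2
  have hlognpos : 0 < Real.log (n:ℝ) := lt_of_lt_of_le hlog2pos hlogn
  have hlog2d : (0.6931471803:ℝ) < Real.log 2 := Real.log_two_gt_d9
  have hx0 : (0:ℝ) ≤ x := by rw [hx]; positivity
  have hc0 : (0:ℝ) ≤ c :=
    le_min (by norm_num) (le_of_lt (Real.rpow_pos_of_pos hKpos _))
  rcases le_or_gt n m with hcase | hcase
  · -- n ≤ m : trivial case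
    have hxle : x ≤ 2 * (n:ℝ) := by
      rw [hx, div_le_iff₀ hlognpos]
      nlinarith
    have h1 : x ^ ((7:ℝ)/8) ≤ (2*(n:ℝ)) ^ ((7:ℝ)/8) :=
      Real.rpow_le_rpow hx0 hxle (by norm_num)
    have h2 : (2*(n:ℝ)) ^ ((7:ℝ)/8) ≤ (2*(n:ℝ)) ^ ((1:ℝ)) :=
      Real.rpow_le_rpow_of_exponent_le (by linarith) (by norm_num)
    rw [Real.rpow_one] at h2
    have hcle : c ≤ 1/2 := min_le_left _ _
    calc c * x ^ ((7:ℝ)/8) ≤ (1/2) * (2*(n:ℝ)) := by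
          apply mul_le_mul hcle (le_trans h1 h2) (Real.rpow_nonneg hx0 _) (by norm_num)
      _ = (n:ℝ) := by ring
      _ ≤ (m:ℝ) := by exact_mod_cast hcase
  · -- m < n : main case
    have lm : Nat.log 2 m ≤ Nat.log 2 n := Nat.log_mono_right (le_of_lt hcase)
    have l1 : (2:ℕ) ^ Nat.log 2 n ≤ n := Nat.pow_log_le_self 2 (by omega)
    have l2 : ((Nat.log 2 n : ℝ)) * Real.log 2 ≤ Real.log n := by
      have h := Real.log_le_log (by positivity)
        (show ((2:ℝ))^(Nat.log 2 n) ≤ (n:ℝ) by exact_mod_cast l1)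
      rwa [Real.log_pow] at h
    have l3 : (L : ℝ) ≤ (Nat.log 2 n : ℝ) + 1 := by exact_mod_cast le_trans hL (by omega)
    have l4 : (Nat.log 2 n : ℝ) ≤ 1.45 * Real.log n := by
      nlinarith [show (0:ℝ) ≤ (Nat.log 2 n : ℝ) from Nat.cast_nonneg _]
    have l5 : (1:ℝ) ≤ 1.45 * Real.log n := by nlinarith
    have hLn : (L:ℝ) ≤ 3 * Real.log n := by linarith
    have hxN : x ≤ 3 * (N:ℝ) := by
      rw [hx, div_le_iff₀ hlognpos]
      have hn' : (n:ℝ) ≤ (L:ℝ) * (N:ℝ) := by exact_mod_cast hLN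
      calc (n:ℝ) ≤ (L:ℝ) * (N:ℝ) := hn'
        _ ≤ (3*Real.log n) * (N:ℝ) := mul_le_mul_of_nonneg_right hLn (Nat.cast_nonneg N)
        _ = 3*(N:ℝ)*Real.log n := by ring
    have hx14 : x ^ (14:ℕ) ≤ 3^14 * K * (m:ℝ)^(16:ℕ) := by
      have hNle : ((N:ℝ))^(14:ℕ) ≤ K * (m:ℝ)^(16:ℕ) := by
        rw [hK]; exact_mod_cast hN14
      calc x^(14:ℕ) ≤ (3*(N:ℝ))^(14:ℕ) := pow_le_pow_left₀ hx0 hxN 14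
        _ = 3^14 * ((N:ℝ))^(14:ℕ) := by ring
        _ ≤ 3^14 * (K * (m:ℝ)^(16:ℕ)) := by
            refine mul_le_mul_of_nonneg_left hNle (by norm_num)
        _ = 3^14 * K * (m:ℝ)^(16:ℕ) := by ring
    have hx78 : x ^ ((7:ℝ)/8) = (x ^ (14:ℕ)) ^ ((1:ℝ)/16) := by
      rw [← Real.rpow_natCast x 14, ← Real.rpow_mul hx0]
      norm_num
    have hmono : (x ^ (14:ℕ)) ^ ((1:ℝ)/16) ≤ (3^14*K*(m:ℝ)^(16:ℕ)) ^ ((1:ℝ)/16) :=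
      Real.rpow_le_rpow (by positivity) hx14 (by norm_num)
    have hsplit : ((3:ℝ)^14*K*(m:ℝ)^(16:ℕ)) ^ ((1:ℝ)/16)
        = ((3:ℝ)^14*K) ^ ((1:ℝ)/16) * (m:ℝ) := by
      rw [Real.mul_rpow (le_of_lt hKpos) (by positivity)]
      congr 1
      rw [← Real.rpow_natCast (m:ℝ) 16, ← Real.rpow_mul (Nat.cast_nonneg m)]
      norm_num
    have hcle : c ≤ (3^14*K) ^ (-(1:ℝ)/16) := min_le_right _ _
    calc c * x^((7:ℝ)/8)
        ≤ (3^14*K)^(-(1:ℝ)/16) * ((3^14*K)^((1:ℝ)/16) * (m:ℝ)) := by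
          apply mul_le_mul hcle
            (le_trans (le_of_eq hx78) (le_trans hmono (le_of_eq hsplit)))
            (Real.rpow_nonneg hx0 _)
            (le_of_lt (Real.rpow_pos_of_pos hKpos _))
      _ = ((3^14*K)^(-(1:ℝ)/16) * (3^14*K)^((1:ℝ)/16)) * (m:ℝ) := by ring
      _ = (m:ℝ) := by
          rw [← Real.rpow_add hKpos]
          norm_num

theorem stmt14 : ∃ c : ℝ, 0 < c ∧ ∀ B : Set (ℤ × ℤ), B.Finite →
    ∀ S : Set (ℤ × ℤ), S = {s : ℤ × ℤ | ∃ r : ℤ, 1 ≤ r ∧ discSqBdry s r ⊆ B} →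
    2 ≤ S.ncard →
    c * ((S.ncard : ℝ) / Real.log (S.ncard : ℝ)) ^ ((7:ℝ) / 8) ≤ (B.ncard : ℝ) := by
  classical
  refine ⟨min (1/2 : ℝ) ((3 ^ 14 * (5159780352 ^ 3 * 78732 : ℝ)) ^ (-(1:ℝ)/16)), ?_, ?_⟩
  · exact lt_min (by norm_num) (Real.rpow_pos_of_pos (by norm_num) _)
  · intro B hB S hS hn
    have hSfin : S.Finite := by
      rw [hS]
      refine Set.Finite.subset (Set.Finite.image
        (fun q : (ℤ × ℤ) × (ℤ × ℤ) => (((q.1.1 + q.2.1) / 2 : ℤ), ((q.1.2 + q.2.2) / 2 : ℤ)))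
        (hB.prod hB)) ?_
      intro s hs
      obtain ⟨r, hr, hsub⟩ := hs
      refine ⟨((s.1 + r, s.2 + r), (s.1 - r, s.2 - r)), ⟨?_, ?_⟩, ?_⟩
      · refine hsub ?_
        show max |s.1 + r - s.1| |s.2 + r - s.2| = r
        rw [show s.1 + r - s.1 = r by ring, show s.2 + r - s.2 = r by ring,
          abs_of_nonneg (by omega)]
        exact max_self r
      · refine hsub ?_
        show max |s.1 - r - s.1| |s.2 - r - s.2| = r
        rw [show s.1 - r - s.1 = -r by ring, show s.2 - r - s.2 = -r by ring,
          abs_neg, abs_of_nonneg (by omega)]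
        exact max_self r
      · show ((s.1 + r + (s.1 - r)) / 2, (s.2 + r + (s.2 - r)) / 2) = s
        have e1 : s.1 + r + (s.1 - r) = 2 * s.1 := by ring
        have e2 : s.2 + r + (s.2 - r) = 2 * s.2 := by ring
        rw [e1, e2, Int.mul_ediv_cancel_left _ (by norm_num),
          Int.mul_ediv_cancel_left _ (by norm_num)]
    set Bf := hB.toFinset with hBf
    set Sf := hSfin.toFinset with hSfd
    have hmB : B.ncard = Bf.card := Set.ncard_eq_toFinset_card _ hB
    have hnS : S.ncard = Sf.card := Set.ncard_eq_toFinset_card _ hSfin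
    set rad : ℤ × ℤ → ℤ := fun s =>
      if h : ∃ r : ℤ, 1 ≤ r ∧ discSqBdry s r ⊆ B then h.choose else 1 with hraddef
    have hradspec : ∀ s ∈ Sf, 1 ≤ rad s ∧ discSqBdry s (rad s) ⊆ B := by
      intro s hs
      have hsS : s ∈ S := (Set.Finite.mem_toFinset hSfin).mp hs
      have hex : ∃ r : ℤ, 1 ≤ r ∧ discSqBdry s r ⊆ B := by rw [hS] at hsS; exact hsS
      have hre : rad s = hex.choose := by rw [hraddef]; exact dif_pos hex
      rw [hre]
      exact hex.choose_spec
    obtain ⟨N, hLN, hN14⟩ := total_bound Bf Sf rad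
      (fun s hs => (hradspec s hs).1)
      (fun s hs p hp =>
        (Set.Finite.mem_toFinset hB).mpr
          ((hradspec s hs).2 (show p ∈ discSqBdry s (rad s) from hp)))
    rw [hnS] at hn
    rw [hnS, hmB]
    exact real_final Sf.card Bf.card _ N hn hLN (le_refl _) hN14
end

section
/- There exists a constant C > 0 such that for every n ∈ ℕ there exist finite sets S, B ⊂ ℤ² with |S| ≥ n, such that for every s ∈ S there exists an integer r ≥ 1 with the discrete square boundary with center s and radius r contained in B, and such that |B| ≤ C·|S|^{7/8}. -/
private lemma card_Icc_neg (c : ℕ) : (Finset.Icc (-(c:ℤ)) (c:ℤ)).card = 2*c+1 := by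
  rw [Int.card_Icc]; omega

private lemma memV {m K c N : ℤ} (hm : 0 < m) (hNK : N ≤ m * K)
    (hdvd : m ∣ c) (hc : |c| ≤ N) :
    c ∈ (Finset.Icc (-K) K).image (fun k => m * k) := by
  obtain ⟨k, rfl⟩ := hdvd
  refine Finset.mem_image.mpr ⟨k, ?_, rfl⟩
  rw [Finset.mem_Icc, ← abs_le]
  have h2 : m * |k| ≤ N := by rw [← abs_of_pos hm, ← abs_mul]; exact hc
  exact le_of_mul_le_mul_left (h2.trans hNK) hm

set_option maxHeartbeats 1000000 in
theorem stmt15 : ∃ C : ℝ, 0 < C ∧ ∀ n : ℕ, ∃ S B : Finset (ℤ × ℤ),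
    n ≤ S.card ∧
    (∀ s ∈ S, ∃ r : ℤ, 1 ≤ r ∧ discSqBdry s r ⊆ (B : Set (ℤ × ℤ))) ∧
    (B.card : ℝ) ≤ C * (S.card : ℝ) ^ ((7:ℝ) / 8) := by
  refine ⟨3000000000, by norm_num, fun n => ?_⟩
  obtain ⟨a, ha⟩ : ∃ t : ℕ, t = n + 1 := ⟨_, rfl⟩
  have ha1 : 1 ≤ a := by omega
  obtain ⟨A, hA⟩ : ∃ t : ℤ, t = (a : ℤ) := ⟨_, rfl⟩
  have hA1 : (1 : ℤ) ≤ A := by rw [hA]; exact_mod_cast ha1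
  have hA0 : (0 : ℤ) ≤ A := by linarith
  obtain ⟨m1, hm1⟩ : ∃ t : ℤ, t = 6 * A + 1 := ⟨_, rfl⟩
  obtain ⟨m2, hm2⟩ : ∃ t : ℤ, t = 6 * A + 2 := ⟨_, rfl⟩
  obtain ⟨m3, hm3⟩ : ∃ t : ℤ, t = 6 * A + 3 := ⟨_, rfl⟩
  obtain ⟨m4, hm4⟩ : ∃ t : ℤ, t = 6 * A + 5 := ⟨_, rfl⟩
  have hm1pos : 0 < m1 := by rw [hm1]; linarith
  have hm2pos : 0 < m2 := by rw [hm2]; linarith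
  have hm3pos : 0 < m3 := by rw [hm3]; linarith
  have hm4pos : 0 < m4 := by rw [hm4]; linarith
  have hm12 : m1 ≤ m2 := by rw [hm1, hm2]; linarith
  have hm13 : m1 ≤ m3 := by rw [hm1, hm3]; linarith
  have hm14 : m1 ≤ m4 := by rw [hm1, hm4]; linarith
  obtain ⟨M, hM⟩ : ∃ t : ℤ, t = m1 * (m2 * (m3 * m4)) := ⟨_, rfl⟩
  have hMpos : 0 < M := by rw [hM]; exact mul_pos hm1pos (mul_pos hm2pos (mul_pos hm3pos hm4pos))
  obtain ⟨N, hN⟩ : ∃ t : ℤ, t = A ^ 4 + 2 * M := ⟨_, rfl⟩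
  obtain ⟨K, hK⟩ : ∃ t : ℤ, t = 5000 * A ^ 3 := ⟨_, rfl⟩
  have hKnn : 0 ≤ K := by rw [hK]; positivity
  -- power facts for A
  have hA2 : A^2 ≤ A^4 := by nlinarith [mul_nonneg (mul_nonneg hA0 hA0) (sub_nonneg.mpr hA1), sq_nonneg A]
  have hA3 : A^3 ≤ A^4 := by nlinarith [mul_nonneg (mul_nonneg (mul_nonneg hA0 hA0) hA0) (sub_nonneg.mpr hA1)]
  have hA1' : A ≤ A^4 := by nlinarith [hA2, mul_nonneg hA0 (sub_nonneg.mpr hA1)]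
  have hA0' : 1 ≤ A^4 := by nlinarith [hA1', hA1]
  have hNK1 : N ≤ m1 * K := by
    rw [hN, hM, hK, hm1, hm2, hm3, hm4]
    nlinarith [hA2, hA3, hA1', hA0']
  have hNK2 : N ≤ m2 * K := hNK1.trans (mul_le_mul_of_nonneg_right hm12 hKnn)
  have hNK3 : N ≤ m3 * K := hNK1.trans (mul_le_mul_of_nonneg_right hm13 hKnn)
  have hNK4 : N ≤ m4 * K := hNK1.trans (mul_le_mul_of_nonneg_right hm14 hKnn)
  obtain ⟨I, hI⟩ : ∃ t : Finset ℤ, t = Finset.Icc (-N) N := ⟨_, rfl⟩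
  obtain ⟨V1, hV1⟩ : ∃ t : Finset ℤ, t = (Finset.Icc (-K) K).image (fun k => m1 * k) := ⟨_, rfl⟩
  obtain ⟨V2, hV2⟩ : ∃ t : Finset ℤ, t = (Finset.Icc (-K) K).image (fun k => m2 * k) := ⟨_, rfl⟩
  obtain ⟨V3, hV3⟩ : ∃ t : Finset ℤ, t = (Finset.Icc (-K) K).image (fun k => m3 * k) := ⟨_, rfl⟩
  obtain ⟨V4, hV4⟩ : ∃ t : Finset ℤ, t = (Finset.Icc (-K) K).image (fun k => m4 * k) := ⟨_, rfl⟩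
  obtain ⟨S, hS⟩ : ∃ t : Finset (ℤ × ℤ), t = (Finset.Ico (0:ℤ) (A^4)) ×ˢ (Finset.Ico (0:ℤ) (A^4)) := ⟨_, rfl⟩
  obtain ⟨B, hB⟩ : ∃ t : Finset (ℤ × ℤ), t = ((V1 ∪ V2) ×ˢ I) ∪ (I ×ˢ (V3 ∪ V4)) := ⟨_, rfl⟩
  have hScard : S.card = a ^ 8 := by
    rw [hS, Finset.card_product, Int.card_Ico]
    have h4 : ((A:ℤ)^4 - 0) = ((a^4 : ℕ) : ℤ) := by rw [hA]; push_cast; ring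
    rw [h4, Int.toNat_natCast]; ring
  refine ⟨S, B, ?_, ?_, ?_⟩
  · rw [hScard, ha]
    calc n ≤ n + 1 := Nat.le_succ n
    _ ≤ (n+1) ^ 8 := Nat.le_self_pow (by norm_num) _
  · rintro ⟨x, y⟩ hs
    rw [hS, Finset.mem_product] at hs
    obtain ⟨hx, hy⟩ := hs
    rw [Finset.mem_Ico] at hx hy
    obtain ⟨hx0, hx1⟩ := hx
    obtain ⟨hy0, hy1⟩ := hy
    -- coprimality
    have c12 : IsCoprime m1 m2 := ⟨-1, 1, by rw [hm1, hm2]; ring⟩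
    have c13 : IsCoprime m1 m3 := ⟨3*A+1, -(3*A), by rw [hm1, hm3]; ring⟩
    have c14 : IsCoprime m1 m4 := ⟨1-6*A-9*A^2, 9*A^2, by rw [hm1, hm4]; ring⟩
    have c23 : IsCoprime m2 m3 := ⟨-1, 1, by rw [hm2, hm3]; ring⟩
    have c24 : IsCoprime m2 m4 := ⟨-(2*A+2), 2*A+1, by rw [hm2, hm4]; ring⟩
    have c34 : IsCoprime m3 m4 := ⟨3*A+2, -(3*A+1), by rw [hm3, hm4]; ring⟩
    obtain ⟨u1, v1, h1⟩ := c12.mul_right (c13.mul_right c14)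
    obtain ⟨u2, v2, h2⟩ := c12.symm.mul_right (c23.mul_right c24)
    obtain ⟨u3, v3, h3⟩ := c13.symm.mul_right (c23.symm.mul_right c34)
    obtain ⟨u4, v4, h4⟩ := c14.symm.mul_right (c24.symm.mul_right c34.symm)
    obtain ⟨r0, hr0⟩ : ∃ t : ℤ, t = -x * (v1 * (m2 * (m3 * m4))) + x * (v2 * (m1 * (m3 * m4)))
        - y * (v3 * (m1 * (m2 * m4))) + y * (v4 * (m1 * (m2 * m3))) := ⟨_, rfl⟩
    obtain ⟨r, hr⟩ : ∃ t : ℤ, t = r0 % M + M := ⟨_, rfl⟩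
    have hmodnn : 0 ≤ r0 % M := Int.emod_nonneg r0 (ne_of_gt hMpos)
    have hmodlt : r0 % M < M := Int.emod_lt_of_pos r0 hMpos
    have hr1 : 1 ≤ r := by rw [hr]; linarith
    have hr2M : r ≤ 2 * M := by rw [hr]; linarith
    have hrr0 : M ∣ r - r0 := ⟨1 - r0 / M, by rw [hr, Int.emod_def]; ring⟩
    have dm1 : m1 ∣ M := ⟨m2 * (m3 * m4), hM⟩
    have dm2 : m2 ∣ M := ⟨m1 * (m3 * m4), by rw [hM]; ring⟩
    have dm3 : m3 ∣ M := ⟨m1 * (m2 * m4), by rw [hM]; ring⟩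
    have dm4 : m4 ∣ M := ⟨m1 * (m2 * m3), by rw [hM]; ring⟩
    have d1 : m1 ∣ x + r := by
      have e1 : m1 ∣ x + r0 :=
        ⟨x*u1 + x*(v2*(m3*m4)) - y*(v3*(m2*m4)) + y*(v4*(m2*m3)), by
          rw [hr0]; linear_combination (-x) * h1⟩
      have h' : x + r = (x + r0) + (r - r0) := by ring
      rw [h']; exact dvd_add e1 (dm1.trans hrr0)
    have d2 : m2 ∣ x - r := by
      have e2 : m2 ∣ x - r0 :=
        ⟨x*u2 + x*(v1*(m3*m4)) + y*(v3*(m1*m4)) - y*(v4*(m1*m3)), by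
          rw [hr0]; linear_combination (-x) * h2⟩
      have h' : x - r = (x - r0) - (r - r0) := by ring
      rw [h']; exact dvd_sub e2 (dm2.trans hrr0)
    have d3 : m3 ∣ y + r := by
      have e3 : m3 ∣ y + r0 :=
        ⟨y*u3 - x*(v1*(m2*m4)) + x*(v2*(m1*m4)) + y*(v4*(m1*m2)), by
          rw [hr0]; linear_combination (-y) * h3⟩
      have h' : y + r = (y + r0) + (r - r0) := by ring
      rw [h']; exact dvd_add e3 (dm3.trans hrr0)
    have d4 : m4 ∣ y - r := by
      have e4 : m4 ∣ y - r0 :=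
        ⟨y*u4 + x*(v1*(m2*m3)) - x*(v2*(m1*m3)) + y*(v3*(m1*m2)), by
          rw [hr0]; linear_combination (-y) * h4⟩
      have h' : y - r = (y - r0) - (r - r0) := by ring
      rw [h']; exact dvd_sub e4 (dm4.trans hrr0)
    refine ⟨r, hr1, ?_⟩
    intro p hp
    have hp' : max |p.1 - x| |p.2 - y| = r := hp
    have hb1 : |p.1 - x| ≤ r := (le_max_left _ _).trans (le_of_eq hp')
    have hb2 : |p.2 - y| ≤ r := (le_max_right _ _).trans (le_of_eq hp')
    have habs1 : |p.1| ≤ N := by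
      have t1 := abs_sub_abs_le_abs_sub p.1 x
      have t2 : |x| = x := abs_of_nonneg hx0
      linarith
    have habs2 : |p.2| ≤ N := by
      have t1 := abs_sub_abs_le_abs_sub p.2 y
      have t2 : |y| = y := abs_of_nonneg hy0
      linarith
    have hrnn : (0:ℤ) ≤ r := by linarith
    rw [Finset.mem_coe, hB]
    rcases max_choice |p.1 - x| |p.2 - y| with hc | hc
    · have he : |p.1 - x| = r := by rw [← hc]; exact hp'
      apply Finset.mem_union_left
      rw [Finset.mem_product]
      refine ⟨?_, by rw [hI, Finset.mem_Icc]; exact abs_le.mp habs2⟩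
      rcases (abs_eq hrnn).mp he with h | h
      · apply Finset.mem_union_left
        rw [hV1]
        refine memV hm1pos hNK1 ?_ habs1
        have : p.1 = x + r := by linarith
        rw [this]; exact d1
      · apply Finset.mem_union_right
        rw [hV2]
        refine memV hm2pos hNK2 ?_ habs1
        have : p.1 = x - r := by linarith
        rw [this]
        exact d2
    · have he : |p.2 - y| = r := by rw [← hc]; exact hp'
      apply Finset.mem_union_right
      rw [Finset.mem_product]
      refine ⟨by rw [hI, Finset.mem_Icc]; exact abs_le.mp habs1, ?_⟩
      rcases (abs_eq hrnn).mp he with h | h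
      · apply Finset.mem_union_left
        rw [hV3]
        refine memV hm3pos hNK3 ?_ habs2
        have : p.2 = y + r := by linarith
        rw [this]; exact d3
      · apply Finset.mem_union_right
        rw [hV4]
        refine memV hm4pos hNK4 ?_ habs2
        have : p.2 = y - r := by linarith
        rw [this]
        exact d4
  · -- cardinality bound
    obtain ⟨nN, hnN⟩ : ∃ t : ℕ, t = a^4 + 2*((6*a+1)*((6*a+2)*((6*a+3)*(6*a+5)))) := ⟨_, rfl⟩
    have hKc : K = ((5000 * a^3 : ℕ) : ℤ) := by rw [hK, hA]; push_cast; ring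
    have hNc : N = ((nN : ℕ) : ℤ) := by
      rw [hN, hM, hm1, hm2, hm3, hm4, hA, hnN]; push_cast; ring
    have hIcard : I.card = 2*nN+1 := by rw [hI, hNc, card_Icc_neg]
    have hVc : ∀ m : ℤ, ((Finset.Icc (-K) K).image (fun k => m * k)).card ≤ 2*(5000*a^3)+1 := by
      intro m
      refine le_trans Finset.card_image_le ?_
      rw [hKc, card_Icc_neg]
    have hV1c : V1.card ≤ 2*(5000*a^3)+1 := by rw [hV1]; exact hVc m1
    have hV2c : V2.card ≤ 2*(5000*a^3)+1 := by rw [hV2]; exact hVc m2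
    have hV3c : V3.card ≤ 2*(5000*a^3)+1 := by rw [hV3]; exact hVc m3
    have hV4c : V4.card ≤ 2*(5000*a^3)+1 := by rw [hV4]; exact hVc m4
    have hB4 : B.card ≤ 4*(2*(5000*a^3)+1)*(2*nN+1) := by
      rw [hB]
      calc ((V1 ∪ V2) ×ˢ I ∪ I ×ˢ (V3 ∪ V4)).card
          ≤ ((V1 ∪ V2) ×ˢ I).card + (I ×ˢ (V3 ∪ V4)).card := Finset.card_union_le _ _
        _ = (V1 ∪ V2).card * I.card + I.card * (V3 ∪ V4).card := by
            rw [Finset.card_product, Finset.card_product]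
        _ ≤ (V1.card + V2.card) * I.card + I.card * (V3.card + V4.card) := by
            gcongr <;> exact Finset.card_union_le _ _
        _ ≤ ((2*(5000*a^3)+1) + (2*(5000*a^3)+1)) * (2*nN+1)
              + (2*nN+1) * ((2*(5000*a^3)+1) + (2*(5000*a^3)+1)) := by
            rw [hIcard]
            gcongr
        _ = 4*(2*(5000*a^3)+1)*(2*nN+1) := by ring
    have hxx : (1:ℝ) ≤ (a:ℝ) := by exact_mod_cast ha1
    have hx0 : (0:ℝ) ≤ (a:ℝ) := by positivity
    have hpow : ((S.card : ℕ) : ℝ) ^ ((7:ℝ)/8) = (a:ℝ)^7 := by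
      rw [hScard]
      have hcast : ((a^8 : ℕ) : ℝ) = (a:ℝ)^(8:ℕ) := by push_cast; ring
      rw [hcast, ← Real.rpow_natCast (a:ℝ) 8, ← Real.rpow_mul hx0]
      rw [show ((8:ℕ):ℝ) * ((7:ℝ)/8) = ((7:ℕ):ℝ) by norm_num, Real.rpow_natCast]
    rw [hpow]
    have hb : (B.card : ℝ) ≤ ((4*(2*(5000*a^3)+1)*(2*nN+1) : ℕ) : ℝ) := by
      exact_mod_cast hB4
    refine hb.trans ?_
    rw [hnN]
    push_cast
    have p1 : (a:ℝ)^1 ≤ (a:ℝ)^7 := pow_le_pow_right₀ hxx (by norm_num)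
    have p2 : (a:ℝ)^2 ≤ (a:ℝ)^7 := pow_le_pow_right₀ hxx (by norm_num)
    have p3 : (a:ℝ)^3 ≤ (a:ℝ)^7 := pow_le_pow_right₀ hxx (by norm_num)
    have p4 : (a:ℝ)^4 ≤ (a:ℝ)^7 := pow_le_pow_right₀ hxx (by norm_num)
    have p5 : (a:ℝ)^5 ≤ (a:ℝ)^7 := pow_le_pow_right₀ hxx (by norm_num)
    have p6 : (a:ℝ)^6 ≤ (a:ℝ)^7 := pow_le_pow_right₀ hxx (by norm_num)
    have p1' : (a:ℝ) ≤ (a:ℝ)^7 := by simpa using p1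
    have p0 : (1:ℝ) ≤ (a:ℝ)^7 := hxx.trans p1'
    nlinarith [p0, p1', p2, p3, p4, p5, p6]
end

section
/- For every dimension d ≥ 1 there exists a closed set A ⊆ ℝ^d with dimH A = 0 such that for every m ≥ 1 and every family f₁, …, f_m of bijective affine maps from ℝ^d to ℝ^d, the intersection ⋂_{i=1}^m f_i(A) is nonempty. -/
/-!
For `i < m` let `C_{m,i}` be the set of points of the unit ball lying, at every level
`k ≡ i (mod m)`, within `s_k ^ (k + 2) / 2` of the lattice `s_k ℤ^d`. At such a level `C_{m,i}` is
covered by about `s_k ^ (-d)` balls of radius `s_k ^ (k + 2)`, so `dimH C_{m,i} = 0`. Yet if the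
maps `x ↦ M_i x + t_i` (`i < m`) are close to the identity, a nested-balls argument finds `u` with
`M_i u + t_i ∈ C_{m,i}` for all `i`: level `k` only constrains the map of index `k mod m`.

The set `A` is a union of preimages of the `C_{m,i}` under the tuples of a countable dense family
of `m`-tuples of invertible affine maps, each tuple rescaled around a point so far out that the
union is locally finite, hence closed. Given bijective affine maps `f_i`, pick a tuple `g_i` with
`g_i ∘ f_i⁻¹` close to the identity; the rescaling keeps it so, and the previous step yields a
common point of the sets `f_i '' A`.
-/

open Set Metric MeasureTheory Filter Topology
open scoped NNReal ENNReal

namespace AffineImages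

section NormedSpace

variable {E : Type*} [NormedAddCommGroup E] [NormedSpace ℝ E]

lemma norm_apply_sub_le (M : E →L[ℝ] E) (x : E) : ‖M x - x‖ ≤ ‖M - 1‖ * ‖x‖ := by
  simpa using (M - 1).le_opNorm x

lemma norm_apply_sub_le_half {M : E →L[ℝ] E} (hM : ‖M - 1‖ ≤ 2⁻¹) (x : E) :
    ‖M x - x‖ ≤ ‖x‖ / 2 :=
  (norm_apply_sub_le M x).trans (by nlinarith [norm_nonneg x])

lemma norm_apply_le_of_norm_sub_one_le {M : E →L[ℝ] E} (hM : ‖M - 1‖ ≤ 2⁻¹) (x : E) :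
    ‖M x‖ ≤ 2 * ‖x‖ := by
  linarith [norm_le_insert' (M x) x, norm_apply_sub_le_half hM x, norm_nonneg x]

lemma norm_le_of_norm_sub_one_le {M : E →L[ℝ] E} (hM : ‖M - 1‖ ≤ 2⁻¹) (x : E) :
    ‖x‖ ≤ 2 * ‖M x‖ := by
  linarith [norm_le_insert' x (M x), norm_sub_rev x (M x), norm_apply_sub_le_half hM x]

section NestedBalls

def nestedCenter (M : ℕ → E ≃L[ℝ] E) (t : ℕ → E) (q : ℕ → E → E) (u₀ : E) : ℕ → E
  | 0 => u₀
  | k + 1 => (M k).symm (q k (M k (nestedCenter M t q u₀ k) + t k) - t k)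

variable {M : ℕ → E ≃L[ℝ] E} {t : ℕ → E} {q : ℕ → E → E} {u₀ : E}

lemma apply_nestedCenter_succ (k : ℕ) :
    M k (nestedCenter M t q u₀ (k + 1)) + t k = q k (M k (nestedCenter M t q u₀ k) + t k) := by
  simp [nestedCenter]

variable {δ R w : ℕ → ℝ}

lemma norm_nestedCenter_succ_sub (hM : ∀ k, ‖(M k : E →L[ℝ] E) - 1‖ ≤ 2⁻¹)
    (hq : ∀ k y, ‖y - q k y‖ ≤ δ k) (k : ℕ) :
    ‖nestedCenter M t q u₀ (k + 1) - nestedCenter M t q u₀ k‖ ≤ 2 * δ k := by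
  set c := nestedCenter M t q u₀
  have hdiff : M k (c (k + 1) - c k) = q k (M k (c k) + t k) - (M k (c k) + t k) := by
    rw [map_sub, ← apply_nestedCenter_succ (M := M) (q := q)]; abel
  calc ‖c (k + 1) - c k‖ ≤ 2 * ‖M k (c (k + 1) - c k)‖ := norm_le_of_norm_sub_one_le (hM k) _
    _ ≤ 2 * δ k := by rw [hdiff, norm_sub_rev]; gcongr; exact hq k _

lemma closedBall_nestedCenter_succ_subset (hM : ∀ k, ‖(M k : E →L[ℝ] E) - 1‖ ≤ 2⁻¹)
    (hq : ∀ k y, ‖y - q k y‖ ≤ δ k) (hR : ∀ k, R (k + 1) + 2 * δ k ≤ R k) (k : ℕ) :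
    closedBall (nestedCenter M t q u₀ (k + 1)) (R (k + 1)) ⊆
      closedBall (nestedCenter M t q u₀ k) (R k) :=
  closedBall_subset_closedBall' <| by
    rw [dist_eq_norm]; linarith [norm_nestedCenter_succ_sub (u₀ := u₀) (t := t) hM hq k, hR k]

lemma apply_add_mem_cthickening (hM : ∀ k, ‖(M k : E →L[ℝ] E) - 1‖ ≤ 2⁻¹)
    (hw : ∀ k, 2 * R (k + 1) ≤ w k) (k : ℕ) {u : E}
    (hu : u ∈ closedBall (nestedCenter M t q u₀ (k + 1)) (R (k + 1))) :
    M k u + t k ∈ cthickening (w k) (range (q k)) := by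
  refine mem_cthickening_of_dist_le _ _ _ _
    (mem_range_self (M k (nestedCenter M t q u₀ k) + t k)) ?_
  rw [← apply_nestedCenter_succ (M := M) (q := q), dist_eq_norm, add_sub_add_right_eq_sub,
    ← map_sub]
  rw [mem_closedBall, dist_eq_norm] at hu
  have h := norm_apply_le_of_norm_sub_one_le (hM k) (u - nestedCenter M t q u₀ (k + 1))
  rw [ContinuousLinearEquiv.coe_coe] at h
  linarith [hw k]

theorem exists_forall_apply_add_mem_cthickening [ProperSpace E]
    (hM : ∀ k, ‖(M k : E →L[ℝ] E) - 1‖ ≤ 2⁻¹) (hq : ∀ k y, ‖y - q k y‖ ≤ δ k)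
    (hR : ∀ k, R (k + 1) + 2 * δ k ≤ R k) (hw : ∀ k, 2 * R (k + 1) ≤ w k) (hR0 : ∀ k, 0 ≤ R k)
    (u₀ : E) :
    ∃ u ∈ closedBall u₀ (R 0), ∀ k, M k u + t k ∈ cthickening (w k) (range (q k)) := by
  obtain ⟨u, hu⟩ := IsCompact.nonempty_iInter_of_sequence_nonempty_isCompact_isClosed
    (fun k => closedBall (nestedCenter M t q u₀ k) (R k))
    (closedBall_nestedCenter_succ_subset hM hq hR) (fun k => nonempty_closedBall.2 (hR0 k))
    (isCompact_closedBall _ _) (fun _ => isClosed_closedBall)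
  rw [mem_iInter] at hu
  exact ⟨u, hu 0, fun k => apply_add_mem_cthickening hM hw k (hu (k + 1))⟩

end NestedBalls

section Zoom

/-- `x ↦ N x + t`, followed by the homothety taking `closedBall v ((1 + ‖v‖) / 2)` onto the
unit ball. -/
noncomputable def zoom (N : E →L[ℝ] E) (t v : E) (x : E) : E := (2 / (1 + ‖v‖)) • (N x + t - v)

variable {N M : E →L[ℝ] E} {t v : E}

lemma continuous_zoom : Continuous (zoom N t v) := by
  unfold zoom; fun_prop

lemma lt_norm_of_norm_zoom_le {x : E} {n : ℝ} (h : ‖zoom N t v x‖ ≤ 1)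
    (hv : n * ‖N‖ + ‖t‖ < (‖v‖ - 1) / 2) : n < ‖x‖ := by
  have hpos : 0 < 1 + ‖v‖ := by positivity
  rw [zoom, norm_smul, Real.norm_of_nonneg (by positivity), div_mul_eq_mul_div,
    div_le_one hpos] at h
  have htri : ‖v‖ ≤ ‖N x‖ + ‖t‖ + ‖N x + t - v‖ := by
    have := norm_sub_le (N x + t) (N x + t - v)
    rw [sub_sub_cancel] at this
    linarith [norm_add_le (N x) t]
  have : n * ‖N‖ < ‖x‖ * ‖N‖ := by linarith [N.le_opNorm x]
  exact lt_of_mul_lt_mul_right this (norm_nonneg N)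

lemma zoom_eq_of_apply_eq {u b y : E} (h : N y = M (((1 + ‖v‖) / 2) • u + v - b)) :
    zoom N t v y = M u + (2 / (1 + ‖v‖)) • (M v - v + (t - M b)) := by
  have hpos : (1 + ‖v‖) ≠ 0 := by positivity
  rw [zoom, h]
  simp only [map_sub, map_add, map_smul, smul_sub, smul_add, smul_smul]
  rw [show 2 / (1 + ‖v‖) * ((1 + ‖v‖) / 2) = 1 by field_simp, one_smul]
  abel

lemma norm_zoom_offset_le {b : E} (hM : ‖M - 1‖ ≤ 8⁻¹) (hb : ‖t - M b‖ ≤ 8⁻¹) :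
    ‖(2 / (1 + ‖v‖)) • (M v - v + (t - M b))‖ ≤ 2⁻¹ := by
  have hpos : 0 < 1 + ‖v‖ := by positivity
  have hMv : ‖M v - v‖ ≤ 8⁻¹ * ‖v‖ :=
    (norm_apply_sub_le M v).trans (mul_le_mul_of_nonneg_right hM (norm_nonneg v))
  rw [norm_smul, Real.norm_of_nonneg (by positivity), div_mul_eq_mul_div, div_le_iff₀ hpos]
  linarith [norm_add_le (M v - v) (t - M b), norm_nonneg v]

lemma dimH_preimage_zoom_le (N : (E →L[ℝ] E)ˣ) (t v : E) (s : Set E) :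
    dimH (zoom (N : E →L[ℝ] E) t v ⁻¹' s) ≤ dimH s := by
  set A : E →L[ℝ] E := ↑N
  set B : E →L[ℝ] E := ↑N⁻¹
  have hpos : 0 < 1 + ‖v‖ := by positivity
  refine (AntilipschitzWith.of_le_mul_dist (K := ‖B‖₊ * Real.toNNReal ((1 + ‖v‖) / 2))
    fun x y => ?_).dimH_preimage_le s
  have hBA : B (A (x - y)) = x - y := by
    change ((B * A : E →L[ℝ] E)) (x - y) = x - y
    rw [Units.inv_mul]; rfl
  have hdiff : zoom A t v x - zoom A t v y = (2 / (1 + ‖v‖)) • A (x - y) := by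
    rw [zoom, zoom, ← smul_sub, map_sub]; congr 1; abel
  rw [dist_eq_norm, dist_eq_norm, hdiff, norm_smul, Real.norm_of_nonneg (by positivity)]
  push_cast
  rw [Real.coe_toNNReal _ (by positivity)]
  calc ‖x - y‖ = ‖B (A (x - y))‖ := by rw [hBA]
    _ ≤ ‖B‖ * ‖A (x - y)‖ := B.le_opNorm _
    _ = ‖B‖ * ((1 + ‖v‖) / 2) * (2 / (1 + ‖v‖) * ‖A (x - y)‖) := by field_simp

end Zoom

end NormedSpace

section HausdorffCovers

variable {X : Type*}

theorem hausdorffMeasure_eq_zero_of_closedBall_covers [MetricSpace X] [MeasurableSpace X]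
    [BorelSpace X] {s : Set X} {t : ℝ} (ht : 0 ≤ t) {ι : ℕ → Type*} [∀ n, Fintype (ι n)]
    (c : ∀ n, ι n → X) {r : ℕ → ℝ} (hr0 : ∀ n, 0 ≤ r n) (hr : Tendsto r atTop (𝓝 0))
    (hs : ∀ n, s ⊆ ⋃ i, closedBall (c n i) (r n))
    (hsum : Tendsto (fun n => Fintype.card (ι n) * r n ^ t) atTop (𝓝 0)) : μH[t] s = 0 := by
  have hdiam : ∀ n i, ediam (closedBall (c n i) (r n)) ≤ 2 * ENNReal.ofReal (r n) := by
    intro n i; rw [← closedEBall_ofReal (hr0 n)]; exact ediam_closedEBall_le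
  have hsum_le : ∀ n, ∑ i, ediam (closedBall (c n i) (r n)) ^ t ≤
      2 ^ t * ENNReal.ofReal (Fintype.card (ι n) * r n ^ t) := fun n =>
    calc ∑ i, ediam (closedBall (c n i) (r n)) ^ t
        ≤ ∑ _i : ι n, (2 * ENNReal.ofReal (r n)) ^ t :=
          Finset.sum_le_sum fun i _ => ENNReal.rpow_le_rpow (hdiam n i) ht
      _ = 2 ^ t * ENNReal.ofReal (Fintype.card (ι n) * r n ^ t) := by
          rw [Finset.sum_const, Finset.card_univ, nsmul_eq_mul, ENNReal.mul_rpow_of_nonneg _ _ ht,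
            ENNReal.ofReal_rpow_of_nonneg (hr0 n) ht, ENNReal.ofReal_mul (by positivity),
            ENNReal.ofReal_natCast]
          ring
  have hlim : Tendsto (fun n => 2 ^ t * ENNReal.ofReal (Fintype.card (ι n) * r n ^ t)) atTop
      (𝓝 0) := by
    simpa using ENNReal.Tendsto.const_mul (ENNReal.tendsto_ofReal hsum) (Or.inr (by simp))
  have hr' : Tendsto (fun n => 2 * ENNReal.ofReal (r n)) atTop (𝓝 0) := by
    simpa using ENNReal.Tendsto.const_mul (ENNReal.tendsto_ofReal hr) (Or.inr (by simp))
  refine le_antisymm ?_ bot_le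
  calc μH[t] s ≤ liminf (fun n => ∑ i, ediam (closedBall (c n i) (r n)) ^ t) atTop :=
        Measure.hausdorffMeasure_le_liminf_sum t s _ hr' _ (Eventually.of_forall hdiam)
          (Eventually.of_forall hs)
    _ ≤ liminf (fun n => 2 ^ t * ENNReal.ofReal (Fintype.card (ι n) * r n ^ t)) atTop :=
        liminf_le_liminf (Eventually.of_forall hsum_le)
    _ = 0 := hlim.liminf_eq

theorem dimH_eq_zero_of_forall_hausdorffMeasure_eq_zero [EMetricSpace X] [MeasurableSpace X]
    [BorelSpace X] {s : Set X} (h : ∀ t : ℝ≥0, 0 < t → μH[t] s = 0) : dimH s = 0 :=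
  le_antisymm (ENNReal.le_of_forall_pos_le_add fun ε hε _ => by
    simpa using dimH_le_of_hausdorffMeasure_ne_top (by rw [h ε hε]; exact ENNReal.zero_ne_top))
    bot_le

end HausdorffCovers

theorem isClosed_iUnion_of_forall_le_norm {E : Type*} [SeminormedAddCommGroup E] {s : ℕ → Set E}
    (hs : ∀ n, IsClosed (s n)) (hfar : ∀ n, ∀ x ∈ s n, (n : ℝ) ≤ ‖x‖) : IsClosed (⋃ n, s n) := by
  refine LocallyFinite.isClosed_iUnion (fun x => ⟨ball x 1, ball_mem_nhds x one_pos, ?_⟩) hs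
  refine (finite_Iic ⌊‖x‖ + 1⌋₊).subset fun n ⟨y, hyn, hyx⟩ => Nat.le_floor ?_
  rw [mem_ball, dist_eq_norm] at hyx
  linarith [hfar n y hyn, norm_le_insert' y x]

instance {E : Type*} [NormedAddCommGroup E] [NormedSpace ℝ E] [FiniteDimensional ℝ E] :
    SecondCountableTopology (E →L[ℝ] E)ˣ :=
  Units.isEmbedding_embedProduct.isInducing.secondCountableTopology

lemma exists_continuousLinearEquiv_apply_add_of_bijective {E : Type*} [NormedAddCommGroup E]
    [NormedSpace ℝ E] [FiniteDimensional ℝ E] (f : E →ᵃ[ℝ] E) (hf : Function.Bijective f) :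
    ∃ L : E ≃L[ℝ] E, ∀ y, f y = L y + f 0 :=
  ⟨(LinearEquiv.ofBijective f.linear (f.linear_bijective_iff.2 hf)).toContinuousLinearEquiv,
    fun y => congrFun f.decomp y⟩

noncomputable section Lattice

variable {ι : Type*} [Fintype ι]

lemma norm_le_sqrt_card_mul_of_forall_abs_le (x : EuclideanSpace ℝ ι) {C : ℝ} (hC : 0 ≤ C)
    (hx : ∀ i, |x i| ≤ C) : ‖x‖ ≤ √(Fintype.card ι) * C := by
  have hsum : ∑ i, ‖x i‖ ^ 2 ≤ Fintype.card ι * C ^ 2 := by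
    calc ∑ i, ‖x i‖ ^ 2 ≤ ∑ _i : ι, C ^ 2 :=
          Finset.sum_le_sum fun i _ => by
            rw [Real.norm_eq_abs]; exact pow_le_pow_left₀ (abs_nonneg _) (hx i) 2
      _ = Fintype.card ι * C ^ 2 := by simp
  rw [EuclideanSpace.norm_eq, ← Real.sqrt_sq hC, ← Real.sqrt_mul (Nat.cast_nonneg _)]
  exact Real.sqrt_le_sqrt hsum

def latticePt (s : ℝ) (z : ι → ℤ) : EuclideanSpace ℝ ι := WithLp.toLp 2 fun i => z i * s

def latticeRound (s : ℝ) (y : EuclideanSpace ℝ ι) : EuclideanSpace ℝ ι :=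
  latticePt s fun i => ⌊y i / s⌋

lemma norm_sub_latticeRound_le {s : ℝ} (hs : 0 < s) (y : EuclideanSpace ℝ ι) :
    ‖y - latticeRound s y‖ ≤ √(Fintype.card ι) * s := by
  refine norm_le_sqrt_card_mul_of_forall_abs_le _ hs.le fun i => ?_
  have h1 := Int.floor_le (y i / s)
  have h2 := Int.lt_floor_add_one (y i / s)
  rw [le_div_iff₀ hs] at h1
  rw [div_lt_iff₀ hs] at h2
  simp only [latticeRound, latticePt, PiLp.sub_apply]
  rw [abs_le]
  constructor <;> nlinarith

lemma abs_mul_lt_of_norm_sub_latticePt_lt {s : ℝ} {y : EuclideanSpace ℝ ι} {z : ι → ℤ}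
    (hy : ‖y‖ ≤ 1) (h : ‖y - latticePt s z‖ < s / 2) (i : ι) : |(z i : ℝ) * s| < 1 + s / 2 := by
  have h1 : |y i| ≤ 1 := by simpa using (PiLp.norm_apply_le y i).trans hy
  have h2 : |y i - z i * s| < s / 2 := by
    simpa [latticePt] using (PiLp.norm_apply_le (y - latticePt s z) i).trans_lt h
  rw [abs_lt] at h2 ⊢
  rw [abs_le] at h1
  constructor <;> linarith

end Lattice

noncomputable section Construction

variable {d : ℕ}

local notation "𝔼" => EuclideanSpace ℝ (Fin d)

-- Level `k` has lattice mesh `s_k = mesh d k` and teeth of radius `s_k ^ (k + 2) / 2`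
-- (`mesh_pow_eq`); the gap `2 ^ (-(d + 4))` from one level's teeth to the next mesh is what
-- lets the nested balls of radii `2 ^ (-(scaleExp d k + 2))` fit (`radius_succ_add_le`).
variable (d) in
def scaleExp : ℕ → ℕ
  | 0 => 0
  | k + 1 => (k + 2) * (scaleExp k + d + 4)

variable (d) in
def mesh (k : ℕ) : ℝ := 2⁻¹ ^ (scaleExp d k + d + 4)

variable (d) in
def gridSet (k : ℕ) : Set 𝔼 :=
  cthickening (2⁻¹ ^ (scaleExp d (k + 1) + 1)) (range (latticePt (mesh d k)))

variable (d) in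
def lacunarySet (m i : ℕ) : Set 𝔼 := closedBall 0 1 ∩ ⋂ k, ⋂ (_ : k % m = i), gridSet d k

lemma scaleExp_add_le_scaleExp_succ (k : ℕ) : scaleExp d k + d + 5 ≤ scaleExp d (k + 1) := by
  simp only [scaleExp]; nlinarith

lemma le_scaleExp (k : ℕ) : k ≤ scaleExp d k := by
  induction k with
  | zero => exact le_rfl
  | succ k ih => linarith [scaleExp_add_le_scaleExp_succ (d := d) k]

lemma mesh_pos (k : ℕ) : 0 < mesh d k := by unfold mesh; positivity

lemma mesh_le_one (k : ℕ) : mesh d k ≤ 1 := pow_le_one₀ (by norm_num) (by norm_num)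

lemma sqrt_le_two_pow (n : ℕ) : √(n : ℝ) ≤ 2 ^ n := by
  rw [Real.sqrt_le_left (by positivity)]
  exact_mod_cast (Nat.lt_two_pow_self.le.trans (Nat.le_self_pow two_ne_zero _))

lemma radius_succ_add_le (k : ℕ) :
    (2⁻¹ : ℝ) ^ (scaleExp d (k + 1) + 2) + 2 * (√(d : ℝ) * mesh d k) ≤
      2⁻¹ ^ (scaleExp d k + 2) := by
  have hexp : (2⁻¹ : ℝ) ^ (scaleExp d (k + 1) + 2) ≤ 2⁻¹ ^ (scaleExp d k + 3) :=
    pow_le_pow_of_le_one (by norm_num) (by norm_num)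
      (by linarith [scaleExp_add_le_scaleExp_succ (d := d) k])
  have hmesh : 2 * (√(d : ℝ) * mesh d k) ≤ 2⁻¹ ^ (scaleExp d k + 3) :=
    calc 2 * (√(d : ℝ) * mesh d k) = 2⁻¹ ^ (scaleExp d k + 3) * (√(d : ℝ) * 2⁻¹ ^ d) := by
          unfold mesh; ring
      _ ≤ 2⁻¹ ^ (scaleExp d k + 3) * (2 ^ d * 2⁻¹ ^ d) := by gcongr; exact sqrt_le_two_pow d
      _ = 2⁻¹ ^ (scaleExp d k + 3) := by rw [← mul_pow]; norm_num
  have : (2⁻¹ : ℝ) ^ (scaleExp d k + 2) = 2 * 2⁻¹ ^ (scaleExp d k + 3) := by ring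
  linarith

lemma cthickening_range_latticeRound_subset_gridSet (k : ℕ) :
    cthickening (2⁻¹ ^ (scaleExp d (k + 1) + 1)) (range (latticeRound (mesh d k))) ⊆ gridSet d k :=
  cthickening_subset_of_subset _ (range_subset_iff.2 fun _ => mem_range_self _)

theorem exists_forall_apply_add_mem_lacunarySet {m : ℕ} (hm : 0 < m) (M : Fin m → 𝔼 ≃L[ℝ] 𝔼)
    (t : Fin m → 𝔼) (hM : ∀ i, ‖(M i : 𝔼 →L[ℝ] 𝔼) - 1‖ ≤ 2⁻¹) (ht : ∀ i, ‖t i‖ ≤ 2⁻¹) :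
    ∃ u, ∀ i : Fin m, M i u + t i ∈ lacunarySet d m i := by
  set res : ℕ → Fin m := fun k => ⟨k % m, Nat.mod_lt _ hm⟩
  obtain ⟨u, hu, hgrid⟩ := exists_forall_apply_add_mem_cthickening (M := fun k => M (res k))
    (t := fun k => t (res k)) (q := fun k => latticeRound (mesh d k))
    (R := fun k => 2⁻¹ ^ (scaleExp d k + 2)) (w := fun k => 2⁻¹ ^ (scaleExp d (k + 1) + 1))
    (fun k => hM _) (fun k y => norm_sub_latticeRound_le (mesh_pos k) y)
    (fun k => by simpa using radius_succ_add_le k) (fun k => le_of_eq (by ring))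
    (fun k => by positivity) 0
  have hu : ‖u‖ ≤ 4⁻¹ := by
    rw [mem_closedBall_zero_iff] at hu; norm_num [scaleExp] at hu ⊢; exact hu
  refine ⟨u, fun i => ⟨?_, mem_iInter₂.2 fun k hk => ?_⟩⟩
  · have := norm_apply_le_of_norm_sub_one_le (hM i) u
    rw [ContinuousLinearEquiv.coe_coe] at this
    rw [mem_closedBall_zero_iff]
    linarith [norm_add_le (M i u) (t i), ht i]
  · have hres : res k = i := Fin.ext hk
    simpa [hres] using cthickening_range_latticeRound_subset_gridSet k (hgrid k)

def latticeBox (d N : ℕ) : Finset (Fin d → ℤ) := Fintype.piFinset fun _ => Finset.Icc (-(N : ℤ)) N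

lemma card_latticeBox (N : ℕ) : (latticeBox d N).card = (2 * N + 1) ^ d := by
  rw [latticeBox, Fintype.card_piFinset, Finset.prod_const, Finset.card_univ, Fintype.card_fin,
    Int.card_Icc]
  congr 1
  omega

lemma mesh_eq_inv (k : ℕ) : mesh d k = ((2 ^ (scaleExp d k + d + 4) : ℕ) : ℝ)⁻¹ := by
  simp [mesh, inv_pow]

lemma mesh_pow_eq (k : ℕ) : mesh d k ^ (k + 2) = 2⁻¹ ^ scaleExp d (k + 1) := by
  rw [mesh, ← pow_mul, scaleExp, mul_comm]

lemma mesh_le_two_inv_pow (k : ℕ) : mesh d k ≤ 2⁻¹ ^ k :=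
  pow_le_pow_of_le_one (by norm_num) (by norm_num) (by linarith [le_scaleExp (d := d) k])

lemma mesh_pow_le_half_mesh (k : ℕ) : mesh d k ^ (k + 2) ≤ mesh d k / 2 := by
  have h0 := mesh_pos (d := d) k
  have h1 : mesh d k ≤ 2⁻¹ := pow_le_of_le_one (by norm_num) (by norm_num) (by omega)
  calc mesh d k ^ (k + 2) ≤ mesh d k ^ 2 := pow_le_pow_of_le_one h0.le (mesh_le_one k) (by omega)
    _ ≤ mesh d k / 2 := by nlinarith

lemma mem_Icc_of_abs_mul_inv_lt {z : ℤ} {N : ℕ} (hN : 0 < N)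
    (h : |(z : ℝ) * (N : ℝ)⁻¹| < 1 + (N : ℝ)⁻¹ / 2) : z ∈ Finset.Icc (-(N : ℤ)) N := by
  have hN' : (0 : ℝ) < N := by exact_mod_cast hN
  rw [abs_mul, abs_inv, Nat.abs_cast, ← div_eq_mul_inv, div_lt_iff₀ hN'] at h
  have : ((|z| : ℤ) : ℝ) < N + 1 := by
    rw [← Int.cast_abs] at h
    rw [add_mul, one_mul, div_mul_eq_mul_div, inv_mul_cancel₀ hN'.ne'] at h
    linarith
  rw [Finset.mem_Icc, ← abs_le]
  exact Int.lt_add_one_iff.1 (by exact_mod_cast this)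

lemma lacunarySet_subset_iUnion_closedBall {m i k : ℕ} (hk : k % m = i) :
    lacunarySet d m i ⊆ ⋃ z : latticeBox d (2 ^ (scaleExp d k + d + 4)),
      closedBall (latticePt (mesh d k) (z : Fin d → ℤ)) (mesh d k ^ (k + 2)) := by
  rintro y ⟨hy, hgrid⟩
  have hpos : (0 : ℝ) < 2⁻¹ ^ scaleExp d (k + 1) := by positivity
  obtain ⟨_, ⟨z, rfl⟩, hz⟩ := mem_thickening_iff.1 <|
    cthickening_subset_thickening' (δ₂ := mesh d k ^ (k + 2)) (by rwa [mesh_pow_eq])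
      (by rw [mesh_pow_eq, pow_succ]; linarith) _ (mem_iInter₂.1 hgrid k hk)
  rw [mem_closedBall_zero_iff] at hy
  rw [dist_eq_norm] at hz
  have hbox : z ∈ latticeBox d (2 ^ (scaleExp d k + d + 4)) := by
    refine Fintype.mem_piFinset.2 fun l => mem_Icc_of_abs_mul_inv_lt (by positivity) ?_
    rw [← mesh_eq_inv]
    exact abs_mul_lt_of_norm_sub_latticePt_lt hy (hz.trans_le (mesh_pow_le_half_mesh k)) l
  exact mem_iUnion.2 ⟨⟨z, hbox⟩, mem_closedBall.2 (dist_eq_norm y _ ▸ hz.le)⟩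

lemma inv_pow_mul_pow_rpow_le {y : ℝ} (hy0 : 0 < y) (hy1 : y ≤ 1) {n j : ℕ} {t : ℝ}
    (ht : n + 1 ≤ j * t) : y⁻¹ ^ n * (y ^ j) ^ t ≤ y := by
  rw [← Real.rpow_natCast y j, ← Real.rpow_mul hy0.le, ← Real.rpow_natCast y⁻¹ n,
    Real.inv_rpow hy0.le, ← Real.rpow_neg hy0.le, ← Real.rpow_add hy0]
  exact (Real.rpow_le_rpow_of_exponent_ge hy0 hy1 (by linarith)).trans_eq (Real.rpow_one y)

lemma card_latticeBox_mul_rpow_le {k : ℕ} {t : ℝ} (ht : d + 1 ≤ (k + 2 : ℕ) * t) :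
    ((latticeBox d (2 ^ (scaleExp d k + d + 4))).card : ℝ) * (mesh d k ^ (k + 2)) ^ t ≤
      3 ^ d * mesh d k := by
  have hN : ((2 * 2 ^ (scaleExp d k + d + 4) + 1 : ℕ) : ℝ) ≤ 3 * (mesh d k)⁻¹ := by
    rw [mesh_eq_inv, inv_inv]; push_cast
    linarith [one_le_pow₀ (M₀ := ℝ) (a := 2) (n := scaleExp d k + d + 4) (by norm_num)]
  calc ((latticeBox d (2 ^ (scaleExp d k + d + 4))).card : ℝ) * (mesh d k ^ (k + 2)) ^ t
      ≤ (3 * (mesh d k)⁻¹) ^ d * (mesh d k ^ (k + 2)) ^ t := by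
        rw [card_latticeBox, Nat.cast_pow]
        gcongr
        exact Real.rpow_nonneg (pow_nonneg (mesh_pos k).le _) t
    _ = 3 ^ d * ((mesh d k)⁻¹ ^ d * (mesh d k ^ (k + 2)) ^ t) := by ring
    _ ≤ 3 ^ d * mesh d k := by
        gcongr
        exact inv_pow_mul_pow_rpow_le (mesh_pos k) (mesh_le_one k) ht

lemma tendsto_mesh : Tendsto (mesh d) atTop (𝓝 0) :=
  squeeze_zero (fun k => (mesh_pos k).le) mesh_le_two_inv_pow
    (tendsto_pow_atTop_nhds_zero_of_lt_one (by norm_num) (by norm_num))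

lemma tendsto_mesh_pow : Tendsto (fun k => mesh d k ^ (k + 2)) atTop (𝓝 0) :=
  squeeze_zero (fun k => by have := mesh_pos (d := d) k; positivity)
    (fun k => (mesh_pow_le_half_mesh k).trans (half_le_self (mesh_pos k).le)) tendsto_mesh

lemma tendsto_card_latticeBox_mul_rpow {t : ℝ} (ht : 0 < t) :
    Tendsto (fun k => ((latticeBox d (2 ^ (scaleExp d k + d + 4))).card : ℝ) *
      (mesh d k ^ (k + 2)) ^ t) atTop (𝓝 0) := by
  obtain ⟨K, hK⟩ := exists_nat_ge ((d + 1) / t)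
  refine squeeze_zero' (Eventually.of_forall fun k => ?_) (eventually_atTop.2 ⟨K, fun k hk =>
    card_latticeBox_mul_rpow_le ?_⟩) (by simpa using tendsto_mesh.const_mul (3 ^ d))
  · have := mesh_pos (d := d) k; positivity
  · rw [div_le_iff₀ ht] at hK
    have : (K : ℝ) ≤ (k + 2 : ℕ) := by exact_mod_cast (by omega : K ≤ k + 2)
    nlinarith

theorem dimH_lacunarySet {m i : ℕ} (hi : i < m) : dimH (lacunarySet d m i) = 0 := by
  refine dimH_eq_zero_of_forall_hausdorffMeasure_eq_zero fun t ht => ?_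
  have hk : Tendsto (fun n => i + m * n) atTop atTop :=
    tendsto_atTop_mono (fun n => show n ≤ i + m * n by nlinarith) tendsto_id
  refine hausdorffMeasure_eq_zero_of_closedBall_covers t.2
    (ι := fun n => latticeBox d (2 ^ (scaleExp d (i + m * n) + d + 4)))
    (fun n z => latticePt (mesh d (i + m * n)) (z : Fin d → ℤ))
    (fun n => (pow_pos (mesh_pos _) _).le) (tendsto_mesh_pow.comp hk)
    (fun n => lacunarySet_subset_iUnion_closedBall ?_) ?_
  · rw [Nat.add_mul_mod_self_left, Nat.mod_eq_of_lt hi]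
  · simpa [Function.comp_def] using (tendsto_card_latticeBox_mul_rpow ht).comp hk

lemma isClosed_lacunarySet (m i : ℕ) : IsClosed (lacunarySet d m i) :=
  isClosed_closedBall.inter <|
    isClosed_iInter fun _ => isClosed_iInter fun _ => isClosed_cthickening

variable (d) in
def denseTuple (m j : ℕ) : Fin m → (𝔼 →L[ℝ] 𝔼)ˣ × 𝔼 :=
  TopologicalSpace.denseSeq (Fin m → (𝔼 →L[ℝ] 𝔼)ˣ × 𝔼) j

def farRadius (m j n : ℕ) : ℝ :=
  2 * ∑ i, (n * ‖((denseTuple d m j i).1 : 𝔼 →L[ℝ] 𝔼)‖ + ‖(denseTuple d m j i).2‖) + 2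

def piece (e : 𝔼) (m j n : ℕ) : Set 𝔼 :=
  ⋃ i : Fin m, zoom ((denseTuple d m j i).1 : 𝔼 →L[ℝ] 𝔼) (denseTuple d m j i).2
    (farRadius (d := d) m j n • e) ⁻¹' lacunarySet d m i

-- Every pair `(m, j)` occurs, at `n = Nat.pair m j`; `piece e m j n` avoids the ball of radius `n`.
def universalSet (e : 𝔼) : Set 𝔼 := ⋃ n, piece e n.unpair.1 n.unpair.2 n

-- `g_i ∘ f_i⁻¹` is `1/8`-close to the identity, for `g_i x = N_i x + t_i`, `f_i y = L_i y + b_i`.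
def IsNearInverse {m : ℕ} (τ : Fin m → (𝔼 →L[ℝ] 𝔼)ˣ × 𝔼) (L : Fin m → 𝔼 ≃L[ℝ] 𝔼)
    (b : Fin m → 𝔼) : Prop :=
  ∀ i, ‖((τ i).1 : 𝔼 →L[ℝ] 𝔼).comp ((L i).symm : 𝔼 →L[ℝ] 𝔼) - 1‖ < 8⁻¹ ∧
    ‖(τ i).2 - ((τ i).1 : 𝔼 →L[ℝ] 𝔼) ((L i).symm (b i))‖ < 8⁻¹

variable {e : EuclideanSpace ℝ (Fin d)}

lemma le_farRadius {m j : ℕ} (n : ℕ) (i : Fin m) :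
    2 * (n * ‖((denseTuple d m j i).1 : 𝔼 →L[ℝ] 𝔼)‖ + ‖(denseTuple d m j i).2‖) + 2 ≤
      farRadius (d := d) m j n := by
  have := Finset.single_le_sum (f := fun i => n * ‖((denseTuple d m j i).1 : 𝔼 →L[ℝ] 𝔼)‖ +
    ‖(denseTuple d m j i).2‖) (fun i _ => by positivity) (Finset.mem_univ i)
  rw [farRadius]
  linarith

lemma isClosed_piece (m j n : ℕ) : IsClosed (piece e m j n) :=
  isClosed_iUnion_of_finite fun _ => (isClosed_lacunarySet _ _).preimage continuous_zoom

lemma dimH_piece (m j n : ℕ) : dimH (piece e m j n) = 0 := by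
  refine le_antisymm ?_ bot_le
  rw [piece, dimH_iUnion]
  exact iSup_le fun i => (dimH_preimage_zoom_le _ _ _ _).trans_eq (dimH_lacunarySet i.2)

lemma lt_norm_of_mem_piece (he : ‖e‖ = 1) {m j n : ℕ} {x : 𝔼} (hx : x ∈ piece e m j n) :
    n < ‖x‖ := by
  obtain ⟨i, hi⟩ := mem_iUnion.1 hx
  refine lt_norm_of_norm_zoom_le (mem_closedBall_zero_iff.1 (inter_subset_left hi)) ?_
  have hR := le_farRadius (d := d) (j := j) n i
  rw [norm_smul, he, mul_one, Real.norm_of_nonneg ((by positivity : (0 : ℝ) ≤ 2 * _ + 2).trans hR)]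
  linarith

lemma isClosed_universalSet (he : ‖e‖ = 1) : IsClosed (universalSet e) :=
  isClosed_iUnion_of_forall_le_norm (fun _ => isClosed_piece _ _ _)
    fun _ _ hx => (lt_norm_of_mem_piece he hx).le

lemma dimH_universalSet : dimH (universalSet e) = 0 := by
  rw [universalSet, dimH_iUnion]
  simp [dimH_piece]

lemma exists_isNearInverse_denseTuple {m : ℕ} (L : Fin m → 𝔼 ≃L[ℝ] 𝔼) (b : Fin m → 𝔼) :
    ∃ j, IsNearInverse (denseTuple d m j) L b := by
  have hU : IsOpen {τ | IsNearInverse τ L b} := by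
    simp only [IsNearInverse, ofPred_forall, ofPred_and]
    exact isOpen_iInter_of_finite fun i =>
      (isOpen_lt (by fun_prop) continuous_const).inter (isOpen_lt (by fun_prop) continuous_const)
  exact (TopologicalSpace.denseRange_denseSeq _).exists_mem_open hU ⟨fun i => ((L i).toUnit, b i),
    fun i => by simp [ContinuousLinearEquiv.toUnit, ContinuousLinearMap.one_def]⟩

lemma exists_forall_symm_apply_sub_mem_piece {m j : ℕ} (hm : 0 < m) {L : Fin m → 𝔼 ≃L[ℝ] 𝔼}
    {b : Fin m → 𝔼} (hj : IsNearInverse (denseTuple d m j) L b) (n : ℕ) :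
    ∃ x, ∀ i, (L i).symm (x - b i) ∈ piece e m j n := by
  set τ := denseTuple d m j
  set v := farRadius (d := d) m j n • e
  set M : Fin m → 𝔼 ≃L[ℝ] 𝔼 := fun i => (L i).symm.trans (ContinuousLinearEquiv.ofUnit (τ i).1)
  -- Conjugating `g_i ∘ f_i⁻¹` by `u ↦ ((1 + ‖v‖) / 2) • u + v` keeps its linear part `M i` and
  -- adds `(M i - 1) v` to its offset, which the factor `2 / (1 + ‖v‖)` makes small again.
  have hM : ∀ i, ‖(M i : 𝔼 →L[ℝ] 𝔼) - 1‖ < 8⁻¹ := fun i => by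
    change ‖((τ i).1 : 𝔼 →L[ℝ] 𝔼).comp ((L i).symm : 𝔼 →L[ℝ] 𝔼) - 1‖ < 8⁻¹
    exact (hj i).1
  obtain ⟨u, hu⟩ := exists_forall_apply_add_mem_lacunarySet hm M
    (fun i => (2 / (1 + ‖v‖)) • (M i v - v + ((τ i).2 - M i (b i))))
    (fun i => (hM i).le.trans (by norm_num))
    (fun i => norm_zoom_offset_le (v := v)
      (M := ((τ i).1 : 𝔼 →L[ℝ] 𝔼).comp ((L i).symm : 𝔼 →L[ℝ] 𝔼)) (hj i).1.le (hj i).2.le)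
  refine ⟨((1 + ‖v‖) / 2) • u + v, fun i => mem_iUnion.2 ⟨i, ?_⟩⟩
  rw [mem_preimage, zoom_eq_of_apply_eq (M := (M i : 𝔼 →L[ℝ] 𝔼)) (u := u) (b := b i) ?_]
  · exact hu i
  · rfl

theorem nonempty_iInter_image_universalSet {m : ℕ} (hm : 0 < m) (f : Fin m → 𝔼 →ᵃ[ℝ] 𝔼)
    (hf : ∀ i, Function.Bijective (f i)) : (⋂ i, f i '' universalSet e).Nonempty := by
  choose L hL using fun i => exists_continuousLinearEquiv_apply_add_of_bijective (f i) (hf i)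
  obtain ⟨j, hj⟩ := exists_isNearInverse_denseTuple L fun i => f i 0
  obtain ⟨x, hx⟩ := exists_forall_symm_apply_sub_mem_piece (e := e) hm hj (Nat.pair m j)
  refine ⟨x, mem_iInter.2 fun i => ⟨(L i).symm (x - f i 0), mem_iUnion.2 ⟨Nat.pair m j, ?_⟩, ?_⟩⟩
  · simpa only [Nat.unpair_pair] using hx i
  · rw [hL, ContinuousLinearEquiv.apply_symm_apply, sub_add_cancel]

end Construction

end AffineImages

theorem stmt16 (d : ℕ) (hd : 1 ≤ d) :
    ∃ A : Set (EuclideanSpace ℝ (Fin d)), IsClosed A ∧ dimH A = 0 ∧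
    ∀ m : ℕ, 1 ≤ m →
      ∀ f : Fin m → (EuclideanSpace ℝ (Fin d) →ᵃ[ℝ] EuclideanSpace ℝ (Fin d)),
      (∀ i, Function.Bijective (f i)) → (⋂ i, f i '' A).Nonempty := by
  have he : ‖EuclideanSpace.single (⟨0, hd⟩ : Fin d) (1 : ℝ)‖ = 1 := by simp
  exact ⟨AffineImages.universalSet _, AffineImages.isClosed_universalSet he,
    AffineImages.dimH_universalSet, fun m hm f hf =>
      AffineImages.nonempty_iInter_image_universalSet hm f hf⟩
end

section
/- Let A ⊂ ℝ be a finite set and let S = {(x,y) ∈ ℝ² : there exists r > 0 such that x−r, x+r, y−r, y+r ∈ A}. Then S is finite and |S| ≤ 2^{4/3}·|A|^{8/3}. -/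
/-!
A point `p = (x, y)` of `S` is the centre of the square with vertices `(x ± r, y ± r)` in `A × A`,
so `p` is the midpoint of two distinct points of `A × A` on the line of slope `1` through `p`, and
also of two on the line of slope `-1`. Fix `K > 0` and call a line rich if it meets `A × A` in more
than `K` points. Lines of one slope partition `A × A`, so a line with `m ≤ K` points carries at
most `K m / 2` pairs, and at most `K |A|² / 2` centres have a poor line of a given slope. There
are at most `|A|² / K` rich lines of each slope, and a centre is determined by its two lines.
Hence `|S| ≤ K |A|² + (|A|² / K)²`, which is `2 |A|^{8/3}` for `K = |A|^{2/3}`.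
-/

open Finset

theorem choose_two_le_half_mul {n : ℕ} {K : ℝ} (h : (n : ℝ) ≤ K) :
    (n.choose 2 : ℝ) ≤ K / 2 * n := by
  rw [Nat.cast_choose_two]
  nlinarith [(Nat.cast_nonneg n : (0 : ℝ) ≤ n)]

section Fibers

variable {α β : Type*} [DecidableEq β]

theorem card_le_of_pairs_in_small_fibers [DecidableEq α] (E T : Finset α) (φ : α → β)
    (mid : Finset α → α) {K : ℝ} (hK : 0 ≤ K) (hsmall : ∀ p ∈ T, (#{e ∈ E | φ e = φ p} : ℝ) ≤ K)
    (hmid : ∀ p ∈ T, ∃ Q ∈ powersetCard 2 {e ∈ E | φ e = φ p}, mid Q = p) :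
    (#T : ℝ) ≤ K / 2 * #E := by
  have hsub : T ⊆ ((T.image φ).biUnion fun b ↦ powersetCard 2 {e ∈ E | φ e = b}).image mid := by
    intro p hp
    obtain ⟨Q, hQ, rfl⟩ := hmid p hp
    exact mem_image_of_mem mid (mem_biUnion.2 ⟨_, mem_image_of_mem φ hp, hQ⟩)
  have hfibers : ∀ b ∈ T.image φ, (#{e ∈ E | φ e = b} : ℝ) ≤ K := by
    simp only [mem_image, forall_exists_index, and_imp]
    rintro _ p hp rfl
    exact hsmall p hp
  calc (#T : ℝ)
      ≤ #((T.image φ).biUnion fun b ↦ powersetCard 2 {e ∈ E | φ e = b}) := by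
        exact_mod_cast (card_le_card hsub).trans card_image_le
    _ ≤ ∑ b ∈ T.image φ, ((#{e ∈ E | φ e = b}).choose 2 : ℝ) := by
        simpa only [card_powersetCard, Nat.cast_sum] using
          (Nat.cast_le (α := ℝ)).2 (card_biUnion_le (s := T.image φ)
            (t := fun b ↦ powersetCard 2 {e ∈ E | φ e = b}))
    _ ≤ ∑ b ∈ T.image φ, K / 2 * #{e ∈ E | φ e = b} :=
        sum_le_sum fun b hb ↦ choose_two_le_half_mul (hfibers b hb)
    _ = K / 2 * #{e ∈ E | φ e ∈ T.image φ} := by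
        rw [← mul_sum, ← sum_card_fiberwise_eq_card_filter, Nat.cast_sum]
    _ ≤ K / 2 * #E := by
        gcongr
        exact filter_subset _ _

theorem card_filter_lt_card_fiber_mul_le (E : Finset α) (φ : α → β) (B : Finset β) (K : ℝ) :
    (#{b ∈ B | K < #{e ∈ E | φ e = b}} : ℝ) * K ≤ #E := by
  set R := {b ∈ B | K < #{e ∈ E | φ e = b}}
  calc (#R : ℝ) * K = #R • K := (nsmul_eq_mul _ _).symm
    _ ≤ ∑ b ∈ R, (#{e ∈ E | φ e = b} : ℝ) :=
      card_nsmul_le_sum _ _ _ fun b hb ↦ (mem_filter.1 hb).2.le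
    _ = #{e ∈ E | φ e ∈ R} := by exact_mod_cast sum_card_fiberwise_eq_card_filter E R φ
    _ ≤ #E := by exact_mod_cast card_filter_le E _

theorem card_le_of_midpoints_in_two_fibrations [DecidableEq α] (E T : Finset α) (φ₁ φ₂ : α → β)
    (mid : Finset α → α) (hφ : Set.InjOn (fun p ↦ (φ₁ p, φ₂ p)) T)
    (h₁ : ∀ p ∈ T, ∃ Q ∈ powersetCard 2 {e ∈ E | φ₁ e = φ₁ p}, mid Q = p)
    (h₂ : ∀ p ∈ T, ∃ Q ∈ powersetCard 2 {e ∈ E | φ₂ e = φ₂ p}, mid Q = p)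
    {K : ℝ} (hK : 0 < K) : (#T : ℝ) ≤ K * #E + (#E / K) ^ 2 := by
  set rich₁ := {b ∈ T.image φ₁ | K < #{e ∈ E | φ₁ e = b}}
  set rich₂ := {b ∈ T.image φ₂ | K < #{e ∈ E | φ₂ e = b}}
  set T₁ := {p ∈ T | (#{e ∈ E | φ₁ e = φ₁ p} : ℝ) ≤ K}
  set T₂ := {p ∈ T | (#{e ∈ E | φ₂ e = φ₂ p} : ℝ) ≤ K}
  set T₃ := {p ∈ T | φ₁ p ∈ rich₁ ∧ φ₂ p ∈ rich₂}
  have hcover : T ⊆ T₁ ∪ T₂ ∪ T₃ := by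
    intro p hp
    rcases le_or_gt (#{e ∈ E | φ₁ e = φ₁ p} : ℝ) K with h₁K | K_lt₁
    · exact mem_union_left _ (mem_union_left _ (mem_filter.2 ⟨hp, h₁K⟩))
    rcases le_or_gt (#{e ∈ E | φ₂ e = φ₂ p} : ℝ) K with h₂K | K_lt₂
    · exact mem_union_left _ (mem_union_right _ (mem_filter.2 ⟨hp, h₂K⟩))
    exact mem_union_right _ (mem_filter.2 ⟨hp, mem_filter.2 ⟨mem_image_of_mem _ hp, K_lt₁⟩,
      mem_filter.2 ⟨mem_image_of_mem _ hp, K_lt₂⟩⟩)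
  have hT₁ : (#T₁ : ℝ) ≤ K / 2 * #E :=
    card_le_of_pairs_in_small_fibers E T₁ φ₁ mid hK.le (fun p hp ↦ (mem_filter.1 hp).2)
      fun p hp ↦ h₁ p (mem_filter.1 hp).1
  have hT₂ : (#T₂ : ℝ) ≤ K / 2 * #E :=
    card_le_of_pairs_in_small_fibers E T₂ φ₂ mid hK.le (fun p hp ↦ (mem_filter.1 hp).2)
      fun p hp ↦ h₂ p (mem_filter.1 hp).1
  have hT₃ : #T₃ ≤ #rich₁ * #rich₂ := by
    rw [← card_product]
    exact card_le_card_of_injOn _ (fun p hp ↦ mem_product.2 (mem_filter.1 hp).2)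
      (hφ.mono (filter_subset _ _))
  have hrich₁ : (#rich₁ : ℝ) ≤ #E / K :=
    (le_div_iff₀ hK).2 (card_filter_lt_card_fiber_mul_le E φ₁ _ K)
  have hrich₂ : (#rich₂ : ℝ) ≤ #E / K :=
    (le_div_iff₀ hK).2 (card_filter_lt_card_fiber_mul_le E φ₂ _ K)
  calc (#T : ℝ) ≤ #T₁ + #T₂ + #T₃ := by
        exact_mod_cast (card_le_card hcover).trans
          ((card_union_le _ _).trans (Nat.add_le_add_right (card_union_le _ _) _))
    _ ≤ K / 2 * #E + K / 2 * #E + (#E / K) * (#E / K) := by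
        gcongr
        · exact (Nat.cast_le.2 hT₃).trans (by push_cast; gcongr)
    _ = K * #E + (#E / K) ^ 2 := by ring

end Fibers

noncomputable def halfSum (Q : Finset (ℝ × ℝ)) : ℝ × ℝ := (2 : ℝ)⁻¹ • ∑ q ∈ Q, q

theorem exists_pair_halfSum_eq {F : Finset (ℝ × ℝ)} {p u v : ℝ × ℝ} (hu : u ∈ F) (hv : v ∈ F)
    (huv : u ≠ v) (hp : u + v = (2 : ℝ) • p) : ∃ Q ∈ powersetCard 2 F, halfSum Q = p := by
  refine ⟨{u, v},
    mem_powersetCard.2 ⟨insert_subset hu (singleton_subset_iff.2 hv), card_pair huv⟩, ?_⟩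
  rw [halfSum, sum_pair huv, hp, smul_smul]
  norm_num

theorem exists_diagonal_halfSum_eq {A : Finset ℝ} {p : ℝ × ℝ} {r : ℝ} (hr : 0 < r)
    (h₁ : p.1 - r ∈ A) (h₂ : p.1 + r ∈ A) (h₃ : p.2 - r ∈ A) (h₄ : p.2 + r ∈ A) :
    (∃ Q ∈ powersetCard 2 {e ∈ A ×ˢ A | e.2 - e.1 = p.2 - p.1}, halfSum Q = p) ∧
      ∃ Q ∈ powersetCard 2 {e ∈ A ×ˢ A | e.1 + e.2 = p.1 + p.2}, halfSum Q = p := by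
  have hne : p.1 - r ≠ p.1 + r := by linarith
  constructor
  · refine exists_pair_halfSum_eq (u := (p.1 - r, p.2 - r)) (v := (p.1 + r, p.2 + r)) ?_ ?_ ?_ ?_
    · simp [h₁, h₃]
    · simp [h₂, h₄]
    · simp [hne]
    · ext <;> simp <;> ring
  · refine exists_pair_halfSum_eq (u := (p.1 - r, p.2 + r)) (v := (p.1 + r, p.2 - r)) ?_ ?_ ?_ ?_
    · simp [h₁, h₄]
    · simp [h₂, h₃]
    · simp [hne]
    · ext <;> simp <;> ring

theorem rpow_two_thirds_mul_sq_add_div_sq_le {N : ℝ} (hN : 0 < N) :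
    N ^ (2 / 3 : ℝ) * (N * N) + (N * N / N ^ (2 / 3 : ℝ)) ^ 2 ≤
      2 ^ (4 / 3 : ℝ) * N ^ (8 / 3 : ℝ) := by
  have hcube : ∀ k : ℕ, N ^ (k / 3 : ℝ) = (N ^ (1 / 3 : ℝ)) ^ k := fun k ↦ by
    rw [← Real.rpow_natCast, ← Real.rpow_mul hN.le]
    ring_nf
  set x := N ^ (1 / 3 : ℝ)
  have hx : 0 < x := by positivity
  have hN3 : N = x ^ 3 := by simpa using hcube 3
  have h2 : N ^ (2 / 3 : ℝ) = x ^ 2 := by exact_mod_cast hcube 2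
  have h8 : N ^ (8 / 3 : ℝ) = x ^ 8 := by exact_mod_cast hcube 8
  have htwo : (2 : ℝ) ≤ 2 ^ (4 / 3 : ℝ) := by
    simpa using Real.rpow_le_rpow_of_exponent_le (x := 2) (by norm_num)
      (by norm_num : (1 : ℝ) ≤ 4 / 3)
  rw [h2, h8, hN3]
  calc x ^ 2 * (x ^ 3 * x ^ 3) + (x ^ 3 * x ^ 3 / x ^ 2) ^ 2 = 2 * x ^ 8 := by
        field_simp
        ring
    _ ≤ 2 ^ (4 / 3 : ℝ) * x ^ 8 := by gcongr

theorem stmt17 (A : Set ℝ) (hA : A.Finite) (S : Set (ℝ × ℝ))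
    (hS : S = {p : ℝ × ℝ | ∃ r > (0:ℝ),
      p.1 - r ∈ A ∧ p.1 + r ∈ A ∧ p.2 - r ∈ A ∧ p.2 + r ∈ A}) :
    S.Finite ∧ (S.ncard : ℝ) ≤ (2:ℝ) ^ ((4:ℝ) / 3) * (A.ncard : ℝ) ^ ((8:ℝ) / 3) := by
  obtain ⟨A, rfl⟩ := hA.exists_finset_coe
  have hfin : S.Finite := by
    let M := image₂ (fun a b : ℝ ↦ (a + b) / 2) A A
    refine (M ×ˢ M).finite_toSet.subset fun p hp ↦ ?_
    obtain ⟨r, -, h₁, h₂, h₃, h₄⟩ := hS ▸ hp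
    simp only [coe_product, Set.mem_prod, mem_coe, M, mem_image₂]
    exact ⟨⟨_, h₁, _, h₂, by ring⟩, ⟨_, h₃, _, h₄, by ring⟩⟩
  refine ⟨hfin, ?_⟩
  rcases A.eq_empty_or_nonempty with rfl | hne
  · simp [hS]
  have hN : (0 : ℝ) < #A := by exact_mod_cast hne.card_pos
  have hsquare : ∀ p ∈ hfin.toFinset,
      (∃ Q ∈ powersetCard 2 {e ∈ A ×ˢ A | e.2 - e.1 = p.2 - p.1}, halfSum Q = p) ∧
        ∃ Q ∈ powersetCard 2 {e ∈ A ×ˢ A | e.1 + e.2 = p.1 + p.2}, halfSum Q = p := by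
    intro p hp
    obtain ⟨r, hr, h₁, h₂, h₃, h₄⟩ := hS ▸ hfin.mem_toFinset.1 hp
    exact exists_diagonal_halfSum_eq hr h₁ h₂ h₃ h₄
  have hinj : Set.InjOn (fun p : ℝ × ℝ ↦ (p.2 - p.1, p.1 + p.2)) hfin.toFinset := by
    intro p _ q _ h
    simp only [Prod.mk.injEq] at h
    ext <;> linarith [h.1, h.2]
  have hbound := card_le_of_midpoints_in_two_fibrations (A ×ˢ A) hfin.toFinset _ _ halfSum hinj
    (fun p hp ↦ (hsquare p hp).1) (fun p hp ↦ (hsquare p hp).2) (K := (#A : ℝ) ^ (2 / 3 : ℝ))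
    (by positivity)
  rw [Set.ncard_eq_toFinset_card S hfin, Set.ncard_coe_finset]
  rw [card_product, Nat.cast_mul] at hbound
  exact hbound.trans (rpow_two_thirds_mul_sq_add_div_sq_le hN)
end
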